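/- arXiv:2208.03658 — 9 statements merged into one kernel-verified Lean document; each statement's English description precedes it below -/
import Mathlib

section
/- For any positive integers n and r, the number of partitions of n into parts not divisible by r equals the number of partitions of n in which each part occurs fewer than r times (Glaisher's theorem). -/
theorem glaisher_general (n r : ℕ) (hr : 0 < r) :
    Nat.card {p : n.Partition // ∀ x ∈ p.parts, ¬ r ∣ x} =
      Nat.card {p : n.Partition // ∀ x : ℕ, p.parts.count x < r} := by
  have count_lt_iff (p : n.Partition) :
      (∀ x : ℕ, p.parts.count x < r) ↔ ∀ x ∈ p.parts, p.parts.count x < r :=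
    ⟨fun h x _ => h x, fun h x => by
      by_cases hx : x ∈ p.parts
      · exact h x hx
      · rwa [Multiset.count_eq_zero_of_notMem hx]⟩
  simp only [Nat.card_eq_fintype_card, Fintype.card_subtype, count_lt_iff]
  exact Nat.Partition.card_restricted_eq_card_countRestricted n hr

/-- Glaisher: the number of partitions of n into parts not divisible by r
equals the number of partitions of n in which each part occurs fewer than
r times. -/
theorem glaisher (n r : ℕ) (hn : 0 < n) (hr : 0 < r) :
    Nat.card {p : n.Partition // ∀ x ∈ p.parts, ¬ r ∣ x} =
      Nat.card {p : n.Partition // ∀ x : ℕ, p.parts.count x < r} :=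
  glaisher_general n r hr
end

section
/- For positive integers n, r and a non-negative integer j, the number of partitions of n in which exactly j different part-values are divisible by r equals the number of partitions of n in which exactly j different part-values occur at least r times (Franklin's theorem). -/
/-!
Mark a part-value by a weight `c` when it is divisible by `r`, resp. when it occurs at least `r`
times, and form the two generating functions in `X` (size) and `c` (number of marked values).
After multiplication by the unit `∏_{i ≥ 1} (1 - X^i)`, the geometric series of a part-value `i`
becomes `1 + (c - 1) X^i` if `r ∣ i` (and `1` otherwise), resp. `1 + (c - 1) X^(r i)`. Both
products are therefore `∏_{m ≥ 1} (1 + (c - 1) X^(r m))`. Taking `c` to be a polynomial variable,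
the coefficient of `X^n c^j` on either side counts the partitions in question.
-/

open Polynomial in
theorem Polynomial.coeff_sum_X_pow {R ι : Type*} [Semiring R] [Fintype ι] (k : ι → ℕ) (j : ℕ) :
    (∑ x, (X : R[X]) ^ k x).coeff j = Nat.card {x // k x = j} := by
  classical
  simp [finsetSum_coeff, coeff_X_pow, Nat.card_eq_fintype_card, Fintype.card_subtype, eq_comm]

theorem tprod_ite_dvd_add_one {M : Type*} [CommMonoid M] [TopologicalSpace M] {r : ℕ} (hr : 0 < r)
    (F : ℕ → M) : ∏' i, (if r ∣ i + 1 then F (i + 1) else 1) = ∏' i, F (r * (i + 1)) := by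
  have hsucc (i : ℕ) : r * (i + 1) - 1 + 1 = r * (i + 1) :=
    Nat.sub_add_cancel (Nat.mul_pos hr i.succ_pos)
  have hinj : Function.Injective fun i => r * (i + 1) - 1 := fun a b h => by
    simpa [hr.ne'] using
      Nat.sub_one_cancel (Nat.mul_pos hr a.succ_pos) (Nat.mul_pos hr b.succ_pos) h
  have hsupp : Function.mulSupport (fun i => if r ∣ i + 1 then F (i + 1) else 1) ⊆
      Set.range fun i => r * (i + 1) - 1 := by
    intro i hi
    obtain ⟨k, hk⟩ : r ∣ i + 1 := by
      by_contra h
      exact hi (if_neg h)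
    obtain ⟨l, rfl⟩ := Nat.exists_eq_add_one_of_ne_zero (show k ≠ 0 by rintro rfl; simp at hk)
    exact ⟨l, show r * (l + 1) - 1 = i by omega⟩
  rw [← hinj.tprod_eq hsupp]
  simp only [hsucc, dvd_mul_right, if_true]

open Finset PowerSeries

namespace PowerSeries.WithPiTopology

variable {R : Type*} [CommRing R] [TopologicalSpace R]

theorem isUnit_tprod_one_sub_X_pow [T2Space R] : IsUnit (∏' i, (1 - X ^ (i + 1)) : R⟦X⟧) := by
  rw [isUnit_iff_constantCoeff,
    (multipliable_one_sub_X_pow R).map_tprod _ (continuous_constantCoeff R)]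
  simp

theorem one_sub_mul_one_add_tsum_ite_smul_pow [IsTopologicalRing R] [T2Space R] {y : R⟦X⟧}
    (hy : constantCoeff y = 0) (c : R) (m : ℕ) :
    (1 - y) * (1 + ∑' j, (if m ≤ j then c else 1) • y ^ (j + 1)) = 1 + (c - 1) • y ^ (m + 1) := by
  set g : ℕ → R⟦X⟧ := fun j => (if m ≤ j then c else 1) • y ^ (j + 1)
  have hgeom := summable_pow_of_constantCoeff_eq_zero hy
  have htail : (fun j => g (j + m)) = fun j => C c * y ^ (m + 1) * y ^ j := by
    funext j
    simp only [g, le_add_iff_nonneg_left, Nat.zero_le, if_true, smul_eq_C_mul]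
    ring
  have hhead : ∑ j ∈ range m, g j = ∑ j ∈ range m, y ^ (j + 1) :=
    sum_congr rfl fun j hj => by simp [g, not_le.mpr (mem_range.mp hj)]
  have hg : Summable g := (summable_nat_add_iff m).mp (htail ▸ hgeom.mul_left _)
  rw [← hg.sum_add_tsum_nat_add m, hhead, htail, hgeom.tsum_mul_left]
  calc (1 - y) * (1 + (∑ j ∈ range m, y ^ (j + 1) + C c * y ^ (m + 1) * ∑' j, y ^ j))
      = (1 - y) * ∑ j ∈ range (m + 1), y ^ j + C c * y ^ (m + 1) * ((1 - y) * ∑' j, y ^ j) := by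
        rw [sum_range_succ']
        ring
    _ = 1 + (c - 1) • y ^ (m + 1) := by
        rw [mul_neg_geom_sum, one_sub_mul_tsum_pow_of_constantCoeff_eq_zero hy, smul_eq_C_mul,
          map_sub, map_one]
        ring

end PowerSeries.WithPiTopology

open PowerSeries.WithPiTopology

namespace Nat.Partition

variable {R : Type*}

def markWeight [One R] (P : ℕ → ℕ → Prop) [DecidableRel P] (c : R) : ℕ → ℕ → R :=
  fun i k => if P i k then c else 1

theorem coeff_genFun_markWeight [CommSemiring R] (P : ℕ → ℕ → Prop) [DecidableRel P] (c : R)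
    (n : ℕ) : (genFun (markWeight P c)).coeff n =
      ∑ p : n.Partition, c ^ #{i ∈ p.parts.toFinset | P i (p.parts.count i)} := by
  rw [coeff_genFun]
  refine sum_congr rfl fun p _ => ?_
  rw [Finsupp.prod, Multiset.toFinsupp_support, ← prod_const, prod_filter]
  exact prod_congr rfl fun i _ => by rw [Multiset.toFinsupp_apply]; rfl

section Topological

variable [CommRing R] [TopologicalSpace R] [IsTopologicalRing R] [T2Space R]

theorem genFun_mul_tprod_one_sub_X_pow {f : ℕ → ℕ → R} {g : ℕ → R⟦X⟧}
    (hfg : ∀ i, (1 - X ^ (i + 1)) * (1 + ∑' j, f (i + 1) (j + 1) • X ^ ((i + 1) * (j + 1))) = g i) :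
    genFun f * ∏' i, (1 - X ^ (i + 1)) = ∏' i, g i := by
  rw [genFun_eq_tprod, ← (multipliable_genFun f).tprod_mul (multipliable_one_sub_X_pow R)]
  exact tprod_congr fun i => by rw [mul_comm, hfg]

theorem genFun_markWeight_dvd_mul_tprod_one_sub_X_pow (r : ℕ) (c : R) :
    genFun (markWeight (fun i _ => r ∣ i) c) * ∏' i, (1 - X ^ (i + 1)) =
      ∏' i, if r ∣ i + 1 then 1 + (c - 1) • X ^ (i + 1) else 1 := by
  refine genFun_mul_tprod_one_sub_X_pow fun i => ?_
  have key := one_sub_mul_one_add_tsum_ite_smul_pow (y := X ^ (i + 1)) (by simp)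
    (if r ∣ i + 1 then c else 1) 0
  simp only [Nat.zero_le, if_true, zero_add, pow_one] at key
  simp only [markWeight, pow_mul, key]
  split_ifs <;> simp

theorem genFun_markWeight_le_mul_tprod_one_sub_X_pow {r : ℕ} (hr : 0 < r) (c : R) :
    genFun (markWeight (fun _ k => r ≤ k) c) * ∏' i, (1 - X ^ (i + 1)) =
      ∏' i, (1 + (c - 1) • X ^ (r * (i + 1))) := by
  obtain ⟨m, rfl⟩ := Nat.exists_eq_add_one_of_ne_zero hr.ne'
  refine genFun_mul_tprod_one_sub_X_pow fun i => ?_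
  simp only [markWeight, Nat.add_le_add_iff_right, pow_mul]
  rw [one_sub_mul_one_add_tsum_ite_smul_pow (by simp), ← pow_mul, ← pow_mul, mul_comm]

end Topological

theorem genFun_markWeight_dvd_eq_genFun_markWeight_le [CommRing R] {r : ℕ} (hr : 0 < r) (c : R) :
    genFun (markWeight (fun i _ => r ∣ i) c) = genFun (markWeight (fun _ k => r ≤ k) c) := by
  -- The claim is topology-free; the discrete topology makes the infinite products available.
  let _ : TopologicalSpace R := ⊥
  have _ : DiscreteTopology R := ⟨rfl⟩
  refine (isUnit_tprod_one_sub_X_pow (R := R)).mul_left_injective ?_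
  beta_reduce
  rw [genFun_markWeight_dvd_mul_tprod_one_sub_X_pow,
    genFun_markWeight_le_mul_tprod_one_sub_X_pow hr,
    tprod_ite_dvd_add_one hr fun k => 1 + (c - 1) • X ^ k]

end Nat.Partition

theorem franklin_general (n r j : ℕ) (hr : 0 < r) :
    Nat.card {p : n.Partition //
        (p.parts.toFinset.filter (fun x => r ∣ x)).card = j} =
      Nat.card {p : n.Partition //
        (p.parts.toFinset.filter (fun x => r ≤ p.parts.count x)).card = j} := by
  have h := congrArg (fun f : (Polynomial ℤ)⟦X⟧ => (coeff n f).coeff j)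
    (Nat.Partition.genFun_markWeight_dvd_eq_genFun_markWeight_le hr Polynomial.X)
  simp only [Nat.Partition.coeff_genFun_markWeight, Polynomial.coeff_sum_X_pow] at h
  exact_mod_cast h

/-- Franklin: the number of partitions of n with exactly j different
part-values divisible by r equals the number of partitions of n with exactly
j different part-values occurring at least r times. -/
theorem franklin (n r j : ℕ) (hn : 0 < n) (hr : 0 < r) :
    Nat.card {p : n.Partition //
        (p.parts.toFinset.filter (fun x => r ∣ x)).card = j} =
      Nat.card {p : n.Partition //
        (p.parts.toFinset.filter (fun x => r ≤ p.parts.count x)).card = j} :=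
  franklin_general n r j hr
end

section
/- For all n >= 0 and j >= 0, the number of partitions of n with exactly j even parts (counted with multiplicity) equals the number of partitions of n whose largest repeating part is j. -/
open Nat

/-- The minimal excludant (mex) of a partition: the least positive integer
not occurring as a part. -/
noncomputable def mex {n : ℕ} (p : n.Partition) : ℕ :=
  sInf {k : ℕ | 0 < k ∧ k ∉ p.parts}

/-- The r-chain mex of a partition: the least positive integer k such that
none of k, k+1, ..., k+r-1 occurs as a part. -/
noncomputable def rchainMex (r : ℕ) {n : ℕ} (p : n.Partition) : ℕ :=
  sInf {k : ℕ | 0 < k ∧ ∀ i < r, k + i ∉ p.parts}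

/-- The largest r-repeating part: the largest integer occurring at least r
times as a part (0 if there is none). -/
noncomputable def largestRRep (r : ℕ) {n : ℕ} (p : n.Partition) : ℕ :=
  sSup {k : ℕ | r ≤ p.parts.count k}

/-!
Fix `r ≥ 1` (the theorem is the case `r = 2`) and let `A(n, j)` count the partitions of `n` with
exactly `j` parts divisible by `r`, and `B(n, j)` those whose largest part of multiplicity at least
`r` is `j`. For `j = 0` this is Glaisher's theorem. For `j ≥ 1` both satisfy
`X(n, j) = X(n - r, j - 1) + X(n - r j, j)`, and the claim follows by induction on `n`:
* for `A`, if `r` is a part, delete it; otherwise lower every multiple of `r` by `r`;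
* for `B`, if `j` occurs fewer than `2r` times, replace `r` copies of `j` by `r` copies of `j - 1`;
  otherwise delete `r` copies of `j`.
-/

theorem Nat.card_subtype_eq_card_and_add_card_and_not {α : Type*} [Finite α] (P Q : α → Prop) :
    Nat.card {x // P x} = Nat.card {x // P x ∧ Q x} + Nat.card {x // P x ∧ ¬Q x} := by
  classical
  rw [← Nat.card_sum]
  exact Nat.card_congr ((Equiv.sumCompl fun x : {x // P x} => Q x).symm.trans
    ((Equiv.subtypeSubtypeEquivSubtypeInter P Q).sumCongr
      (Equiv.subtypeSubtypeEquivSubtypeInter P (¬Q ·))))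

namespace Multiset

variable {α : Type*} [DecidableEq α]

theorem forall_mem_sub_add {p : α → Prop} {s a b : Multiset α} (hs : ∀ i ∈ s, p i)
    (hb : ∀ i ∈ b, p i) : ∀ i ∈ s - a + b, p i := by
  intro i hi
  rcases mem_add.1 hi with hi | hi
  exacts [hs i (mem_of_le tsub_le_self hi), hb i hi]

theorem sum_sub_add_add_sum [AddCommMonoid α] {s a : Multiset α} (b : Multiset α) (h : a ≤ s) :
    (s - a + b).sum + a.sum = s.sum + b.sum := by
  rw [← sum_add, add_right_comm, tsub_add_cancel_of_le h, sum_add]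

theorem sum_filter_ne_zero_replicate (r j : ℕ) :
    ((replicate r j).filter (· ≠ 0)).sum = r * j := by
  rcases eq_or_ne j 0 with rfl | hj
  · rw [filter_eq_nil.2 fun x hx => not_not.2 (eq_of_mem_replicate hx)]
    simp
  · rw [filter_eq_self.2 fun x hx => eq_of_mem_replicate hx ▸ hj, sum_replicate, smul_eq_mul]

end Multiset

namespace Nat

def subIfDvd (r x : ℕ) : ℕ := if r ∣ x then x - r else x

def addIfDvd (r x : ℕ) : ℕ := if r ∣ x then x + r else x

variable {r x : ℕ}

theorem dvd_subIfDvd_iff : r ∣ subIfDvd r x ↔ r ∣ x := by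
  unfold subIfDvd
  split_ifs with h
  · exact iff_of_true (Nat.dvd_sub h dvd_rfl) h
  · rfl

theorem dvd_addIfDvd_iff : r ∣ addIfDvd r x ↔ r ∣ x := by
  unfold addIfDvd
  split_ifs <;> simp

theorem addIfDvd_subIfDvd (hx : x ≠ 0) : addIfDvd r (subIfDvd r x) = x := by
  unfold subIfDvd
  split_ifs with h
  · have := Nat.le_of_dvd (Nat.pos_of_ne_zero hx) h
    rw [addIfDvd, if_pos (Nat.dvd_sub h dvd_rfl)]
    omega
  · rw [addIfDvd, if_neg h]

theorem subIfDvd_addIfDvd : subIfDvd r (addIfDvd r x) = x := by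
  unfold addIfDvd
  split_ifs with h
  · rw [subIfDvd, if_pos (by simpa), Nat.add_sub_cancel]
  · rw [subIfDvd, if_neg h]

theorem subIfDvd_pos (hx : 0 < x) (hxr : x ≠ r) : 0 < subIfDvd r x := by
  unfold subIfDvd
  split_ifs with h
  · have := Nat.le_of_dvd hx h
    omega
  · exact hx

theorem addIfDvd_ne_self (hx : 0 < x) : addIfDvd r x ≠ r := by
  unfold addIfDvd
  split_ifs with h
  · omega
  · rintro rfl
    exact h dvd_rfl

theorem le_addIfDvd : x ≤ addIfDvd r x := by
  unfold addIfDvd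
  split_ifs <;> omega

end Nat

namespace Multiset

variable {r : ℕ}

theorem countP_dvd_map_subIfDvd (s : Multiset ℕ) :
    (s.map (subIfDvd r)).countP (r ∣ ·) = s.countP (r ∣ ·) := by
  rw [countP_map, ← countP_eq_card_filter]
  exact countP_congr rfl fun _ _ => propext dvd_subIfDvd_iff

theorem countP_dvd_map_addIfDvd (s : Multiset ℕ) :
    (s.map (addIfDvd r)).countP (r ∣ ·) = s.countP (r ∣ ·) := by
  rw [countP_map, ← countP_eq_card_filter]
  exact countP_congr rfl fun _ _ => propext dvd_addIfDvd_iff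

theorem sum_map_addIfDvd (s : Multiset ℕ) :
    (s.map (addIfDvd r)).sum = s.sum + r * s.countP (r ∣ ·) := by
  induction s using Multiset.induction_on with
  | empty => simp
  | cons x s ih => by_cases h : r ∣ x <;> simp [addIfDvd, h, ih] <;> ring

end Multiset

open Multiset

namespace Nat.Partition

variable {n m r j : ℕ}

section Transfer

variable (P Q : Multiset ℕ → Prop)

theorem card_subtype_congr_of_inverse (f g : Multiset ℕ → Multiset ℕ)
    (hf : ∀ p : n.Partition, P p.parts →
      (∀ i ∈ f p.parts, 0 < i) ∧ (f p.parts).sum = m ∧ Q (f p.parts))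
    (hg : ∀ q : m.Partition, Q q.parts →
      (∀ i ∈ g q.parts, 0 < i) ∧ (g q.parts).sum = n ∧ P (g q.parts))
    (hgf : ∀ p : n.Partition, P p.parts → g (f p.parts) = p.parts)
    (hfg : ∀ q : m.Partition, Q q.parts → f (g q.parts) = q.parts) :
    Nat.card {p : n.Partition // P p.parts} = Nat.card {q : m.Partition // Q q.parts} :=
  Nat.card_congr
    { toFun p := ⟨⟨f p.1.parts, (hf p.1 p.2).1 _, (hf p.1 p.2).2.1⟩, (hf p.1 p.2).2.2⟩
      invFun q := ⟨⟨g q.1.parts, (hg q.1 q.2).1 _, (hg q.1 q.2).2.1⟩, (hg q.1 q.2).2.2⟩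
      left_inv p := Subtype.ext (Nat.Partition.ext (hgf p.1 p.2))
      right_inv q := Subtype.ext (Nat.Partition.ext (hfg q.1 q.2)) }

theorem card_subtype_congr_of_exchange (a b : Multiset ℕ) (ha : ∀ i ∈ a, 0 < i)
    (hb : ∀ i ∈ b, 0 < i) (hsum : m + a.sum = n + b.sum)
    (hPa : ∀ p : n.Partition, P p.parts → a ≤ p.parts)
    (hQb : ∀ q : m.Partition, Q q.parts → b ≤ q.parts)
    (hPQ : ∀ s t, s + b = t + a → (P s ↔ Q t)) :
    Nat.card {p : n.Partition // P p.parts} = Nat.card {q : m.Partition // Q q.parts} := by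
  refine card_subtype_congr_of_inverse P Q (· - a + b) (· - b + a)
    (fun p hp => ⟨forall_mem_sub_add (fun _ => p.parts_pos) hb, ?_, (hPQ _ _ ?_).1 hp⟩)
    (fun q hq => ⟨forall_mem_sub_add (fun _ => q.parts_pos) ha, ?_, (hPQ _ _ ?_).2 hq⟩)
    (fun p hp => ?_) (fun q hq => ?_)
  · have := sum_sub_add_add_sum b (hPa p hp)
    rw [p.parts_sum] at this
    omega
  · rw [add_right_comm, tsub_add_cancel_of_le (hPa p hp)]
  · have := sum_sub_add_add_sum a (hQb q hq)
    rw [q.parts_sum] at this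
    omega
  · rw [add_right_comm, tsub_add_cancel_of_le (hQb q hq)]
  · rw [add_tsub_cancel_right, tsub_add_cancel_of_le (hPa p hp)]
  · rw [add_tsub_cancel_right, tsub_add_cancel_of_le (hQb q hq)]

end Transfer

theorem card_countP_dvd_succ_and_mem (hr : 0 < r) (hn : r ≤ n) :
    Nat.card {p : n.Partition // p.parts.countP (r ∣ ·) = j + 1 ∧ r ∈ p.parts} =
      Nat.card {q : (n - r).Partition // q.parts.countP (r ∣ ·) = j} := by
  refine card_subtype_congr_of_exchange (fun s => s.countP (r ∣ ·) = j + 1 ∧ r ∈ s)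
    (fun t => t.countP (r ∣ ·) = j) {r} 0 (by simpa) (by simp) (by simp; omega)
    (fun p hp => singleton_le.2 hp.2) (fun _ _ => Multiset.zero_le _) fun s t hst => ?_
  rw [add_zero] at hst
  simp [hst, ← cons_zero]

theorem card_countP_dvd_and_not_mem (hn : r * j ≤ n) :
    Nat.card {p : n.Partition // p.parts.countP (r ∣ ·) = j ∧ r ∉ p.parts} =
      Nat.card {q : (n - r * j).Partition // q.parts.countP (r ∣ ·) = j} := by
  have hgf (p : n.Partition) : (p.parts.map (subIfDvd r)).map (addIfDvd r) = p.parts := by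
    rw [map_map]
    exact map_congr rfl (fun x hx => addIfDvd_subIfDvd (p.parts_pos hx).ne') |>.trans (map_id _)
  refine card_subtype_congr_of_inverse (fun s => s.countP (r ∣ ·) = j ∧ r ∉ s)
    (fun t => t.countP (r ∣ ·) = j) (map (subIfDvd r)) (map (addIfDvd r))
    (fun p hp => ⟨?_, ?_, by rw [countP_dvd_map_subIfDvd, hp.1]⟩)
    (fun q hq => ⟨?_, ?_, by rw [countP_dvd_map_addIfDvd, hq], ?_⟩)
    (fun p _ => hgf p) (fun q _ => ?_)
  · exact forall_mem_map_iff.2 fun x hx =>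
      subIfDvd_pos (p.parts_pos hx) (ne_of_mem_of_not_mem hx hp.2)
  · have := congrArg sum (hgf p)
    rw [sum_map_addIfDvd, countP_dvd_map_subIfDvd, hp.1, p.parts_sum] at this
    omega
  · exact forall_mem_map_iff.2 fun x hx => (q.parts_pos hx).trans_le le_addIfDvd
  · rw [sum_map_addIfDvd, q.parts_sum, hq]
    omega
  · intro hmem
    obtain ⟨x, hx, hxr⟩ := mem_map.1 hmem
    exact addIfDvd_ne_self (q.parts_pos hx) hxr
  · rw [map_map]
    exact map_congr rfl (fun _ _ => subIfDvd_addIfDvd) |>.trans (map_id _)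

theorem card_countP_dvd_succ (hr : 0 < r) (hn : r * (j + 1) ≤ n) :
    Nat.card {p : n.Partition // p.parts.countP (r ∣ ·) = j + 1} =
      Nat.card {q : (n - r).Partition // q.parts.countP (r ∣ ·) = j} +
        Nat.card {q : (n - r * (j + 1)).Partition // q.parts.countP (r ∣ ·) = j + 1} := by
  rw [Nat.card_subtype_eq_card_and_add_card_and_not _ (r ∈ ·.parts),
    card_countP_dvd_succ_and_mem hr ((Nat.le_mul_of_pos_right r j.succ_pos).trans hn),
    card_countP_dvd_and_not_mem hn]

theorem mul_countP_dvd_le (p : n.Partition) : r * p.parts.countP (r ∣ ·) ≤ n := by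
  have hle : ∀ x ∈ p.parts.filter (r ∣ ·), r ≤ x := fun x hx =>
    Nat.le_of_dvd (p.parts_pos (mem_filter.1 hx).1) (mem_filter.1 hx).2
  calc r * p.parts.countP (r ∣ ·) = (p.parts.filter (r ∣ ·)).card • r := by
        rw [countP_eq_card_filter, smul_eq_mul, mul_comm]
    _ ≤ (p.parts.filter (r ∣ ·)).sum := card_nsmul_le_sum hle
    _ ≤ (p.parts.filter (r ∣ ·)).sum + (p.parts.filter (¬r ∣ ·)).sum := le_self_add
    _ = n := by rw [sum_filter_add_sum_filter_not, p.parts_sum]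

theorem card_countP_dvd_eq_zero (hn : n < r * j) :
    Nat.card {p : n.Partition // p.parts.countP (r ∣ ·) = j} = 0 :=
  Nat.card_eq_zero.2 <| .inl ⟨fun p => hn.not_ge (p.2 ▸ mul_countP_dvd_le p.1)⟩

theorem card_countP_dvd_zero :
    Nat.card {p : n.Partition // p.parts.countP (r ∣ ·) = 0} = (restricted n (¬r ∣ ·)).card := by
  rw [Nat.card_eq_fintype_card, Fintype.card_subtype, restricted]
  simp [countP_eq_zero]

def IsLargestRRep (r j : ℕ) (s : Multiset ℕ) : Prop :=
  (j = 0 ∨ r ≤ s.count j) ∧ ∀ k, j < k → s.count k < r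

theorem largestRRep_eq_iff (hr : 0 < r) (p : n.Partition) :
    largestRRep r p = j ↔ IsLargestRRep r j p.parts := by
  set S := {k | r ≤ p.parts.count k}
  have hS : BddAbove S := ⟨n, fun k hk => le_of_mem_parts (count_pos.1 (hr.trans_le hk))⟩
  change sSup S = j ↔ _
  constructor
  · rintro rfl
    refine ⟨?_, fun k hk => not_le.1 fun h => notMem_of_csSup_lt hk hS h⟩
    rcases S.eq_empty_or_nonempty with h | h
    · exact .inl (by simp [h])
    · exact .inr (Nat.sSup_mem h hS)
  · rintro ⟨h0, hlt⟩
    refine le_antisymm (csSup_le' fun k hk => not_lt.1 fun hjk => (hlt k hjk).not_ge hk) ?_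
    rcases h0 with rfl | h0
    exacts [Nat.zero_le _, le_csSup hS h0]

theorem card_largestRRep_eq (hr : 0 < r) :
    Nat.card {p : n.Partition // largestRRep r p = j} =
      Nat.card {p : n.Partition // IsLargestRRep r j p.parts} :=
  Nat.card_congr (Equiv.subtypeEquivRight fun p => largestRRep_eq_iff hr p)

theorem card_isLargestRRep_succ_and_count_lt (hn : r ≤ n) :
    Nat.card {p : n.Partition //
        IsLargestRRep r (j + 1) p.parts ∧ p.parts.count (j + 1) < 2 * r} =
      Nat.card {q : (n - r).Partition // IsLargestRRep r j q.parts} := by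
  refine card_subtype_congr_of_exchange
    (fun s => IsLargestRRep r (j + 1) s ∧ s.count (j + 1) < 2 * r) (IsLargestRRep r j)
    -- for `j = 0` the copies of `j` are not parts, so nothing is added back
    (replicate r (j + 1)) ((replicate r j).filter (· ≠ 0))
    (fun i hi => eq_of_mem_replicate hi ▸ j.succ_pos)
    (fun i hi => Nat.pos_of_ne_zero (mem_filter.1 hi).2)
    (by rw [sum_replicate, sum_filter_ne_zero_replicate, smul_eq_mul, Nat.mul_succ]; omega)
    (fun p hp => le_count_iff_replicate_le.1 (hp.1.1.resolve_left j.succ_ne_zero))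
    (fun q hq => le_iff_count.2 fun k => ?_) fun s t hst => ?_
  · rw [Multiset.count_filter, Multiset.count_replicate]
    split_ifs with hk hjk
    · exact hjk ▸ hq.1.resolve_left (hjk ▸ hk)
    all_goals exact Nat.zero_le _
  · have hc (k : ℕ) := congrArg (Multiset.count k) hst
    simp only [Multiset.count_add, Multiset.count_filter, Multiset.count_replicate] at hc
    have hj1 : s.count (j + 1) = t.count (j + 1) + r := by simpa using hc (j + 1)
    have hj (hj0 : j ≠ 0) : s.count j + r = t.count j := by simpa [hj0] using hc j
    have hk (k : ℕ) (hk : j + 1 < k) : s.count k = t.count k := by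
      simpa [show k ≠ 0 by omega, show j ≠ k by omega, show j + 1 ≠ k by omega] using hc k
    constructor
    · rintro ⟨⟨-, hgt⟩, hlt⟩
      refine ⟨(eq_or_ne j 0).imp_right fun hj0 => (hj hj0).symm ▸ Nat.le_add_left r _,
        fun k hjk => ?_⟩
      rcases (show k = j + 1 ∨ j + 1 < k by omega) with rfl | hjk
      · omega
      · exact hk k hjk ▸ hgt k hjk
    · rintro ⟨-, hgt⟩
      have := hgt (j + 1) j.lt_succ_self
      exact ⟨⟨.inr (by omega), fun k hjk => hk k hjk ▸ hgt k (by omega)⟩, by omega⟩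

theorem card_isLargestRRep_succ_and_not_count_lt (hn : r * (j + 1) ≤ n) :
    Nat.card {p : n.Partition //
        IsLargestRRep r (j + 1) p.parts ∧ ¬p.parts.count (j + 1) < 2 * r} =
      Nat.card {q : (n - r * (j + 1)).Partition // IsLargestRRep r (j + 1) q.parts} := by
  refine card_subtype_congr_of_exchange
    (fun s => IsLargestRRep r (j + 1) s ∧ ¬s.count (j + 1) < 2 * r) (IsLargestRRep r (j + 1))
    (replicate r (j + 1)) 0 (fun i hi => eq_of_mem_replicate hi ▸ j.succ_pos)
    (fun i hi => absurd hi (notMem_zero i)) (by rw [sum_replicate, smul_eq_mul]; simp; omega)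
    (fun p hp => le_count_iff_replicate_le.1 (hp.1.1.resolve_left j.succ_ne_zero))
    (fun _ _ => Multiset.zero_le _) fun s t hst => ?_
  have hc (k : ℕ) := congrArg (Multiset.count k) hst
  simp only [add_zero, Multiset.count_add, Multiset.count_replicate] at hc
  have hj1 : s.count (j + 1) = t.count (j + 1) + r := by simpa using hc (j + 1)
  have hk (k : ℕ) (hk : j + 1 < k) : s.count k = t.count k := by
    simpa [show j + 1 ≠ k by omega] using hc k
  constructor
  · rintro ⟨⟨-, hgt⟩, hge⟩
    exact ⟨.inr (by omega), fun k hjk => hk k hjk ▸ hgt k hjk⟩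
  · rintro ⟨hj, hgt⟩
    have := hj.resolve_left j.succ_ne_zero
    exact ⟨⟨.inr (by omega), fun k hjk => hk k hjk ▸ hgt k hjk⟩, by omega⟩

theorem card_largestRRep_succ (hr : 0 < r) (hn : r * (j + 1) ≤ n) :
    Nat.card {p : n.Partition // largestRRep r p = j + 1} =
      Nat.card {q : (n - r).Partition // largestRRep r q = j} +
        Nat.card {q : (n - r * (j + 1)).Partition // largestRRep r q = j + 1} := by
  simp only [card_largestRRep_eq hr]
  rw [Nat.card_subtype_eq_card_and_add_card_and_not _ (·.parts.count (j + 1) < 2 * r),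
    card_isLargestRRep_succ_and_count_lt ((Nat.le_mul_of_pos_right r j.succ_pos).trans hn),
    card_isLargestRRep_succ_and_not_count_lt hn]

theorem mul_largestRRep_le (hr : 0 < r) (p : n.Partition) : r * largestRRep r p ≤ n := by
  rcases ((largestRRep_eq_iff hr p).1 rfl).1 with h | h
  · simp [h]
  · obtain ⟨u, hu⟩ := Multiset.le_iff_exists_add.1 (le_count_iff_replicate_le.1 h)
    have := congrArg Multiset.sum hu
    rw [sum_add, sum_replicate, smul_eq_mul, p.parts_sum] at this
    omega

theorem card_largestRRep_eq_zero (hr : 0 < r) (hn : n < r * j) :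
    Nat.card {p : n.Partition // largestRRep r p = j} = 0 :=
  Nat.card_eq_zero.2 <| .inl ⟨fun p => hn.not_ge (p.2 ▸ mul_largestRRep_le hr p.1)⟩

theorem card_largestRRep_zero (hr : 0 < r) :
    Nat.card {p : n.Partition // largestRRep r p = 0} = (countRestricted n r).card := by
  rw [card_largestRRep_eq hr, countRestricted, ← Nat.card_eq_finsetCard]
  refine Nat.card_congr (Equiv.subtypeEquivRight fun p => ?_)
  simp only [IsLargestRRep, true_or, true_and, Finset.mem_filter, Finset.mem_univ]
  refine ⟨fun h i hi => h i (p.parts_pos hi), fun h k hk => ?_⟩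
  by_cases hkp : k ∈ p.parts
  · exact h k hkp
  · rwa [count_eq_zero_of_notMem hkp]

theorem card_countP_dvd_eq_card_largestRRep (hr : 0 < r) (n j : ℕ) :
    Nat.card {p : n.Partition // p.parts.countP (r ∣ ·) = j} =
      Nat.card {p : n.Partition // largestRRep r p = j} := by
  induction n using Nat.strong_induction_on generalizing j with | _ n ih =>
  rcases j with _ | j
  · rw [card_countP_dvd_zero, card_largestRRep_zero hr,
      card_restricted_eq_card_countRestricted n hr]
  rcases lt_or_ge n (r * (j + 1)) with hn | hn
  · rw [card_countP_dvd_eq_zero hn, card_largestRRep_eq_zero hr hn]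
  have : r ≤ r * (j + 1) := Nat.le_mul_of_pos_right r j.succ_pos
  rw [card_countP_dvd_succ hr hn, card_largestRRep_succ hr hn, ih (n - r) (by omega),
    ih (n - r * (j + 1)) (by omega)]

end Nat.Partition

/-- The number of partitions of n with exactly j even parts equals the number
of partitions of n whose largest repeating part is j. -/
theorem even_parts_eq_largest_repeating (n j : ℕ) :
    Nat.card {p : n.Partition // (p.parts.filter (fun x => Even x)).card = j} =
      Nat.card {p : n.Partition // largestRRep 2 p = j} := by
  simp only [← Nat.Partition.card_countP_dvd_eq_card_largestRRep two_pos, countP_eq_card_filter,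
    even_iff_two_dvd]
end

section
/- For positive integer r and non-negative integer j, the number of partitions of n with exactly j parts divisible by r (counted with multiplicity) equals the number of partitions of n whose largest r-repeating part is j. -/
open Nat

namespace MLRaux

/-- number of parts divisible by r -/
def A (r : ℕ) {n : ℕ} (p : n.Partition) : ℕ := (p.parts.filter (fun x => r ∣ x)).card

noncomputable def L (r n j : ℕ) : ℕ := Nat.card {p : n.Partition // A r p = j}

noncomputable def R (r n j : ℕ) : ℕ := Nat.card {p : n.Partition // largestRRep r p = j}

lemma mem_le {n : ℕ} (p : n.Partition) {k : ℕ} (h : k ∈ p.parts) : k ≤ n :=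
  p.parts_sum ▸ Multiset.le_sum_of_mem h

lemma count_zero_parts {n : ℕ} (p : n.Partition) : p.parts.count 0 = 0 := by
  rw [Multiset.count_eq_zero]
  intro h
  exact absurd (p.parts_pos h) (lt_irrefl 0)

lemma largestRRep_eq_iff {r : ℕ} (hr : 0 < r) {n : ℕ} (p : n.Partition) (v : ℕ) :
    largestRRep r p = v ↔ (v = 0 ∨ r ≤ p.parts.count v) ∧ ∀ k, v < k → p.parts.count k < r := by
  have hbdd : BddAbove {k : ℕ | r ≤ p.parts.count k} := by
    refine ⟨n, fun k hk => ?_⟩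
    have : k ∈ p.parts := Multiset.count_pos.mp (lt_of_lt_of_le hr hk)
    exact mem_le p this
  constructor
  · rintro rfl
    by_cases hne : {k : ℕ | r ≤ p.parts.count k}.Nonempty
    · have hmem := Nat.sSup_mem hne hbdd
      refine ⟨Or.inr hmem, fun k hk => ?_⟩
      by_contra hc
      push_neg at hc
      exact absurd (le_csSup hbdd hc) (not_le.mpr hk)
    · rw [Set.not_nonempty_iff_eq_empty] at hne
      rw [largestRRep, hne, csSup_empty, Nat.bot_eq_zero]
      refine ⟨Or.inl rfl, fun k _ => ?_⟩
      by_contra hc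
      push_neg at hc
      exact (Set.eq_empty_iff_forall_notMem.mp hne) k hc
  · rintro ⟨h1, h2⟩
    rcases h1 with rfl | h1
    · have hemp : {k : ℕ | r ≤ p.parts.count k} = ∅ := by
        apply Set.eq_empty_iff_forall_notMem.mpr
        intro k hk
        rcases Nat.eq_zero_or_pos k with rfl | hkpos
        · rw [Set.mem_setOf_eq, count_zero_parts] at hk; omega
        · exact absurd hk (not_le.mpr (h2 k hkpos))
      rw [largestRRep, hemp, csSup_empty, Nat.bot_eq_zero]
    · apply le_antisymm
      · exact csSup_le ⟨v, h1⟩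
          (fun k hk => by by_contra hc; push_neg at hc; exact absurd hk (not_le.mpr (h2 k hc)))
      · exact le_csSup hbdd h1

lemma sum_shift_up (r : ℕ) (s : Multiset ℕ) :
    (s.map fun x => if r ∣ x then x + r else x).sum
      = s.sum + r * (s.filter (fun x => r ∣ x)).card := by
  induction s using Multiset.induction_on with
  | empty => simp
  | cons a s ih =>
    by_cases hd : r ∣ a
    · simp only [Multiset.map_cons, Multiset.sum_cons, Multiset.filter_cons, if_pos hd,
        Multiset.card_add, Multiset.card_singleton, mul_add, mul_one]
      omega
    · simp only [Multiset.map_cons, Multiset.sum_cons, Multiset.filter_cons, if_neg hd,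
        Multiset.card_add, Multiset.card_zero, mul_add, zero_add]
      omega

lemma sum_shift_down (r : ℕ) (s : Multiset ℕ) (h : ∀ x ∈ s, r ∣ x → r ≤ x) :
    (s.map fun x => if r ∣ x then x - r else x).sum
        + r * (s.filter (fun x => r ∣ x)).card = s.sum := by
  induction s using Multiset.induction_on with
  | empty => simp
  | cons a s ih =>
    have ih' := ih (fun x hx => h x (Multiset.mem_cons_of_mem hx))
    by_cases hd : r ∣ a
    · have ha : r ≤ a := h a (Multiset.mem_cons_self a s) hd
      simp only [Multiset.map_cons, Multiset.sum_cons, Multiset.filter_cons, if_pos hd,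
        Multiset.card_add, Multiset.card_singleton, mul_add, mul_one]
      omega
    · simp only [Multiset.map_cons, Multiset.sum_cons, Multiset.filter_cons, if_neg hd,
        Multiset.card_add, Multiset.card_zero, mul_add, zero_add]
      omega

lemma card_filter_map (r : ℕ) (s : Multiset ℕ) (f : ℕ → ℕ) (hf : ∀ x ∈ s, (r ∣ f x ↔ r ∣ x)) :
    ((s.map f).filter (fun x => r ∣ x)).card = (s.filter (fun x => r ∣ x)).card := by
  rw [Multiset.filter_map, Multiset.card_map]
  congr 1
  apply Multiset.filter_congr
  intro x hx
  exact hf x hx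

/-- insert a part r -/
def E1 (r m j : ℕ) (hr : 0 < r) :
    {q : m.Partition // A r q = j} ≃ {p : (m + r).Partition // A r p = j + 1 ∧ r ∈ p.parts} where
  toFun q := ⟨⟨r ::ₘ q.1.parts,
      fun hi => by rcases Multiset.mem_cons.mp hi with rfl | h; exact hr; exact q.1.parts_pos h,
      by rw [Multiset.sum_cons, q.1.parts_sum, add_comm]⟩,
    by simp [A, Multiset.filter_cons_of_pos _ (dvd_refl r)]; exact q.2,
    Multiset.mem_cons_self _ _⟩
  invFun p := ⟨⟨p.1.parts.erase r,
      fun hi => p.1.parts_pos (Multiset.mem_of_mem_erase hi),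
      by
        have hc := Multiset.cons_erase p.2.2
        have := p.1.parts_sum
        rw [← hc, Multiset.sum_cons] at this
        omega⟩,
    by
      have hc := Multiset.cons_erase p.2.2
      have := p.2.1
      rw [A, ← hc, Multiset.filter_cons_of_pos _ (dvd_refl r)] at this
      simpa [A] using Nat.succ_injective (by simpa using this)⟩
  left_inv q := by
    apply Subtype.ext; apply Nat.Partition.ext
    simp [Multiset.erase_cons_head]
  right_inv p := by
    apply Subtype.ext; apply Nat.Partition.ext
    simp [Multiset.cons_erase p.2.2]

/-- add r to every divisible part -/
def E2 (r m j : ℕ) (hr : 0 < r) :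
    {q : m.Partition // A r q = j} ≃ {p : (m + r * j).Partition // A r p = j ∧ r ∉ p.parts} where
  toFun q := ⟨⟨q.1.parts.map fun x => if r ∣ x then x + r else x,
      fun hi => by
        obtain ⟨x, hx, hfx⟩ := Multiset.mem_map.mp hi
        have := q.1.parts_pos hx
        split at hfx <;> omega,
      by rw [sum_shift_up, q.1.parts_sum]; exact congrArg (m + ·) (congrArg (r * ·) q.2)⟩,
    by
      rw [A, card_filter_map r _ _ (fun x hx => ?_)]
      · exact q.2
      · constructor
        · intro h
          by_contra hx'
          rw [if_neg hx'] at h; exact hx' h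
        · intro h
          rw [if_pos h]; exact Nat.dvd_add h dvd_rfl,
    by
      intro hmem
      obtain ⟨x, hx, hfx⟩ := Multiset.mem_map.mp hmem
      have hxpos := q.1.parts_pos hx
      by_cases h : r ∣ x
      · rw [if_pos h] at hfx; omega
      · rw [if_neg h] at hfx; subst hfx; exact h dvd_rfl⟩
  invFun p := ⟨⟨p.1.parts.map fun x => if r ∣ x then x - r else x,
      fun hi => by
        obtain ⟨x, hx, hfx⟩ := Multiset.mem_map.mp hi
        have hxpos := p.1.parts_pos hx
        by_cases h : r ∣ x
        · rw [if_pos h] at hfx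
          have hxr : x ≠ r := fun he => p.2.2 (he ▸ hx)
          have : r ≤ x := Nat.le_of_dvd hxpos h
          omega
        · rw [if_neg h] at hfx; omega,
      by
        have hs := sum_shift_down r p.1.parts (fun x hx hd => Nat.le_of_dvd (p.1.parts_pos hx) hd)
        rw [p.1.parts_sum] at hs
        have hA : (p.1.parts.filter (fun x => r ∣ x)).card = j := p.2.1
        rw [hA] at hs
        omega⟩,
    by
      rw [A, card_filter_map r _ _ (fun x hx => ?_)]
      · exact p.2.1
      · have hxpos := p.1.parts_pos hx
        constructor
        · intro h
          by_contra hx'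
          rw [if_neg hx'] at h; exact hx' h
        · intro h
          rw [if_pos h]
          exact Nat.dvd_sub h dvd_rfl⟩
  left_inv q := by
    apply Subtype.ext; apply Nat.Partition.ext
    show Multiset.map _ (Multiset.map _ _) = _
    rw [Multiset.map_map]
    rw [Multiset.map_congr rfl (fun x hx => ?_), Multiset.map_id]
    have hxpos := q.1.parts_pos hx
    by_cases h : r ∣ x
    · simp only [Function.comp_apply, if_pos h, if_pos (Nat.dvd_add h dvd_rfl), id_eq]; omega
    · simp only [Function.comp_apply, if_neg h, if_neg h, id_eq]
  right_inv p := by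
    apply Subtype.ext; apply Nat.Partition.ext
    show Multiset.map _ (Multiset.map _ _) = _
    rw [Multiset.map_map]
    rw [Multiset.map_congr rfl (fun x hx => ?_), Multiset.map_id]
    have hxpos := p.1.parts_pos hx
    by_cases h : r ∣ x
    · have hxr : x ≠ r := fun he => p.2.2 (he ▸ hx)
      have hrx : r ≤ x := Nat.le_of_dvd hxpos h
      simp only [Function.comp_apply, if_pos h, if_pos (Nat.dvd_sub h dvd_rfl), id_eq]
      omega
    · simp only [Function.comp_apply, if_neg h, if_neg h, id_eq]

/-- add r extra copies of the part v -/
def F1 (r m v : ℕ) (hr : 0 < r) (hv : 0 < v) :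
    {q : m.Partition // largestRRep r q = v} ≃
      {p : (m + r * v).Partition // largestRRep r p = v ∧ 2 * r ≤ p.parts.count v} where
  toFun q := by
    refine ⟨⟨q.1.parts + Multiset.replicate r v, fun hi => ?_, ?_⟩, ?_, ?_⟩
    · rcases Multiset.mem_add.mp hi with h | h
      · exact q.1.parts_pos h
      · rw [Multiset.eq_of_mem_replicate h]; exact hv
    · rw [Multiset.sum_add, q.1.parts_sum, Multiset.sum_replicate, smul_eq_mul]
    · have hq := (largestRRep_eq_iff hr q.1 v).mp q.2
      have hcv : r ≤ q.1.parts.count v := hq.1.resolve_left (Nat.pos_iff_ne_zero.mp hv)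
      refine (largestRRep_eq_iff hr _ v).mpr ⟨Or.inr ?_, fun k hk => ?_⟩
      · simp only [Multiset.count_add, Multiset.count_replicate_self]
        omega
      · have := hq.2 k hk
        simp only [Multiset.count_add, Multiset.count_replicate, if_neg (Nat.ne_of_lt hk)]
        omega
    · have hq := (largestRRep_eq_iff hr q.1 v).mp q.2
      have hcv : r ≤ q.1.parts.count v := hq.1.resolve_left (Nat.pos_iff_ne_zero.mp hv)
      show 2 * r ≤ Multiset.count v _
      simp only [Multiset.count_add, Multiset.count_replicate_self]
      omega
  invFun p := by
    have hp := (largestRRep_eq_iff hr p.1 v).mp p.2.1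
    have h2r : 2 * r ≤ p.1.parts.count v := p.2.2
    have hle : Multiset.replicate r v ≤ p.1.parts :=
      Multiset.le_count_iff_replicate_le.mp (by omega)
    refine ⟨⟨p.1.parts - Multiset.replicate r v,
        fun hi => p.1.parts_pos (Multiset.mem_of_le (Multiset.sub_le_self _ _) hi), ?_⟩, ?_⟩
    · have hc := tsub_add_cancel_of_le hle
      have := congrArg Multiset.sum hc
      rw [Multiset.sum_add, Multiset.sum_replicate, smul_eq_mul, p.1.parts_sum] at this
      omega
    · refine (largestRRep_eq_iff hr _ v).mpr ⟨Or.inr ?_, fun k hk => ?_⟩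
      · show r ≤ Multiset.count v _
        rw [Multiset.count_sub, Multiset.count_replicate_self]
        omega
      · have := hp.2 k hk
        show Multiset.count k _ < r
        rw [Multiset.count_sub]
        omega
  left_inv q := by
    apply Subtype.ext; apply Nat.Partition.ext
    show q.1.parts + Multiset.replicate r v - Multiset.replicate r v = q.1.parts
    exact add_tsub_cancel_right _ _
  right_inv p := by
    apply Subtype.ext; apply Nat.Partition.ext
    have hp := (largestRRep_eq_iff hr p.1 v).mp p.2.1
    have h2r : 2 * r ≤ p.1.parts.count v := p.2.2
    have hle : Multiset.replicate r v ≤ p.1.parts :=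
      Multiset.le_count_iff_replicate_le.mp (by omega)
    show p.1.parts - Multiset.replicate r v + Multiset.replicate r v = p.1.parts
    exact tsub_add_cancel_of_le hle

/-- replace r copies of the part v by r copies of v-1 (nothing if v = 1) -/
def F2 (r m v : ℕ) (hr : 0 < r) (hv : 0 < v) :
    {p : (m + r).Partition // largestRRep r p = v ∧ p.parts.count v < 2 * r} ≃
      {q : m.Partition // largestRRep r q = v - 1} where
  toFun p := by
    have hp := (largestRRep_eq_iff hr p.1 v).mp p.2.1
    have hcv : r ≤ p.1.parts.count v := hp.1.resolve_left (Nat.pos_iff_ne_zero.mp hv)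
    have hle : Multiset.replicate r v ≤ p.1.parts := Multiset.le_count_iff_replicate_le.mp hcv
    have hsum : (p.1.parts - Multiset.replicate r v).sum + r * v = m + r := by
      have hc := tsub_add_cancel_of_le hle
      have := congrArg Multiset.sum hc
      rw [Multiset.sum_add, Multiset.sum_replicate, smul_eq_mul, p.1.parts_sum] at this
      omega
    refine ⟨⟨p.1.parts - Multiset.replicate r v
        + (if v = 1 then 0 else Multiset.replicate r (v - 1)), fun hi => ?_, ?_⟩, ?_⟩
    · rcases Multiset.mem_add.mp hi with h | h
      · exact p.1.parts_pos (Multiset.mem_of_le (Multiset.sub_le_self _ _) h)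
      · split at h
        · exact absurd h (Multiset.notMem_zero _)
        · rw [Multiset.eq_of_mem_replicate h]; omega
    · rw [Multiset.sum_add]
      have hv' : v = (v - 1) + 1 := (Nat.succ_pred_eq_of_pos hv).symm
      split
      · rename_i h1
        subst h1
        simp only [Multiset.sum_zero]
        omega
      · rw [Multiset.sum_replicate, smul_eq_mul]
        have hrv : r * v = r * (v - 1) + r := by
          cases v with
          | zero => omega
          | succ w => simp [Nat.succ_sub_one, Nat.mul_succ]
        omega
    · refine (largestRRep_eq_iff hr _ (v - 1)).mpr ⟨?_, fun k hk => ?_⟩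
      · by_cases h1 : v = 1
        · exact Or.inl (by omega)
        · refine Or.inr ?_
          show r ≤ Multiset.count (v - 1) _
          rw [Multiset.count_add, Multiset.count_sub, if_neg h1,
            Multiset.count_replicate_self, Multiset.count_replicate, if_neg (by omega)]
          omega
      · show Multiset.count k _ < r
        have hkv : k = v ∨ v < k := by omega
        have hcount_if : Multiset.count k (if v = 1 then (0 : Multiset ℕ)
            else Multiset.replicate r (v - 1)) = 0 := by
          split
          · simp
          · rw [Multiset.count_replicate, if_neg (by omega)]
        rcases hkv with rfl | hkv
        · rw [Multiset.count_add, hcount_if, Multiset.count_sub,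
            Multiset.count_replicate_self]
          have := p.2.2
          omega
        · have := hp.2 k hkv
          rw [Multiset.count_add, hcount_if, Multiset.count_sub]
          omega
  invFun q := by
    have hq := (largestRRep_eq_iff hr q.1 (v - 1)).mp q.2
    have hle : (if v = 1 then 0 else Multiset.replicate r (v - 1)) ≤ q.1.parts := by
      split
      · exact Multiset.zero_le _
      · exact Multiset.le_count_iff_replicate_le.mp (hq.1.resolve_left (by omega))
    have hsumif : (if v = 1 then (0 : Multiset ℕ)
        else Multiset.replicate r (v - 1)).sum = r * (v - 1) := by
      split
      · rename_i h; simp [h]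
      · rw [Multiset.sum_replicate, smul_eq_mul]
    have hcvq : q.1.parts.count v < r := hq.2 v (by omega)
    have hsum : (q.1.parts - (if v = 1 then 0 else Multiset.replicate r (v - 1))).sum
        + r * (v - 1) = m := by
      have hc := tsub_add_cancel_of_le hle
      have := congrArg Multiset.sum hc
      rw [Multiset.sum_add, hsumif, q.1.parts_sum] at this
      omega
    have hcount_if : ∀ k, v ≤ k → Multiset.count k (if v = 1 then (0 : Multiset ℕ)
        else Multiset.replicate r (v - 1)) = 0 := by
      intro k hk
      split
      · simp
      · rw [Multiset.count_replicate, if_neg (by omega)]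
    refine ⟨⟨q.1.parts - (if v = 1 then 0 else Multiset.replicate r (v - 1))
        + Multiset.replicate r v, fun hi => ?_, ?_⟩, ?_, ?_⟩
    · rcases Multiset.mem_add.mp hi with h | h
      · exact q.1.parts_pos (Multiset.mem_of_le (Multiset.sub_le_self _ _) h)
      · rw [Multiset.eq_of_mem_replicate h]; exact hv
    · rw [Multiset.sum_add, Multiset.sum_replicate, smul_eq_mul]
      have hrv : r * v = r * (v - 1) + r := by
        cases v with
        | zero => omega
        | succ w => simp [Nat.succ_sub_one, Nat.mul_succ]
      omega
    · refine (largestRRep_eq_iff hr _ v).mpr ⟨Or.inr ?_, fun k hk => ?_⟩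
      · show r ≤ Multiset.count v _
        rw [Multiset.count_add, Multiset.count_sub, hcount_if v le_rfl,
          Multiset.count_replicate_self]
        omega
      · have := hq.2 k (by omega)
        show Multiset.count k _ < r
        rw [Multiset.count_add, Multiset.count_sub, hcount_if k (by omega),
          Multiset.count_replicate, if_neg (by omega)]
        omega
    · show Multiset.count v _ < 2 * r
      rw [Multiset.count_add, Multiset.count_sub, hcount_if v le_rfl,
        Multiset.count_replicate_self]
      omega
  left_inv p := by
    apply Subtype.ext; apply Nat.Partition.ext
    have hp := (largestRRep_eq_iff hr p.1 v).mp p.2.1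
    have hcv : r ≤ p.1.parts.count v := hp.1.resolve_left (Nat.pos_iff_ne_zero.mp hv)
    have hle : Multiset.replicate r v ≤ p.1.parts := Multiset.le_count_iff_replicate_le.mp hcv
    show p.1.parts - Multiset.replicate r v + _ - _ + Multiset.replicate r v = p.1.parts
    rw [add_tsub_cancel_right, tsub_add_cancel_of_le hle]
  right_inv q := by
    apply Subtype.ext; apply Nat.Partition.ext
    have hq := (largestRRep_eq_iff hr q.1 (v - 1)).mp q.2
    have hle : (if v = 1 then 0 else Multiset.replicate r (v - 1)) ≤ q.1.parts := by
      split
      · exact Multiset.zero_le _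
      · exact Multiset.le_count_iff_replicate_le.mp (hq.1.resolve_left (by omega))
    show q.1.parts - _ + Multiset.replicate r v - Multiset.replicate r v + _ = q.1.parts
    rw [add_tsub_cancel_right, tsub_add_cancel_of_le hle]

lemma card_split {α : Type*} [Fintype α] (P Q : α → Prop)
    [DecidablePred P] [DecidablePred Q] :
    Nat.card {x // P x} = Nat.card {x // P x ∧ Q x} + Nat.card {x // P x ∧ ¬ Q x} := by
  rw [← Nat.card_sum]
  apply Nat.card_congr
  exact (Equiv.sumCompl (fun x : {x // P x} => Q x.1)).symm.trans
    (Equiv.sumCongr (Equiv.subtypeSubtypeEquivSubtypeInter P Q)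
      (Equiv.subtypeSubtypeEquivSubtypeInter P (fun x => ¬ Q x)))

lemma card_fiber_sum {α : Type*} [Fintype α] [DecidableEq α] (f : α → ℕ) (N : ℕ)
    (hf : ∀ a, f a ≤ N) :
    Fintype.card α = ∑ j ∈ Finset.range (N + 1), Nat.card {a // f a = j} := by
  classical
  rw [← Finset.card_univ,
    Finset.card_eq_sum_card_fiberwise
      (fun a _ => Finset.mem_range.mpr (Nat.lt_succ_of_le (hf a)))]
  apply Finset.sum_congr rfl
  intro j _
  rw [Nat.card_eq_fintype_card, Fintype.card_subtype]

lemma sum_le_of_le {s t : Multiset ℕ} (h : s ≤ t) : s.sum ≤ t.sum := by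
  obtain ⟨u, rfl⟩ := Multiset.le_iff_exists_add.mp h
  rw [Multiset.sum_add]
  omega

lemma L_empty (r n j : ℕ) (hr : 0 < r) (hn : n < r * (j + 1)) : L r n (j + 1) = 0 := by
  have : IsEmpty {p : n.Partition // A r p = j + 1} := by
    refine ⟨fun ⟨p, hp⟩ => ?_⟩
    set F := p.parts.filter (fun x => r ∣ x) with hF
    have hcard : F.card = j + 1 := hp
    have hlow : ∀ x ∈ F, r ≤ x := by
      intro x hx
      have hm := Multiset.mem_filter.mp hx
      exact Nat.le_of_dvd (p.parts_pos hm.1) hm.2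
    have h1 : F.card • r ≤ F.sum := Multiset.card_nsmul_le_sum hlow
    have h2 : F.sum ≤ n := p.parts_sum ▸ sum_le_of_le (Multiset.filter_le _ _)
    rw [hcard, smul_eq_mul, mul_comm] at h1
    omega
  exact Nat.card_of_isEmpty

lemma R_empty (r n j : ℕ) (hr : 0 < r) (hn : n < r * (j + 1)) : R r n (j + 1) = 0 := by
  have : IsEmpty {p : n.Partition // largestRRep r p = j + 1} := by
    refine ⟨fun ⟨p, hp⟩ => ?_⟩
    have h := ((largestRRep_eq_iff hr p (j + 1)).mp hp).1.resolve_left (by omega)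
    have hle : Multiset.replicate r (j + 1) ≤ p.parts :=
      Multiset.le_count_iff_replicate_le.mp h
    have := sum_le_of_le hle
    rw [Multiset.sum_replicate, smul_eq_mul, p.parts_sum] at this
    omega
  exact Nat.card_of_isEmpty

lemma A_le (r : ℕ) {n : ℕ} (p : n.Partition) : A r p ≤ n := by
  have h1 : (p.parts.filter (fun x => r ∣ x)).card ≤ p.parts.card :=
    Multiset.card_le_card (Multiset.filter_le _ _)
  have h2 : p.parts.card • 1 ≤ p.parts.sum :=
    Multiset.card_nsmul_le_sum (fun x hx => p.parts_pos hx)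
  rw [smul_eq_mul, mul_one, p.parts_sum] at h2
  exact le_trans h1 h2

lemma B_le (r : ℕ) (hr : 0 < r) {n : ℕ} (p : n.Partition) : largestRRep r p ≤ n := by
  by_cases h0 : largestRRep r p = 0
  · omega
  · have h := ((largestRRep_eq_iff hr p (largestRRep r p)).mp rfl).1.resolve_left h0
    have : largestRRep r p ∈ p.parts := Multiset.count_pos.mp (lt_of_lt_of_le hr h)
    exact mem_le p this

lemma key (r : ℕ) (hr : 0 < r) : ∀ n j, L r n j = R r n j := by
  intro n
  induction n using Nat.strong_induction_on with
  | _ n IH =>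
    have hpos : ∀ j, L r n (j + 1) = R r n (j + 1) := by
      intro j
      by_cases hn : n < r * (j + 1)
      · rw [L_empty r n j hr hn, R_empty r n j hr hn]
      · push_neg at hn
        have hrn : r ≤ n := le_trans (Nat.le_mul_of_pos_right r (Nat.succ_pos j)) hn
        obtain ⟨m₁, hm₁⟩ : ∃ m, n = m + r := ⟨n - r, by omega⟩
        obtain ⟨m₂, hm₂⟩ : ∃ m, n = m + r * (j + 1) := ⟨n - r * (j + 1), by omega⟩
        have e1 : Nat.card {p : n.Partition // A r p = j + 1 ∧ r ∈ p.parts} = L r m₁ j := by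
          rw [hm₁]
          exact (Nat.card_congr (E1 r m₁ j hr)).symm
        have e2 : Nat.card {p : n.Partition // A r p = j + 1 ∧ r ∉ p.parts}
            = L r m₂ (j + 1) := by
          rw [hm₂]
          exact (Nat.card_congr (E2 r m₂ (j + 1) hr)).symm
        have f1 : Nat.card {p : n.Partition //
              largestRRep r p = j + 1 ∧ 2 * r ≤ p.parts.count (j + 1)}
            = R r m₂ (j + 1) := by
          rw [hm₂]
          exact (Nat.card_congr (F1 r m₂ (j + 1) hr (Nat.succ_pos j))).symm
        have f2 : Nat.card {p : n.Partition //
              largestRRep r p = j + 1 ∧ ¬ 2 * r ≤ p.parts.count (j + 1)}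
            = R r m₁ j := by
          rw [hm₁]
          have := Nat.card_congr (F2 r m₁ (j + 1) hr (Nat.succ_pos j))
          rw [Nat.succ_sub_one] at this
          refine Eq.trans ?_ this
          apply Nat.card_congr
          apply Equiv.subtypeEquivRight
          intro p
          constructor
          · rintro ⟨h1, h2⟩; exact ⟨h1, by omega⟩
          · rintro ⟨h1, h2⟩; exact ⟨h1, by omega⟩
        have hL : L r n (j + 1) = L r m₁ j + L r m₂ (j + 1) := by
          rw [L, card_split (fun p : n.Partition => A r p = j + 1)
            (fun p => r ∈ p.parts), e1, e2]
        have hR : R r n (j + 1) = R r m₂ (j + 1) + R r m₁ j := by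
          rw [R, card_split (fun p : n.Partition => largestRRep r p = j + 1)
            (fun p => 2 * r ≤ p.parts.count (j + 1)), f1, f2]
        have hm₁lt : m₁ < n := by omega
        have hm₂lt : m₂ < n := by
          have : 0 < r * (j + 1) := Nat.mul_pos hr (Nat.succ_pos j)
          omega
        rw [hL, hR, IH m₁ hm₁lt j, IH m₂ hm₂lt (j + 1)]
        omega
    intro j
    cases j with
    | succ j => exact hpos j
    | zero =>
      have hsumL : Fintype.card (Nat.Partition n)
          = ∑ j ∈ Finset.range (n + 1), L r n j :=
        card_fiber_sum (A r) n (fun p => A_le r p)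
      have hsumR : Fintype.card (Nat.Partition n)
          = ∑ j ∈ Finset.range (n + 1), R r n j :=
        card_fiber_sum (largestRRep r) n (fun p => B_le r hr p)
      rw [Finset.sum_range_succ'] at hsumL hsumR
      have heq : ∑ i ∈ Finset.range n, L r n (i + 1)
          = ∑ i ∈ Finset.range n, R r n (i + 1) :=
        Finset.sum_congr rfl (fun i _ => hpos i)
      omega

end MLRaux

/-- The number of partitions of n with exactly j parts divisible by r equals
the number of partitions of n whose largest r-repeating part is j. -/
theorem multiples_eq_largest_r_repeating (n r j : ℕ) (hr : 0 < r) :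
    Nat.card {p : n.Partition // (p.parts.filter (fun x => r ∣ x)).card = j} =
      Nat.card {p : n.Partition // largestRRep r p = j} := by
  exact MLRaux.key r hr n j
end

section
/- For r >= 2 and j >= 0, the number of partitions of n whose largest r-repeating part is j equals the number of partitions of n with exactly j parts greater than their (r-1)-chain mex. -/
open Nat

namespace PartConj

/-- number of parts of `s` that are `≥ y`. -/
def NN (s : Multiset ℕ) (y : ℕ) : ℕ := (s.filter (fun x => y ≤ x)).card

lemma NN_mono (s : Multiset ℕ) {y z : ℕ} (h : y ≤ z) : NN s z ≤ NN s y :=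
  Multiset.card_le_card (Multiset.monotone_filter_right s (fun x hx => le_trans h hx))

lemma NN_succ (s : Multiset ℕ) (y : ℕ) : NN s y = NN s (y + 1) + s.count y := by
  classical
  have h := Multiset.filter_add_not (fun x => y + 1 ≤ x) (s.filter (fun x => y ≤ x))
  have hc := congrArg Multiset.card h
  rw [Multiset.card_add] at hc
  rw [Multiset.filter_filter, Multiset.filter_filter] at hc
  have h1 : (s.filter fun a => y + 1 ≤ a ∧ y ≤ a) = s.filter (fun x => y + 1 ≤ x) := by
    apply Multiset.filter_congr; intro x _
    constructor <;> intro hh <;> [exact hh.1; exact ⟨hh, by omega⟩]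
  have h2 : (s.filter fun a => ¬(y + 1 ≤ a) ∧ y ≤ a) = s.filter (fun x => x = y) := by
    apply Multiset.filter_congr; intro x _; omega
  rw [h1, h2] at hc
  have h3 : (s.filter (fun x => x = y)).card = s.count y := by
    rw [Multiset.count, Multiset.countP_eq_card_filter]
    congr 1; apply Multiset.filter_congr; intro x _; omega
  rw [h3] at hc
  exact hc.symm

lemma notmem_iff_NN (s : Multiset ℕ) (y : ℕ) : y ∉ s ↔ NN s y = NN s (y + 1) := by
  rw [← Multiset.count_eq_zero, NN_succ s y]
  omega

lemma NN_pos_exists {s : Multiset ℕ} {y : ℕ} (h : 0 < NN s y) : ∃ x ∈ s, y ≤ x := by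
  obtain ⟨x, hx⟩ := Multiset.card_pos_iff_exists_mem.mp h
  exact ⟨x, (Multiset.mem_filter.mp hx).1, (Multiset.mem_filter.mp hx).2⟩

lemma sum_NN (n : ℕ) (s : Multiset ℕ) (hs : ∀ x ∈ s, x ≤ n) :
    ∑ y ∈ Finset.range n, NN s (y + 1) = s.sum := by
  classical
  induction s using Multiset.induction_on with
  | empty => simp [NN]
  | cons a s ih =>
    have ha : a ≤ n := hs a (Multiset.mem_cons_self a s)
    have hNN : ∀ y, NN (a ::ₘ s) (y + 1) = NN s (y + 1) + (if y + 1 ≤ a then 1 else 0) := by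
      intro y
      rw [NN, Multiset.filter_cons, Multiset.card_add, NN]
      split <;> simp [add_comm]
    simp only [hNN]
    rw [Finset.sum_add_distrib, ih (fun x hx => hs x (Multiset.mem_cons_of_mem hx)),
      Multiset.sum_cons]
    have : ∑ y ∈ Finset.range n, (if y + 1 ≤ a then 1 else 0) = a := by
      rw [Finset.sum_boole]
      have : (Finset.range n).filter (fun y => y + 1 ≤ a) = Finset.range a := by
        ext z; simp only [Finset.mem_filter, Finset.mem_range]; omega
      rw [this]; simp
    rw [this]; omega

lemma parts_le {n : ℕ} (p : n.Partition) : ∀ x ∈ p.parts, x ≤ n := by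
  intro x hx
  calc x ≤ p.parts.sum := Multiset.single_le_sum (fun _ _ => Nat.zero_le _) x hx
  _ = n := p.parts_sum

/-- conjugate partition -/
def conjP {n : ℕ} (p : n.Partition) : n.Partition where
  parts := ((Multiset.range n).map (fun y => NN p.parts (y + 1))).filter (fun v => v ≠ 0)
  parts_pos := by
    intro i hi
    exact Nat.pos_of_ne_zero (Multiset.mem_filter.mp hi).2
  parts_sum := by
    classical
    have h := Multiset.filter_add_not (fun v => v ≠ 0)
      ((Multiset.range n).map (fun y => NN p.parts (y + 1)))
    have hsum := congrArg Multiset.sum h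
    rw [Multiset.sum_add] at hsum
    have hz : (((Multiset.range n).map (fun y => NN p.parts (y + 1))).filter
        (fun v => ¬v ≠ 0)).sum = 0 := by
      apply Multiset.sum_eq_zero
      intro x hx
      have := Multiset.of_mem_filter hx
      omega
    have hall : ((Multiset.range n).map (fun y => NN p.parts (y + 1))).sum =
        ∑ y ∈ Finset.range n, NN p.parts (y + 1) := rfl
    rw [hz, add_zero, hall, sum_NN n _ (parts_le p)] at hsum
    rw [hsum, p.parts_sum]

lemma conjP_parts {n : ℕ} (p : n.Partition) :
    (conjP p).parts =
      ((Multiset.range n).map (fun y => NN p.parts (y + 1))).filter (fun v => v ≠ 0) := rfl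

lemma count_conj {n : ℕ} (p : n.Partition) {v : ℕ} (hv : v ≠ 0) :
    (conjP p).parts.count v =
      ((Finset.range n).filter (fun y => NN p.parts (y + 1) = v)).card := by
  classical
  rw [conjP_parts, Multiset.count_filter_of_pos (p := fun v => v ≠ 0) hv, Multiset.count_map]
  have : ((Finset.range n).filter (fun y => NN p.parts (y + 1) = v)).card
      = Multiset.card ((Multiset.range n).filter (fun y => NN p.parts (y + 1) = v)) := rfl
  rw [this]
  congr 1
  apply Multiset.filter_congr
  intro x _
  exact eq_comm

lemma NN_conj {n : ℕ} (p : n.Partition) {y : ℕ} (hy : 1 ≤ y) :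
    NN (conjP p).parts y =
      ((Finset.range n).filter (fun z => y ≤ NN p.parts (z + 1))).card := by
  classical
  rw [NN, conjP_parts, Multiset.filter_filter]
  have : ((Finset.range n).filter (fun z => y ≤ NN p.parts (z + 1))).card
      = Multiset.card ((Multiset.range n).filter (fun z => y ≤ NN p.parts (z + 1))) := rfl
  rw [this]
  have hcong : ((Multiset.range n).map (fun y_1 => NN p.parts (y_1 + 1))).filter
      (fun a => y ≤ a ∧ a ≠ 0) =
      ((Multiset.range n).map (fun y_1 => NN p.parts (y_1 + 1))).filter (fun a => y ≤ a) := by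
    apply Multiset.filter_congr
    intro x _
    constructor
    · exact fun h => h.1
    · exact fun h => ⟨h, by omega⟩
  rw [hcong, ← Multiset.countP_eq_card_filter, Multiset.countP_map,
    ← Multiset.countP_eq_card_filter]

lemma le_n_of_NN_pos {n : ℕ} (p : n.Partition) {y : ℕ} (h : 0 < NN p.parts y) (hy : 1 ≤ y) :
    y ≤ n := by
  obtain ⟨x, hx, hyx⟩ := NN_pos_exists h
  exact le_trans hyx (parts_le p x hx)

lemma galois {n : ℕ} (p : n.Partition) {y v : ℕ} (hy : 1 ≤ y) (hv : 1 ≤ v) :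
    y ≤ NN (conjP p).parts v ↔ v ≤ NN p.parts y := by
  classical
  rw [NN_conj p hv]
  constructor
  · intro h
    by_contra hc
    push_neg at hc
    have hsub : (Finset.range n).filter (fun z => v ≤ NN p.parts (z + 1)) ⊆
        Finset.range (y - 1) := by
      intro z hz
      rw [Finset.mem_filter] at hz
      rw [Finset.mem_range]
      by_contra hzy
      push_neg at hzy
      have : NN p.parts (z + 1) ≤ NN p.parts y := NN_mono _ (by omega)
      omega
    have := Finset.card_le_card hsub
    rw [Finset.card_range] at this
    omega
  · intro h
    have hyn : y ≤ n := le_n_of_NN_pos p (by omega) hy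
    have hsub : Finset.range y ⊆
        (Finset.range n).filter (fun z => v ≤ NN p.parts (z + 1)) := by
      intro z hz
      rw [Finset.mem_range] at hz
      rw [Finset.mem_filter, Finset.mem_range]
      refine ⟨by omega, ?_⟩
      exact le_trans h (NN_mono _ (by omega))
    have := Finset.card_le_card hsub
    rwa [Finset.card_range] at this

lemma NN_conj_conj {n : ℕ} (p : n.Partition) {v : ℕ} (hv : 1 ≤ v) :
    NN (conjP (conjP p)).parts v = NN p.parts v := by
  apply le_antisymm
  · set a := NN (conjP (conjP p)).parts v with ha
    rcases Nat.eq_zero_or_pos a with h | h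
    · omega
    · have h1 : v ≤ NN (conjP p).parts a := (galois (conjP p) (y := a) (v := v) h hv).mp ha.ge
      exact (galois p (y := v) (v := a) hv h).mp h1
  · set b := NN p.parts v with hb
    rcases Nat.eq_zero_or_pos b with h | h
    · omega
    · have h1 : v ≤ NN (conjP p).parts b := (galois p (y := v) (v := b) hv h).mpr hb.le
      exact (galois (conjP p) (y := b) (v := v) h hv).mpr h1

lemma conjP_involutive {n : ℕ} : Function.Involutive (conjP (n := n)) := by
  intro p
  apply Nat.Partition.ext
  apply Multiset.ext.mpr
  intro a
  rcases Nat.eq_zero_or_pos a with rfl | ha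
  · rw [Multiset.count_eq_zero_of_notMem, Multiset.count_eq_zero_of_notMem]
    · intro h; exact absurd (p.parts_pos h) (lt_irrefl 0)
    · intro h; exact absurd ((conjP (conjP p)).parts_pos h) (lt_irrefl 0)
  · have h1 := NN_succ (conjP (conjP p)).parts a
    have h2 := NN_succ p.parts a
    have e1 := NN_conj_conj p (v := a) ha
    have e2 := NN_conj_conj p (v := a + 1) (by omega)
    omega

/-- conjugation as a permutation -/
noncomputable def conjEquiv (n : ℕ) : n.Partition ≃ n.Partition :=
  Function.Involutive.toPerm _ (conjP_involutive (n := n))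

lemma conjEquiv_apply {n : ℕ} (p : n.Partition) : conjEquiv n p = conjP p := rfl

lemma squeeze {s : Multiset ℕ} {y c v : ℕ} (h1 : NN s y = v) (h2 : NN s (y + c) = v)
    {i : ℕ} (hi : i ≤ c) : NN s (y + i) = v :=
  le_antisymm (h1 ▸ NN_mono s (by omega)) (h2 ▸ NN_mono s (by omega))

lemma count_conj_ge_iff {n : ℕ} (p : n.Partition) {v s : ℕ} (hv : 1 ≤ v) (hs : 1 ≤ s) :
    s + 1 ≤ (conjP p).parts.count v ↔
      ∃ y, 1 ≤ y ∧ NN p.parts y = v ∧ NN p.parts (y + s) = v := by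
  classical
  rw [count_conj p (by omega : v ≠ 0)]
  set T := (Finset.range n).filter (fun y => NN p.parts (y + 1) = v) with hT
  constructor
  · intro hcard
    have hne : T.Nonempty := Finset.card_pos.mp (by omega)
    set a := T.min' hne with hA
    set b := T.max' hne with hB
    have haT : a ∈ T := T.min'_mem hne
    have hbT : b ∈ T := T.max'_mem hne
    have hav : NN p.parts (a + 1) = v := (Finset.mem_filter.mp haT).2
    have hbv : NN p.parts (b + 1) = v := (Finset.mem_filter.mp hbT).2
    have hTIcc : T = Finset.Icc a b := by
      apply Finset.Subset.antisymm
      · intro z hz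
        rw [Finset.mem_Icc]
        exact ⟨T.min'_le z hz, T.le_max' z hz⟩
      · intro z hz
        rw [Finset.mem_Icc] at hz
        rw [hT, Finset.mem_filter, Finset.mem_range]
        have hzn : z < n := by
          have := Finset.mem_range.mp (Finset.mem_filter.mp hbT).1
          omega
        refine ⟨hzn, le_antisymm ?_ ?_⟩
        · rw [← hav]; exact NN_mono _ (by omega)
        · rw [← hbv]; exact NN_mono _ (by omega)
    have hcard2 : T.card = b + 1 - a := by rw [hTIcc, Nat.card_Icc]
    refine ⟨a + 1, by omega, hav, ?_⟩
    have habs : a + s ∈ T := by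
      rw [hTIcc, Finset.mem_Icc]
      omega
    have := (Finset.mem_filter.mp habs).2
    rwa [show a + 1 + s = a + s + 1 by omega]
  · rintro ⟨y, hy1, h1, h2⟩
    have hyn : y + s ≤ n := le_n_of_NN_pos p (by omega) (by omega)
    have hsub : Finset.Icc (y - 1) (y + s - 1) ⊆ T := by
      intro z hz
      rw [Finset.mem_Icc] at hz
      rw [hT, Finset.mem_filter, Finset.mem_range]
      refine ⟨by omega, ?_⟩
      have : z + 1 = y + (z + 1 - y) := by omega
      rw [this]
      exact squeeze h1 h2 (by omega)
    have := Finset.card_le_card hsub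
    rw [Nat.card_Icc] at this
    omega

lemma main_lemma {n : ℕ} (p : n.Partition) {s : ℕ} (hs : 1 ≤ s) :
    largestRRep (s + 1) (conjP p) = (p.parts.filter (fun x => rchainMex s p < x)).card := by
  classical
  -- the chain-mex
  set K := {k : ℕ | 0 < k ∧ ∀ i < s, k + i ∉ p.parts} with hK
  have hKne : K.Nonempty := by
    refine ⟨n + 1, by omega, fun i _ hmem => ?_⟩
    have := parts_le p _ hmem
    omega
  have hk0 : rchainMex s p ∈ K := Nat.sInf_mem hKne
  set k0 := rchainMex s p with hk0def
  obtain ⟨hk0pos, hk0chain⟩ := hk0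
  -- all NN equal along the chain
  have chain_eq : ∀ i ≤ s, NN p.parts k0 = NN p.parts (k0 + i) := by
    intro i hi
    induction i with
    | zero => rfl
    | succ m ih =>
      rw [ih (by omega), show k0 + (m + 1) = (k0 + m) + 1 by omega]
      exact (notmem_iff_NN p.parts (k0 + m)).mp (hk0chain m (by omega))
  have hk01 : NN p.parts k0 = NN p.parts (k0 + 1) := chain_eq 1 hs
  -- RHS is NN (k0 + 1)
  have hRHS : (p.parts.filter (fun x => k0 < x)).card = NN p.parts (k0 + 1) := by
    rw [NN]
    exact congrArg Multiset.card
      (Multiset.filter_congr (fun x _ => by omega : ∀ x ∈ p.parts, k0 < x ↔ k0 + 1 ≤ x))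
  rw [hRHS]
  -- upper bound for the repeat set
  set S := {v : ℕ | s + 1 ≤ (conjP p).parts.count v} with hS
  have hub : ∀ v ∈ S, v ≤ NN p.parts (k0 + 1) := by
    intro v hv
    have hvpos : 1 ≤ v := by
      by_contra hv0
      have hv0 : v = 0 := by omega
      subst hv0
      have : (conjP p).parts.count 0 = 0 := by
        rw [Multiset.count_eq_zero]
        intro hmem
        exact absurd ((conjP p).parts_pos hmem) (lt_irrefl 0)
      rw [hS, Set.mem_setOf_eq, this] at hv
      omega
    obtain ⟨y, hy1, h1, h2⟩ := (count_conj_ge_iff p hvpos hs).mp hv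
    have hyk0 : k0 ≤ y := by
      by_contra hyk
      push_neg at hyk
      have hynotK : y ∉ K := Nat.notMem_of_lt_sInf (show y < sInf K from hyk)
      rw [hK, Set.mem_setOf_eq] at hynotK
      push_neg at hynotK
      obtain ⟨i, hi, hmem⟩ := hynotK hy1
      have hcnt : 1 ≤ p.parts.count (y + i) := Multiset.one_le_count_iff_mem.mpr hmem
      have e1 := NN_succ p.parts (y + i)
      have e2 : NN p.parts (y + i) ≤ NN p.parts y := NN_mono _ (by omega)
      have e3 : NN p.parts (y + s) ≤ NN p.parts (y + i + 1) := NN_mono _ (by omega)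
      omega
    calc v = NN p.parts y := h1.symm
    _ ≤ NN p.parts k0 := NN_mono _ hyk0
    _ = NN p.parts (k0 + 1) := hk01
  rw [largestRRep]
  rcases Nat.eq_zero_or_pos (NN p.parts (k0 + 1)) with hz | hpos
  · have hSempty : {k : ℕ | s + 1 ≤ (conjP p).parts.count k} = ∅ := by
      rw [Set.eq_empty_iff_forall_notMem]
      intro v hv
      have h1 := hub v hv
      have hvpos : 1 ≤ v := by
        by_contra hv0
        have hv0 : v = 0 := by omega
        subst hv0
        have : (conjP p).parts.count 0 = 0 := by
          rw [Multiset.count_eq_zero]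
          intro hmem
          exact absurd ((conjP p).parts_pos hmem) (lt_irrefl 0)
        simp only [Set.mem_setOf_eq, this] at hv
        omega
      omega
    rw [hSempty, csSup_empty]
    simp [hz]
  · have hmem : NN p.parts (k0 + 1) ∈ S := by
      rw [hS, Set.mem_setOf_eq, count_conj_ge_iff p hpos hs]
      exact ⟨k0, hk0pos, hk01, (chain_eq s le_rfl).symm.trans hk01⟩
    exact le_antisymm (csSup_le ⟨_, hmem⟩ hub) (le_csSup ⟨_, hub⟩ hmem)

end PartConj

/-- The number of partitions of n whose largest r-repeating part is j equals
the number of partitions of n with exactly j parts greater than their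
(r-1)-chain mex. -/
theorem largest_r_repeating_eq_parts_gt_chain_mex (n r j : ℕ) (hr : 2 ≤ r) :
    Nat.card {p : n.Partition // largestRRep r p = j} =
      Nat.card {p : n.Partition //
        (p.parts.filter (fun x => rchainMex (r - 1) p < x)).card = j} := by
  obtain ⟨s, rfl⟩ : ∃ s, r = s + 1 := ⟨r - 1, by omega⟩
  have hs : 1 ≤ s := by omega
  have hmain : ∀ p : n.Partition,
      (p.parts.filter (fun x => rchainMex (s + 1 - 1) p < x)).card = j ↔
        largestRRep (s + 1) (PartConj.conjEquiv n p) = j := by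
    intro p
    rw [PartConj.conjEquiv_apply, PartConj.main_lemma p hs]
    rfl
  exact (Nat.card_congr (Equiv.subtypeEquiv (PartConj.conjEquiv n) hmain)).symm
end

section
/- For positive integers n, r, j, k, the number of partitions of n with exactly j parts greater than their r-chain mex, where the r-chain mex equals k, equals the number of partitions of n whose largest (r+1)-repeating part is j and which have exactly k-1 parts greater than j. -/
open Nat

namespace RefineAux

/-- number of parts of `p` that are `≥ m` -/
def A {n : ℕ} (p : n.Partition) (m : ℕ) : ℕ := (p.parts.filter (fun x => m ≤ x)).card

lemma A_anti {n : ℕ} (p : n.Partition) : Antitone (A p) := fun m m' h =>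
  Multiset.card_le_card (Multiset.monotone_filter_right _ (fun x hx => le_trans h hx))

lemma filter_lt_card {n : ℕ} (p : n.Partition) (c : ℕ) :
    (p.parts.filter (fun x => c < x)).card = A p (c + 1) := by
  unfold A
  congr 1

lemma A_succ {n : ℕ} (p : n.Partition) (m : ℕ) :
    A p m = p.parts.count m + A p (m + 1) := by
  unfold A
  rw [Multiset.count_eq_card_filter_eq]
  have h := Multiset.filter_add_filter (fun x => m = x) (fun x => m + 1 ≤ x) p.parts
  have h1 : Multiset.filter (fun x => m = x ∨ m + 1 ≤ x) p.parts
      = Multiset.filter (fun x => m ≤ x) p.parts :=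
    Multiset.filter_congr (fun x _ => by omega)
  have h2 : Multiset.filter (fun x => m = x ∧ m + 1 ≤ x) p.parts = 0 := by
    rw [Multiset.filter_eq_nil]
    intro x _ hx
    omega
  rw [h1, h2, add_zero] at h
  rw [← h, Multiset.card_add]

lemma part_le {n : ℕ} (p : n.Partition) {x : ℕ} (hx : x ∈ p.parts) : x ≤ n :=
  p.parts_sum ▸ Multiset.single_le_sum (fun _ _ => Nat.zero_le _) _ hx

lemma notMem_iff {n : ℕ} (p : n.Partition) (m : ℕ) :
    m ∉ p.parts ↔ A p m = A p (m + 1) := by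
  rw [← Multiset.count_eq_zero, A_succ p m]
  omega

lemma sum_A (n : ℕ) (s : Multiset ℕ) (hs : ∀ x ∈ s, x ≤ n) :
    (∑ m ∈ Finset.Icc 1 n, (s.filter (fun x => m ≤ x)).card) = s.sum := by
  induction s using Multiset.induction_on with
  | empty => simp
  | cons a s ih =>
    have ha : a ≤ n := hs a (Multiset.mem_cons_self a s)
    have step : ∀ m, (Multiset.filter (fun x => m ≤ x) (a ::ₘ s)).card
        = (if m ≤ a then 1 else 0) + (s.filter (fun x => m ≤ x)).card := by
      intro m
      rw [Multiset.filter_cons]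
      rw [Multiset.card_add]
      congr 1
      split <;> simp
    simp only [step]
    rw [Finset.sum_add_distrib, ih (fun x hx => hs x (Multiset.mem_cons_of_mem hx))]
    rw [Multiset.sum_cons]
    congr 1
    have hc : (∑ x ∈ Finset.Icc 1 n, if x ≤ a then 1 else 0)
        = (Finset.filter (fun x => x ≤ a) (Finset.Icc 1 n)).card := by
      rw [Finset.card_filter]
    have hf : Finset.filter (fun m => m ≤ a) (Finset.Icc 1 n) = Finset.Icc 1 a := by
      ext m; simp; omega
    rw [hc, hf, Nat.card_Icc]; omega

/-- conjugate partition -/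
def conj {n : ℕ} (p : n.Partition) : n.Partition where
  parts := ((Finset.Icc 1 n).val.map (A p)).filter (fun x => 0 < x)
  parts_pos := fun h => Multiset.of_mem_filter h
  parts_sum := by
    have h := Multiset.filter_add_not (fun x => 0 < x) ((Finset.Icc 1 n).val.map (A p))
    have h2 : (Multiset.filter (fun x => ¬0 < x) ((Finset.Icc 1 n).val.map (A p))).sum = 0 := by
      apply Multiset.sum_eq_zero
      intro x hx
      have := Multiset.of_mem_filter hx
      omega
    have h3 : ((Finset.Icc 1 n).val.map (A p)).sum = n := by
      have h4 := sum_A n p.parts (fun x hx => part_le p hx)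
      rw [p.parts_sum] at h4
      exact h4
    have := congrArg Multiset.sum h
    rw [Multiset.sum_add, h2, add_zero, h3] at this
    exact this

lemma A_conj {n : ℕ} (p : n.Partition) {j : ℕ} (hj : 1 ≤ j) :
    A (conj p) j = ((Finset.Icc 1 n).filter (fun m => j ≤ A p m)).card := by
  unfold A conj
  simp only [Multiset.filter_filter]
  have h1 : Multiset.filter (fun x => j ≤ x ∧ 0 < x) ((Finset.Icc 1 n).val.map (A p))
      = Multiset.filter (fun x => j ≤ x) ((Finset.Icc 1 n).val.map (A p)) :=
    Multiset.filter_congr (fun x _ => by omega)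
  rw [h1, ← Multiset.countP_eq_card_filter, Multiset.countP_map]
  rfl

lemma dual {n : ℕ} (p : n.Partition) {m j : ℕ} (hm : 1 ≤ m) (hj : 1 ≤ j) :
    m ≤ A (conj p) j ↔ j ≤ A p m := by
  rw [A_conj p hj]
  constructor
  · intro h
    by_contra h'
    push_neg at h'
    have hsub : (Finset.Icc 1 n).filter (fun m' => j ≤ A p m') ⊆ Finset.Ico 1 m := by
      intro x hx
      simp only [Finset.mem_filter, Finset.mem_Icc] at hx
      simp only [Finset.mem_Ico]
      refine ⟨hx.1.1, ?_⟩
      by_contra hxm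
      push_neg at hxm
      exact absurd (le_trans hx.2 (A_anti p hxm)) (by omega)
    have := Finset.card_le_card hsub
    rw [Nat.card_Ico] at this
    omega
  · intro h
    have hmem : ∃ x ∈ p.parts, m ≤ x := by
      have : 0 < (p.parts.filter (fun x => m ≤ x)).card := by
        have : 0 < A p m := by omega
        exact this
      obtain ⟨x, hx⟩ := Multiset.card_pos_iff_exists_mem.mp this
      exact ⟨x, (Multiset.mem_filter.mp hx).1, (Multiset.mem_filter.mp hx).2⟩
    obtain ⟨x, hxp, hmx⟩ := hmem
    have hmn : m ≤ n := le_trans hmx (part_le p hxp)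
    have hsub : Finset.Icc 1 m ⊆ (Finset.Icc 1 n).filter (fun m' => j ≤ A p m') := by
      intro y hy
      simp only [Finset.mem_Icc] at hy
      simp only [Finset.mem_filter, Finset.mem_Icc]
      exact ⟨⟨hy.1, le_trans hy.2 hmn⟩, le_trans h (A_anti p hy.2)⟩
    have := Finset.card_le_card hsub
    rw [Nat.card_Icc] at this
    omega

lemma eq_of_le_iff {x y : ℕ} (h : ∀ m, 1 ≤ m → (m ≤ x ↔ m ≤ y)) : x = y := by
  rcases Nat.eq_zero_or_pos x with hx | hx
  · rcases Nat.eq_zero_or_pos y with hy | hy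
    · omega
    · exact absurd ((h y hy).mpr le_rfl) (by omega)
  · rcases Nat.eq_zero_or_pos y with hy | hy
    · exact absurd ((h x hx).mp le_rfl) (by omega)
    · exact le_antisymm ((h x hx).mp le_rfl) ((h y hy).mpr le_rfl)

lemma A_zero {n : ℕ} (p : n.Partition) : A p 0 = A p 1 := by
  unfold A
  congr 1
  exact Multiset.filter_congr (fun x hx => by have := p.parts_pos hx; omega)

lemma conj_conj {n : ℕ} (p : n.Partition) : conj (conj p) = p := by
  have hA : ∀ m, A (conj (conj p)) m = A p m := by
    have key : ∀ j, 1 ≤ j → A (conj (conj p)) j = A p j := by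
      intro j hj
      apply eq_of_le_iff
      intro m hm
      rw [dual (conj p) hm hj, dual p hj hm]
    intro m
    rcases Nat.eq_zero_or_pos m with hm | hm
    · subst hm
      rw [A_zero, A_zero, key 1 le_rfl]
    · exact key m hm
  ext1
  ext m
  have h1 := A_succ (conj (conj p)) m
  have h2 := A_succ p m
  rw [hA m, hA (m + 1)] at h1
  omega

lemma chain_eq {n : ℕ} (p : n.Partition) (kk r : ℕ) :
    (∀ i < r, A p (kk + i) = A p (kk + i + 1)) ↔ A p kk = A p (kk + r) := by
  constructor
  · intro h
    induction r with
    | zero => simp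
    | succ r ih =>
      have h1 := ih (fun i hi => h i (by omega))
      have h2 := h r (by omega)
      rw [show kk + (r + 1) = kk + r + 1 from rfl]
      omega
  · intro h i hi
    have h1 : A p (kk + i) ≤ A p kk := A_anti p (by omega)
    have h2 : A p (kk + r) ≤ A p (kk + i + 1) := A_anti p (by omega)
    have h3 : A p (kk + i + 1) ≤ A p (kk + i) := A_anti p (by omega)
    omega

lemma nat_sInf_eq {S : Set ℕ} {k : ℕ} (h1 : k ∈ S) (h2 : ∀ m, m < k → m ∉ S) :
    sInf S = k :=
  le_antisymm (Nat.sInf_le h1)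
    (le_of_not_gt fun h => h2 _ h (Nat.sInf_mem ⟨k, h1⟩))

lemma nat_sSup_eq {S : Set ℕ} {j : ℕ} (h1 : j ∈ S) (h2 : ∀ m ∈ S, m ≤ j) :
    sSup S = j :=
  le_antisymm (csSup_le ⟨j, h1⟩ h2) (le_csSup ⟨j, h2⟩ h1)

lemma count_conj {n : ℕ} (p : n.Partition) (j : ℕ) :
    A (conj p) j = (conj p).parts.count j + A (conj p) (j + 1) :=
  A_succ (conj p) j

lemma main_iff {n : ℕ} (p : n.Partition) (r j k : ℕ) (hr : 0 < r) (hj : 0 < j)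
    (hk : 0 < k) :
    (rchainMex r p = k ∧ (p.parts.filter (fun x => rchainMex r p < x)).card = j) ↔
    (largestRRep (r + 1) (conj p) = j ∧
      ((conj p).parts.filter (fun x => j < x)).card = k - 1) := by
  have hSne : Set.Nonempty {k : ℕ | 0 < k ∧ ∀ i < r, k + i ∉ p.parts} := by
    refine ⟨n + 1, by omega, fun i _ hmem => ?_⟩
    have := part_le p hmem
    omega
  have hmem_iff : ∀ kk : ℕ, (kk ∈ {k : ℕ | 0 < k ∧ ∀ i < r, k + i ∉ p.parts}
      ↔ (0 < kk ∧ A p kk = A p (kk + r))) := by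
    intro kk
    simp only [Set.mem_setOf_eq]
    constructor
    · rintro ⟨h0, h1⟩
      exact ⟨h0, (chain_eq p kk r).mp (fun i hi => (notMem_iff p _).mp (h1 i hi))⟩
    · rintro ⟨h0, h1⟩
      exact ⟨h0, fun i hi => (notMem_iff p _).mpr ((chain_eq p kk r).mpr h1 i hi)⟩
  have hTbdd : BddAbove {m : ℕ | r + 1 ≤ (conj p).parts.count m} := by
    refine ⟨n, fun x hx => ?_⟩
    simp only [Set.mem_setOf_eq] at hx
    exact part_le (conj p) (Multiset.count_pos.mp (by omega))
  constructor
  · rintro ⟨h1, h2⟩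
    rw [h1, filter_lt_card] at h2
    unfold rchainMex at h1
    have hkS : k ∈ {k : ℕ | 0 < k ∧ ∀ i < r, k + i ∉ p.parts} := h1 ▸ Nat.sInf_mem hSne
    have hkA : A p k = A p (k + r) := ((hmem_iff k).mp hkS).2
    have hmin : ∀ k', 0 < k' → k' < k → A p k' ≠ A p (k' + r) := by
      intro k' h0 hlt hEq
      exact Nat.notMem_of_lt_sInf (h1 ▸ hlt) ((hmem_iff k').mpr ⟨h0, hEq⟩)
    have haj : ∀ m, k ≤ m → m ≤ k + r → A p m = j := by
      intro m hm1 hm2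
      have e1 : A p (k + r) ≤ A p m := A_anti p hm2
      have e2 : A p m ≤ A p k := A_anti p hm1
      have e3 : A p (k + r) ≤ A p (k + 1) := A_anti p (by omega)
      have e4 : A p (k + 1) ≤ A p k := A_anti p (by omega)
      omega
    have hbj : k + r ≤ A (conj p) j :=
      (dual p (by omega) hj).mpr (le_of_eq (haj (k + r) (by omega) le_rfl).symm)
    have hbj1 : A (conj p) (j + 1) = k - 1 := by
      have hub : A (conj p) (j + 1) < k := by
        by_contra hc
        push_neg at hc
        have := (dual p (by omega : 1 ≤ k) (by omega : 1 ≤ j + 1)).mp hc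
        have := haj k le_rfl (by omega)
        omega
      rcases Nat.lt_or_ge k 2 with hk2 | hk2
      · omega
      · have hlb : k - 1 ≤ A (conj p) (j + 1) := by
          rw [dual p (by omega : 1 ≤ k - 1) (by omega : 1 ≤ j + 1)]
          have e1 : A p k ≤ A p (k - 1) := A_anti p (by omega)
          have e2 : A p (k - 1) ≠ A p (k - 1 + r) := hmin (k - 1) (by omega) (by omega)
          have e3 : A p (k - 1 + r) = j := haj (k - 1 + r) (by omega) (by omega)
          have e4 : A p k = j := haj k le_rfl (by omega)
          have e5 : A p (k - 1 + r) ≤ A p k := by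
            omega
          omega
        omega
    have hcount : r + 1 ≤ (conj p).parts.count j := by
      have := count_conj p j
      omega
    have hmax : ∀ m ∈ {m : ℕ | r + 1 ≤ (conj p).parts.count m}, m ≤ j := by
      intro j' hj'
      simp only [Set.mem_setOf_eq] at hj'
      by_contra hc
      push_neg at hc
      have hcc := count_conj p j'
      set k' := A (conj p) (j' + 1) + 1 with hk'
      have hAm : ∀ m, k' ≤ m → m ≤ k' + r → A p m = j' := by
        intro m hm1 hm2
        have hup : j' ≤ A p m := by
          rw [← dual p (by omega : 1 ≤ m) (by omega : 1 ≤ j')]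
          omega
        have hdn : A p m ≤ j' := by
          by_contra hc2
          push_neg at hc2
          have := (dual p (by omega : 1 ≤ m) (by omega : 1 ≤ j' + 1)).mpr hc2
          omega
        omega
      have hak : A p k' = A p (k' + r) := by
        rw [hAm k' le_rfl (by omega), hAm (k' + r) (by omega) le_rfl]
      have hkk : k' < k := by
        by_contra hc2
        push_neg at hc2
        have e1 : A p k' ≤ A p k := A_anti p hc2
        have e2 : A p k = j := haj k le_rfl (by omega)
        have e3 : A p k' = j' := hAm k' le_rfl (by omega)
        omega
      exact hmin k' (by omega) hkk hak
    constructor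
    · exact nat_sSup_eq hcount hmax
    · rw [filter_lt_card]
      exact hbj1
  · rintro ⟨h1, h2⟩
    rw [filter_lt_card] at h2
    unfold largestRRep at h1
    have hTne : Set.Nonempty {m : ℕ | r + 1 ≤ (conj p).parts.count m} := by
      by_contra hne
      rw [Set.not_nonempty_iff_eq_empty] at hne
      rw [hne] at h1
      simp at h1
      omega
    have hjT : r + 1 ≤ (conj p).parts.count j := h1 ▸ Nat.sSup_mem hTne hTbdd
    have hmax : ∀ m, r + 1 ≤ (conj p).parts.count m → m ≤ j := by
      intro m hm
      exact h1 ▸ le_csSup hTbdd hm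
    have hbj : k + r ≤ A (conj p) j := by
      have := count_conj p j
      omega
    have haj : ∀ m, k ≤ m → m ≤ k + r → A p m = j := by
      intro m hm1 hm2
      have hup : j ≤ A p m := by
        rw [← dual p (by omega : 1 ≤ m) hj]
        omega
      have hdn : A p m ≤ j := by
        by_contra hc2
        push_neg at hc2
        have := (dual p (by omega : 1 ≤ m) (by omega : 1 ≤ j + 1)).mpr hc2
        omega
      omega
    have hkS : k ∈ {k : ℕ | 0 < k ∧ ∀ i < r, k + i ∉ p.parts} := by
      rw [hmem_iff k]
      exact ⟨hk, by rw [haj k le_rfl (by omega), haj (k + r) (by omega) le_rfl]⟩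
    have hmin : ∀ m, m < k → m ∉ {k : ℕ | 0 < k ∧ ∀ i < r, k + i ∉ p.parts} := by
      intro m hlt hmem
      rw [hmem_iff m] at hmem
      obtain ⟨h0, hA⟩ := hmem
      set j' := A p m with hj'
      have hjlt : j + 1 ≤ j' := by
        rw [hj', ← dual p (by omega : 1 ≤ m) (by omega : 1 ≤ j + 1)]
        omega
      have hbj' : m + r ≤ A (conj p) j' := by
        rw [dual p (by omega : 1 ≤ m + r) (by omega : 1 ≤ j')]
        omega
      have hbj'1 : A (conj p) (j' + 1) < m := by
        by_contra hc2
        push_neg at hc2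
        have := (dual p (by omega : 1 ≤ m) (by omega : 1 ≤ j' + 1)).mp hc2
        omega
      have hcnt : r + 1 ≤ (conj p).parts.count j' := by
        have := count_conj p j'
        omega
      have := hmax j' hcnt
      omega
    have hrc : rchainMex r p = k := nat_sInf_eq hkS hmin
    refine ⟨hrc, ?_⟩
    rw [hrc, filter_lt_card]
    exact haj (k + 1) (by omega) (by omega)

end RefineAux

/-- The number of partitions of n with exactly j parts greater than their
r-chain mex, the r-chain mex being k, equals the number of partitions of n
whose largest (r+1)-repeating part is j with exactly k-1 parts greater
than j. -/
theorem refine_lemma (n r j k : ℕ) (hn : 0 < n) (hr : 0 < r) (hj : 0 < j)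
    (hk : 0 < k) :
    Nat.card {p : n.Partition // rchainMex r p = k ∧
        (p.parts.filter (fun x => rchainMex r p < x)).card = j} =
      Nat.card {p : n.Partition // largestRRep (r + 1) p = j ∧
        (p.parts.filter (fun x => j < x)).card = k - 1} := by
  apply Nat.card_congr
  exact {
    toFun := fun q => ⟨RefineAux.conj q.1,
      (RefineAux.main_iff q.1 r j k hr hj hk).mp q.2⟩
    invFun := fun q => ⟨RefineAux.conj q.1,
      (RefineAux.main_iff (RefineAux.conj q.1) r j k hr hj hk).mpr
        (by rw [RefineAux.conj_conj]; exact q.2)⟩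
    left_inv := fun q => Subtype.ext (RefineAux.conj_conj q.1)
    right_inv := fun q => Subtype.ext (RefineAux.conj_conj q.1) }
end

section
/- For all n >= 0, sigma mex(n) equals D_2(n), the number of partitions of n into distinct parts where each part can be one of two colors. -/
open Nat

/-- Partitions of n into distinct parts with two colors: multisets of
(value, color) pairs with no repetition, positive values, summing to n. -/
noncomputable def D2 (n : ℕ) : ℕ :=
  Nat.card {s : Multiset (ℕ × Bool) //
    s.Nodup ∧ (∀ x ∈ s, 0 < x.1) ∧ (s.map Prod.fst).sum = n}

open Finset

namespace AN

/-- triangular number 1+2+...+t -/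
def tri : ℕ → ℕ
  | 0 => 0
  | t+1 => tri t + t + 1

/-- triF k len = (k) + (k+1) + ... + (k+len-1) -/
def triF : ℕ → ℕ → ℕ
  | _, 0 => 0
  | k, len+1 => k + triF (k+1) len

lemma triF_succ (k len : ℕ) : triF k (len+1) = triF k len + (k + len) := by
  induction len generalizing k with
  | zero => simp [triF]
  | succ m ih =>
    rw [show triF k (m+1+1) = k + triF (k+1) (m+1) from rfl, ih (k+1),
      show triF k (m+1) = k + triF (k+1) m from rfl]
    omega

lemma triF_zero_eq_sum_range (L : ℕ) : triF 0 L = ∑ i ∈ range L, i := by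
  induction L with
  | zero => simp [triF]
  | succ m ih => rw [triF_succ, Finset.sum_range_succ, ih]; omega

lemma tri_succ (t : ℕ) : tri (t+1) = tri t + t + 1 := rfl

/-- key arithmetic identity I1 -/
lemma I1 (n t : ℕ) : triF 0 (t+n+1) + tri t = triF 0 (n+1) + t * (t+n+1) := by
  induction t with
  | zero => simp [tri]
  | succ s ih =>
    have h0 : s+1+n+1 = (s+n+1)+1 := by omega
    rw [h0, triF_succ, tri_succ]
    have hp : (s+1) * ((s+n+1)+1) = s * (s+n+1) + 2*s + n + 2 := by ring
    omega

def addIdx : ℕ → List ℕ → List ℕ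
  | _, [] => []
  | k, a :: l => (a + k) :: addIdx (k+1) l

def subIdx : ℕ → List ℕ → List ℕ
  | _, [] => []
  | k, a :: l => (a - k) :: subIdx (k+1) l

@[simp] lemma addIdx_nil (k : ℕ) : addIdx k [] = [] := rfl
@[simp] lemma addIdx_cons (k a : ℕ) (l : List ℕ) : addIdx k (a :: l) = (a + k) :: addIdx (k+1) l := rfl
@[simp] lemma subIdx_nil (k : ℕ) : subIdx k [] = [] := rfl
@[simp] lemma subIdx_cons (k a : ℕ) (l : List ℕ) : subIdx k (a :: l) = (a - k) :: subIdx (k+1) l := rfl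

lemma length_addIdx (k : ℕ) (l : List ℕ) : (addIdx k l).length = l.length := by
  induction l generalizing k with
  | nil => rfl
  | cons a l ih => simp [ih]

lemma length_subIdx (k : ℕ) (l : List ℕ) : (subIdx k l).length = l.length := by
  induction l generalizing k with
  | nil => rfl
  | cons a l ih => simp [ih]

lemma sum_addIdx (k : ℕ) (l : List ℕ) : (addIdx k l).sum = l.sum + triF k l.length := by
  induction l generalizing k with
  | nil => simp [triF]
  | cons a l ih => simp [ih (k+1), triF]; omega

lemma mem_addIdx {k : ℕ} {l : List ℕ} {x : ℕ} (hx : x ∈ addIdx k l) :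
    ∃ a ∈ l, ∃ j, j < l.length ∧ x = a + k + j := by
  induction l generalizing k with
  | nil => simp at hx
  | cons a l ih =>
    simp only [addIdx_cons, List.mem_cons] at hx
    rcases hx with rfl | hx
    · exact ⟨a, by simp, 0, by simp, by omega⟩
    · obtain ⟨b, hb, j, hj, rfl⟩ := ih hx
      exact ⟨b, by simp [hb], j+1, by simpa using hj, by omega⟩

lemma mem_addIdx_ge {k : ℕ} {l : List ℕ} {x : ℕ} (hx : x ∈ addIdx k l) : k ≤ x := by
  obtain ⟨a, _, j, _, rfl⟩ := mem_addIdx hx; omega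

lemma sorted_lt_addIdx {l : List ℕ} (hl : l.Pairwise (· ≤ ·)) (k : ℕ) :
    (addIdx k l).Pairwise (· < ·) := by
  induction l generalizing k with
  | nil => simp
  | cons a l ih =>
    rw [List.pairwise_cons] at hl
    simp only [addIdx_cons, List.pairwise_cons]
    refine ⟨fun b hb => ?_, ih hl.2 (k+1)⟩
    obtain ⟨c, hc, j, _, rfl⟩ := mem_addIdx hb
    have := hl.1 c hc; omega

lemma subIdx_addIdx (k : ℕ) (l : List ℕ) : subIdx k (addIdx k l) = l := by
  induction l generalizing k with
  | nil => rfl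
  | cons a l ih => simp [ih (k+1)]

lemma addIdx_subIdx {l : List ℕ} (hl : l.Pairwise (· < ·)) {k : ℕ} (hk : ∀ x ∈ l, k ≤ x) :
    addIdx k (subIdx k l) = l := by
  induction l generalizing k with
  | nil => rfl
  | cons a l ih =>
    rw [List.pairwise_cons] at hl
    simp only [subIdx_cons, addIdx_cons]
    have ha : k ≤ a := hk a (by simp)
    rw [Nat.sub_add_cancel ha, ih hl.2 (fun x hx => by have := hl.1 x hx; omega)]

lemma le_mem_subIdx {l : List ℕ} (hl : l.Pairwise (· < ·)) :
    ∀ {k c : ℕ}, (∀ x ∈ l, c + k ≤ x) → ∀ y ∈ subIdx k l, c ≤ y := by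
  induction l with
  | nil => intro k c _ y hy; simp at hy
  | cons a l ih =>
    intro k c hc y hy
    rw [List.pairwise_cons] at hl
    simp only [subIdx_cons, List.mem_cons] at hy
    have ha : c + k ≤ a := hc a (by simp)
    rcases hy with rfl | hy
    · omega
    · exact ih hl.2 (fun x hx => by have := hl.1 x hx; omega) y hy

lemma sorted_le_subIdx : ∀ (l : List ℕ), l.Pairwise (· < ·) → ∀ (k : ℕ),
    (subIdx k l).Pairwise (· ≤ ·)
  | [], _, _ => by simp
  | [a], _, _ => by simp
  | a :: b :: l, h, k => by
    rw [List.pairwise_cons] at h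
    have hb : a < b := h.1 b (by simp)
    have ih := sorted_le_subIdx (b :: l) h.2 (k+1)
    simp only [subIdx_cons] at ih ⊢
    rw [List.pairwise_cons]
    refine ⟨fun y hy => ?_, ih⟩
    rcases List.mem_cons.1 hy with rfl | hy'
    · omega
    · have := (List.pairwise_cons.1 ih).1 y hy'; omega


lemma multiset_card_le_sum {s : Multiset ℕ} (h : ∀ x ∈ s, 0 < x) : Multiset.card s ≤ s.sum := by
  induction s using Multiset.induction with
  | empty => simp
  | cons a s ih =>
    simp only [Multiset.card_cons, Multiset.sum_cons]
    have ha := h a (by simp)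
    have := ih (fun x hx => h x (by simp [hx]))
    omega

lemma list_sum_filter_ne_zero (l : List ℕ) : (l.filter (· ≠ 0)).sum = l.sum := by
  induction l with
  | nil => rfl
  | cons a l ih =>
    rw [List.filter_cons]
    by_cases ha : a = 0
    · have hd : (decide (a ≠ 0)) = false := by simp [ha]
      rw [hd]; simp only [if_neg (by simp : ¬(false = true))]
      rw [ih, List.sum_cons, ha, Nat.zero_add]
    · have hd : (decide (a ≠ 0)) = true := by simp [ha]
      rw [hd, if_pos rfl, List.sum_cons, List.sum_cons, ih]

/-- the β-set of a multiset of parts, in a frame of L rows -/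
def toBetaM (L : ℕ) (s : Multiset ℕ) : Finset ℕ :=
  (addIdx 0 (List.replicate (L - (s.sort (· ≤ ·)).length) 0 ++ s.sort (· ≤ ·))).toFinset

/-- the parts (as a list) extracted from a β-set -/
def ofBetaL (S : Finset ℕ) : List ℕ :=
  (subIdx 0 (S.sort (· ≤ ·))).filter (· ≠ 0)

section betaFacts

variable {L m : ℕ} {s : Multiset ℕ}

lemma padded_facts (hpos : ∀ x ∈ s, 0 < x) (hsum : s.sum = m) (hmL : m < L) :
    ∃ l' : List ℕ, l' = List.replicate (L - (s.sort (· ≤ ·)).length) 0 ++ s.sort (· ≤ ·) ∧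
      l'.Pairwise (· ≤ ·) ∧ l'.length = L ∧ l'.sum = m ∧ (∀ a ∈ l', a ≤ m) := by
  set l := s.sort (· ≤ ·) with hl
  have hlsum : l.sum = m := by
    have := Multiset.sort_eq s (· ≤ ·)
    have : (↑l : Multiset ℕ).sum = s.sum := by rw [this]
    simpa [Multiset.sum_coe, hsum] using this
  have hmem : ∀ a ∈ l, 0 < a := fun a ha => hpos a (by
    have := Multiset.sort_eq s (· ≤ ·)
    rw [← this]; exact Multiset.mem_coe.2 ha)
  have hlen : l.length ≤ m := by
    have hcard : Multiset.card s = l.length := by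
      conv_lhs => rw [← Multiset.sort_eq s (· ≤ ·)]
      rw [Multiset.coe_card]
    have := multiset_card_le_sum hpos
    omega
  refine ⟨_, rfl, ?_, ?_, ?_, ?_⟩
  · rw [List.pairwise_append]
    refine ⟨?_, Multiset.pairwise_sort _ _, ?_⟩
    · exact List.pairwise_replicate.2 (Or.inr le_rfl)
    · intro a ha b hb
      rw [List.eq_of_mem_replicate ha]
      exact Nat.zero_le b
  · simp; omega
  · simp [hlsum]
  · intro a ha
    rcases List.mem_append.1 ha with h | h
    · rw [List.eq_of_mem_replicate h]; exact Nat.zero_le m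
    · have hb : a ≤ l.sum := List.single_le_sum (fun x _ => Nat.zero_le x) _ h
      omega

lemma toBetaM_mem_sorted (hpos : ∀ x ∈ s, 0 < x) (hsum : s.sum = m) (hmL : m < L) :
    ∃ la : List ℕ,
      la = addIdx 0 (List.replicate (L - (s.sort (· ≤ ·)).length) 0 ++ s.sort (· ≤ ·)) ∧
      la.Pairwise (· < ·) ∧ la.length = L ∧ la.sum = m + triF 0 L ∧ (∀ x ∈ la, x < L + m) ∧
      (toBetaM L s).val = ↑la := by
  obtain ⟨l', hl'def, hsort, hlen, hsum', hbd⟩ := padded_facts hpos hsum hmL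
  refine ⟨_, rfl, ?_, ?_, ?_, ?_, ?_⟩
  · rw [← hl'def]; exact sorted_lt_addIdx hsort 0
  · rw [← hl'def, length_addIdx, hlen]
  · rw [← hl'def, sum_addIdx, hsum', hlen]
  · intro x hx
    rw [← hl'def] at hx
    obtain ⟨a, ha, j, hj, rfl⟩ := mem_addIdx hx
    have := hbd a ha
    omega
  · rw [toBetaM, ← hl'def]
    have hnd : (addIdx 0 l').Nodup := (sorted_lt_addIdx hsort 0).nodup
    show ((addIdx 0 l').toFinset).val = _
    show ((↑(addIdx 0 l') : Multiset ℕ)).dedup = _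
    rw [Multiset.dedup_eq_self]
    exact hnd
end betaFacts

lemma ofBeta_toBeta {L m : ℕ} {s : Multiset ℕ} (hpos : ∀ x ∈ s, 0 < x) (hsum : s.sum = m)
    (hmL : m < L) : (↑(ofBetaL (toBetaM L s)) : Multiset ℕ) = s := by
  obtain ⟨la, hla, hlas, _, _, _, hval⟩ := toBetaM_mem_sorted hpos hsum hmL
  have hperm : (Multiset.sort (toBetaM L s).val (· ≤ ·)).Perm la :=
    Multiset.coe_eq_coe.1 ((Multiset.sort_eq _ _).trans hval)
  have hsorteq : Finset.sort (toBetaM L s) (· ≤ ·) = la :=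
    List.Perm.eq_of_pairwise' (Finset.pairwise_sort _ _) (hlas.imp le_of_lt) hperm
  rw [ofBetaL, hsorteq, hla, subIdx_addIdx, List.filter_append]
  have h0 : (List.replicate (L - (Multiset.sort s (· ≤ ·)).length) 0).filter (· ≠ 0) = [] := by
    rw [List.filter_eq_nil_iff]
    intro a ha
    rw [List.eq_of_mem_replicate ha]
    simp
  have h1 : (Multiset.sort s (· ≤ ·)).filter (· ≠ 0) = Multiset.sort s (· ≤ ·) :=
    List.filter_eq_self.2 (fun a ha => by
      have : 0 < a := hpos a (by rw [← Multiset.sort_eq s (· ≤ ·)]; exact Multiset.mem_coe.2 ha)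
      simp; omega)
  rw [h0, h1, List.nil_append, Multiset.sort_eq]

lemma toBeta_ofBeta {L : ℕ} {S : Finset ℕ} (hcard : S.card = L) :
    toBetaM L (↑(ofBetaL S)) = S := by
  have hlS_lt : (Finset.sort S (· ≤ ·)).Pairwise (· < ·) := (Finset.sortedLT_sort S).pairwise
  have hlS_len : (Finset.sort S (· ≤ ·)).length = L := by
    rw [Finset.length_sort]; exact hcard
  set lS := Finset.sort S (· ≤ ·) with hls
  set lsub := subIdx 0 lS with hlsub
  have hsublen : lsub.length = L := by rw [hlsub, length_subIdx]; exact hlS_len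
  have hsub_sorted : lsub.Pairwise (· ≤ ·) := sorted_le_subIdx _ hlS_lt 0
  have hsort' : Multiset.sort (↑(ofBetaL S) : Multiset ℕ) (· ≤ ·) = ofBetaL S :=
    List.Perm.eq_of_pairwise' (Multiset.pairwise_sort _ _) (hsub_sorted.filter _)
      (Multiset.coe_eq_coe.1 (Multiset.sort_eq _ _))
  have hofB : ofBetaL S = lsub.filter (· ≠ 0) := rfl
  rw [toBetaM, hsort']
  have hrep : List.replicate (L - (ofBetaL S).length) 0 ++ ofBetaL S = lsub := by
    have hz : lsub.filter (fun x => !(decide (x ≠ 0))) =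
        List.replicate (L - (ofBetaL S).length) 0 := by
      rw [List.eq_replicate_iff]
      constructor
      · have hp := (List.filter_append_perm (fun x => decide (x ≠ 0)) lsub).length_eq
        rw [List.length_append] at hp
        rw [hofB]
        simp only [ne_eq] at hp ⊢
        omega
      · intro b hb
        have := List.of_mem_filter hb
        simpa using this
    refine (fun hp hs => List.Perm.eq_of_pairwise' hs hsub_sorted hp) ?_ ?_
    · refine List.perm_append_comm.trans ?_
      have h2 : ofBetaL S ++ List.replicate (L - (ofBetaL S).length) 0 =
          lsub.filter (fun x => decide (x ≠ 0)) ++ lsub.filter (fun x => !(decide (x ≠ 0))) := by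
        rw [← hz]
        exact congrArg (· ++ _) hofB
      rw [h2]
      exact List.filter_append_perm _ _
    · rw [List.pairwise_append]
      refine ⟨List.pairwise_replicate.2 (Or.inr le_rfl), hsub_sorted.filter _, ?_⟩
      intro a ha b _
      rw [List.eq_of_mem_replicate ha]
      exact Nat.zero_le b
  rw [hrep, hlsub, addIdx_subIdx hlS_lt (fun x _ => Nat.zero_le x), hls,
    Finset.sort_toFinset]

/-- β-sets corresponding to (t, partition of n - tri t) -/
def Sb (n t : ℕ) : Finset (Finset ℕ) :=
  ((range (2*n+2)).powerset).filter
    (fun S => S.card = n+1 ∧ S.sum id + tri t = n + triF 0 (n+1))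

lemma sum_sort_eq {S : Finset ℕ} : (Finset.sort S (· ≤ ·)).sum = S.sum id := by
  have h1 : (↑(Finset.sort S (· ≤ ·)) : Multiset ℕ) = S.val := Multiset.sort_eq _ _
  have h2 : S.sum id = S.val.sum := by
    rw [Finset.sum]
    rw [Multiset.map_id]
  rw [h2, ← h1, Multiset.sum_coe]

lemma card_partition_eq_Sb (n t m : ℕ) (h : tri t + m = n) :
    Fintype.card (Nat.Partition m) = (Sb n t).card := by
  classical
  have hmn : m ≤ n := by omega
  rw [← Finset.card_univ]
  refine Finset.card_bij' (fun p _ => toBetaM (n+1) p.parts)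
    (fun S hS => ⟨(↑(ofBetaL S) : Multiset ℕ), ?_, ?_⟩) ?_ ?_ ?_ ?_
  · -- positivity
    intro i hi
    rw [Multiset.mem_coe, ofBetaL, List.mem_filter] at hi
    have := hi.2
    simp at this
    omega
  · -- sum
    rw [Sb, Finset.mem_filter] at hS
    obtain ⟨_, hcard, hsum⟩ := hS
    have hlen : (Finset.sort S (· ≤ ·)).length = n+1 := by
      rw [Finset.length_sort]; exact hcard
    have hlt : (Finset.sort S (· ≤ ·)).Pairwise (· < ·) := (Finset.sortedLT_sort S).pairwise
    have hrt := addIdx_subIdx hlt (fun x _ => Nat.zero_le x) (k := 0)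
    have hsum2 := congrArg List.sum hrt
    rw [sum_addIdx, length_subIdx, hlen, sum_sort_eq] at hsum2
    have h3 : (↑(ofBetaL S) : Multiset ℕ).sum = (subIdx 0 (Finset.sort S (· ≤ ·))).sum := by
      rw [Multiset.sum_coe, ofBetaL, list_sum_filter_ne_zero]
    omega
  · -- forward mem
    intro p _
    show toBetaM (n+1) p.parts ∈ Sb n t
    obtain ⟨la, _, _, hlen, hsum, hbd, hval⟩ :=
      toBetaM_mem_sorted (fun x hx => p.parts_pos hx) p.parts_sum (by omega : m < n+1)
    rw [Sb, Finset.mem_filter, Finset.mem_powerset]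
    have hcard : (toBetaM (n+1) p.parts).card = n+1 := by
      rw [Finset.card_def, hval, Multiset.coe_card, hlen]
    have hsumS : (toBetaM (n+1) p.parts).sum id = m + triF 0 (n+1) := by
      have : (toBetaM (n+1) p.parts).sum id = (toBetaM (n+1) p.parts).val.sum := by
        rw [Finset.sum, Multiset.map_id]
      rw [this, hval, Multiset.sum_coe, hsum]
    refine ⟨?_, hcard, by omega⟩
    intro x hx
    have hx' : x ∈ la := by
      have : x ∈ (toBetaM (n+1) p.parts).val := hx
      rw [hval] at this
      exact Multiset.mem_coe.1 this
    have := hbd x hx'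
    rw [Finset.mem_range]
    omega
  · -- backward mem
    intro S _
    exact Finset.mem_univ _
  · -- left inverse
    intro p _
    apply Nat.Partition.ext
    exact ofBeta_toBeta (fun x hx => p.parts_pos hx) p.parts_sum (by omega : m < n+1)
  · -- right inverse
    intro S hS
    rw [Sb, Finset.mem_filter] at hS
    exact toBeta_ofBeta hS.2.1

lemma minsum (S : Finset ℕ) : triF 0 S.card ≤ S.sum id := by
  classical
  suffices h : ∀ (k : ℕ) (S : Finset ℕ), S.card = k → triF 0 k ≤ S.sum id by
    exact h S.card S rfl
  intro k
  induction k with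
  | zero => intro S _; simp [triF]
  | succ k ih =>
    intro S hn
    have hne : S.Nonempty := by
      rw [← Finset.card_pos, hn]; omega
    set M := S.max' hne with hM
    have hMS : M ∈ S := S.max'_mem hne
    have hsub : S ⊆ range (M+1) := by
      intro x hx
      rw [Finset.mem_range]
      have := S.le_max' x hx
      omega
    have hcard_le : S.card ≤ M + 1 := by
      calc S.card ≤ (range (M+1)).card := Finset.card_le_card hsub
        _ = M + 1 := Finset.card_range _
    have herase : (S.erase M).card = k := by
      rw [Finset.card_erase_of_mem hMS, hn]
      omega
    have hih := ih (S.erase M) herase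
    have hsum : S.sum id = M + (S.erase M).sum id := by
      rw [← Finset.add_sum_erase _ _ hMS]; rfl
    have htf : triF 0 (k+1) = triF 0 k + k := by
      have := triF_succ 0 k; omega
    omega

lemma Sb_empty {n t : ℕ} (h : n < tri t) : Sb n t = ∅ := by
  rw [Finset.eq_empty_iff_forall_notMem]
  intro S hS
  rw [Sb, Finset.mem_filter] at hS
  obtain ⟨_, hcard, hsum⟩ := hS
  have := minsum S
  rw [hcard] at this
  omega

instance stairDec (parts : Multiset ℕ) :
    DecidablePred (fun t : ℕ => ∀ i ∈ Finset.Icc 1 t, i ∈ parts) :=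
  fun _ => Finset.decidableDforallFinset

section mexfacts
variable {n : ℕ}

lemma parts_le {p : n.Partition} {x : ℕ} (hx : x ∈ p.parts) : x ≤ n := by
  have := Multiset.single_le_sum (fun y _ => Nat.zero_le y) x hx
  rw [p.parts_sum] at this; exact this

lemma mex_mem (p : n.Partition) : 0 < mex p ∧ mex p ∉ p.parts := by
  have hne : {k : ℕ | 0 < k ∧ k ∉ p.parts}.Nonempty :=
    ⟨n+1, ⟨by omega, fun h => by have := parts_le h; omega⟩⟩
  exact Nat.sInf_mem hne

lemma mex_le (p : n.Partition) : mex p ≤ n + 1 :=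
  Nat.sInf_le ⟨by omega, fun h => by have := parts_le h; omega⟩

lemma stair_iff_lt_mex (p : n.Partition) (t : ℕ) :
    (∀ i ∈ Finset.Icc 1 t, i ∈ p.parts) ↔ t < mex p := by
  constructor
  · intro hc
    by_contra h
    push_neg at h
    have hm := mex_mem p
    exact hm.2 (hc (mex p) (Finset.mem_Icc.2 ⟨hm.1, h⟩))
  · intro ht i hi
    rw [Finset.mem_Icc] at hi
    have h2 : i ∉ {k : ℕ | 0 < k ∧ k ∉ p.parts} := Nat.notMem_of_lt_sInf (by
      show i < mex p; omega)
    by_contra hip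
    exact h2 ⟨by omega, hip⟩

lemma mex_eq_card_filter (p : n.Partition) :
    mex p = ((range (n+1)).filter (fun t => ∀ i ∈ Finset.Icc 1 t, i ∈ p.parts)).card := by
  have he : ((range (n+1)).filter (fun t => ∀ i ∈ Finset.Icc 1 t, i ∈ p.parts))
      = range (mex p) := by
    ext t
    simp only [Finset.mem_filter, Finset.mem_range]
    rw [stair_iff_lt_mex]
    exact ⟨fun h => h.2, fun h => ⟨by have := mex_le p; omega, h⟩⟩
  rw [he, Finset.card_range]

lemma sum_mex (n : ℕ) : (∑ p : n.Partition, mex p)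
    = ∑ t ∈ range (n+1), ((univ : Finset n.Partition).filter
        (fun p => ∀ i ∈ Finset.Icc 1 t, i ∈ p.parts)).card := by
  simp_rw [mex_eq_card_filter, Finset.card_filter]
  rw [Finset.sum_comm]

end mexfacts

lemma finset_sum_val (S : Finset ℕ) : S.val.sum = S.sum id := by
  rw [Finset.sum, Multiset.map_id]

lemma sum_Icc_tri (t : ℕ) : (Finset.Icc 1 t).val.sum = tri t := by
  induction t with
  | zero => rfl
  | succ s ih =>
    rw [finset_sum_val] at ih ⊢
    rw [Finset.sum_Icc_succ_top (by omega : 1 ≤ s + 1), ih, tri_succ]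
    simp; omega

lemma stair_le_parts {n t : ℕ} {p : n.Partition} (h : ∀ i ∈ Finset.Icc 1 t, i ∈ p.parts) :
    (Finset.Icc 1 t).val ≤ p.parts := by
  rw [Multiset.le_iff_count]
  intro a
  by_cases ha : a ∈ Finset.Icc 1 t
  · have h1 : (Finset.Icc 1 t).val.count a = 1 :=
      Multiset.count_eq_one_of_mem (Finset.Icc 1 t).nodup ha
    rw [h1]
    exact Multiset.one_le_count_iff_mem.2 (h a ha)
  · rw [Multiset.count_eq_zero_of_notMem ha]
    exact Nat.zero_le _

lemma stair_card {n : ℕ} (t m : ℕ) (h : tri t + m = n) :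
    ((univ : Finset n.Partition).filter
      (fun p => ∀ i ∈ Finset.Icc 1 t, i ∈ p.parts)).card = Fintype.card (Nat.Partition m) := by
  rw [← Finset.card_univ (α := Nat.Partition m)]
  refine Finset.card_bij'
    (fun p hp => Nat.Partition.mk (p.parts - (Finset.Icc 1 t).val)
      (fun {i} hi => p.parts_pos (Multiset.mem_of_le (Multiset.sub_le_self _ _) hi))
      (by
        rw [Finset.mem_filter] at hp
        have hle := stair_le_parts hp.2
        have h2 := congrArg Multiset.sum (tsub_add_cancel_of_le hle)
        rw [Multiset.sum_add, p.parts_sum, sum_Icc_tri] at h2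
        omega))
    (fun q _ => Nat.Partition.mk (q.parts + (Finset.Icc 1 t).val)
      (fun {i} hi => by
        rcases Multiset.mem_add.1 hi with h1 | h1
        · exact q.parts_pos h1
        · have : i ∈ Finset.Icc 1 t := h1
          rw [Finset.mem_Icc] at this
          omega)
      (by rw [Multiset.sum_add, q.parts_sum, sum_Icc_tri]; omega))
    (fun p hp => Finset.mem_univ _)
    (fun q hq => by
      rw [Finset.mem_filter]
      refine ⟨Finset.mem_univ _, fun i hi => ?_⟩
      show i ∈ q.parts + (Finset.Icc 1 t).val
      exact Multiset.mem_add.2 (Or.inr hi))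
    (fun p hp => by
      apply Nat.Partition.ext
      show (p.parts - (Finset.Icc 1 t).val) + (Finset.Icc 1 t).val = p.parts
      rw [Finset.mem_filter] at hp
      exact tsub_add_cancel_of_le (stair_le_parts hp.2))
    (fun q hq => by
      apply Nat.Partition.ext
      show (q.parts + (Finset.Icc 1 t).val) - (Finset.Icc 1 t).val = q.parts
      exact add_tsub_cancel_right _ _)

lemma stair_filter_empty {n t : ℕ} (h : n < tri t) :
    ((univ : Finset n.Partition).filter
      (fun p => ∀ i ∈ Finset.Icc 1 t, i ∈ p.parts)) = ∅ := by
  rw [Finset.eq_empty_iff_forall_notMem]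
  intro p hp
  rw [Finset.mem_filter] at hp
  have hle := stair_le_parts hp.2
  have h2 := congrArg Multiset.sum (tsub_add_cancel_of_le hle)
  rw [Multiset.sum_add, p.parts_sum, sum_Icc_tri] at h2
  omega

def PairF (n : ℕ) : Finset (Finset ℕ × Finset ℕ) :=
  (((range (n+1)).powerset) ×ˢ ((range (n+1)).powerset)).filter
    (fun AB => 0 ∉ AB.1 ∧ 0 ∉ AB.2 ∧ AB.1.sum id + AB.2.sum id = n)

def fwdA (c : ℕ) (S : Finset ℕ) : Finset ℕ := ((range c) \ S).image (fun y => c - y)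
def fwdB (c : ℕ) (S : Finset ℕ) : Finset ℕ := (S.filter (fun x => c < x)).image (fun x => x - c)

def fwd (n t : ℕ) (S : Finset ℕ) : Finset ℕ × Finset ℕ :=
  if t+n+1 ∈ S then (fwdB (t+n+1) S, fwdA (t+n+1) S) else (fwdA (t+n+1) S, fwdB (t+n+1) S)

def bwdT (AB : Finset ℕ × Finset ℕ) : ℕ :=
  if AB.2.card ≤ AB.1.card then AB.1.card - AB.2.card else AB.2.card - AB.1.card - 1

def bwdS0 (c : ℕ) (P Q : Finset ℕ) : Finset ℕ :=
  ((range c) \ P.image (fun p => c - p)) ∪ Q.image (fun q => q + c)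

def bwdS (n : ℕ) (AB : Finset ℕ × Finset ℕ) : Finset ℕ :=
  if AB.2.card ≤ AB.1.card then bwdS0 (bwdT AB + n + 1) AB.1 AB.2
  else bwdS0 (bwdT AB + n + 1) AB.2 AB.1 ∪ {bwdT AB + n + 1}

-- helper lemmas
lemma sub_injOn (c : ℕ) (D : Finset ℕ) (hD : ∀ y ∈ D, y ≤ c) :
    Set.InjOn (fun y => c - y) D := by
  intro a ha b hb hab
  have := hD a ha; have := hD b hb
  simp only at hab
  omega

lemma card_image_sub (c : ℕ) (D : Finset ℕ) (hD : ∀ y ∈ D, y ≤ c) :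
    (D.image (fun y => c - y)).card = D.card :=
  Finset.card_image_of_injOn (sub_injOn c D hD)

lemma sum_image_sub (c : ℕ) (D : Finset ℕ) (hD : ∀ y ∈ D, y ≤ c) :
    (D.image (fun y => c - y)).sum id + D.sum id = c * D.card := by
  rw [Finset.sum_image (fun a ha b hb h => sub_injOn c D hD ha hb h)]
  rw [← Finset.sum_add_distrib]
  have : ∀ y ∈ D, id (c - y) + id y = c := by intro y hy; have := hD y hy; simp; omega
  rw [Finset.sum_congr rfl this, Finset.sum_const, smul_eq_mul, mul_comm]

lemma add_injOn (c : ℕ) (Q : Finset ℕ) : Set.InjOn (fun q => q + c) Q := by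
  intro a _ b _ h; simpa using h

lemma card_image_add (c : ℕ) (Q : Finset ℕ) : (Q.image (fun q => q + c)).card = Q.card :=
  Finset.card_image_of_injOn (add_injOn c Q)

lemma sum_image_add (c : ℕ) (Q : Finset ℕ) :
    (Q.image (fun q => q + c)).sum id = Q.sum id + c * Q.card := by
  rw [Finset.sum_image (fun a ha b hb h => add_injOn c Q ha hb h)]
  simp only [id_eq]
  rw [Finset.sum_add_distrib, Finset.sum_const, smul_eq_mul, mul_comm]

lemma sub_injOn' (c : ℕ) (E : Finset ℕ) (hE : ∀ x ∈ E, c ≤ x) :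
    Set.InjOn (fun x => x - c) E := by
  intro a ha b hb hab
  have := hE a ha; have := hE b hb
  simp only at hab
  omega

lemma card_image_sub' (c : ℕ) (E : Finset ℕ) (hE : ∀ x ∈ E, c ≤ x) :
    (E.image (fun x => x - c)).card = E.card :=
  Finset.card_image_of_injOn (sub_injOn' c E hE)

lemma sum_image_sub' (c : ℕ) (E : Finset ℕ) (hE : ∀ x ∈ E, c ≤ x) :
    (E.image (fun x => x - c)).sum id + c * E.card = E.sum id := by
  rw [Finset.sum_image (fun a ha b hb h => sub_injOn' c E hE ha hb h)]
  simp only [id_eq]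
  rw [show c * E.card = ∑ _x ∈ E, c by rw [Finset.sum_const, smul_eq_mul, mul_comm]]
  rw [← Finset.sum_add_distrib]
  exact Finset.sum_congr rfl (fun x hx => by have := hE x hx; omega)

lemma range_filter_mem (S : Finset ℕ) (c : ℕ) :
    (range c).filter (fun x => x ∈ S) = S.filter (fun x => x < c) := by
  ext x; simp [Finset.mem_filter, Finset.mem_range, and_comm]

lemma range_filter_not_mem (S : Finset ℕ) (c : ℕ) :
    (range c).filter (fun x => x ∉ S) = (range c) \ S := by
  ext x; simp [Finset.mem_filter, Finset.mem_sdiff]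

/-- three-way split of a finset of naturals by comparison with c -/
lemma S_split (S : Finset ℕ) (c : ℕ) :
    S.filter (· < c) ∪ S.filter (c < ·) ∪ (if c ∈ S then {c} else ∅) = S ∧
    (S.filter (· < c)).card + (S.filter (c < ·)).card + (if c ∈ S then 1 else 0) = S.card ∧
    (S.filter (· < c)).sum id + (S.filter (c < ·)).sum id + (if c ∈ S then c else 0) = S.sum id := by
  classical
  have hdisj1 : Disjoint (S.filter (· < c)) (S.filter (c < ·)) := by
    rw [Finset.disjoint_left]
    intro a ha hb
    rw [Finset.mem_filter] at ha hb
    omega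
  have hdisj2 : Disjoint (S.filter (· < c) ∪ S.filter (c < ·)) (if c ∈ S then {c} else ∅) := by
    rw [Finset.disjoint_right]
    intro a ha
    split at ha
    · rw [Finset.mem_singleton] at ha
      subst ha
      rw [Finset.mem_union, Finset.mem_filter, Finset.mem_filter]
      omega
    · simp at ha
  have hu : S.filter (· < c) ∪ S.filter (c < ·) ∪ (if c ∈ S then {c} else ∅) = S := by
    ext x
    rw [Finset.mem_union, Finset.mem_union, Finset.mem_filter, Finset.mem_filter]
    constructor
    · intro h
      rcases h with (h | h) | h
      · exact h.1
      · exact h.1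
      · split at h
        · rw [Finset.mem_singleton] at h; subst h; assumption
        · simp at h
    · intro hx
      rcases Nat.lt_trichotomy x c with h | h | h
      · exact Or.inl (Or.inl ⟨hx, h⟩)
      · subst h; right; simp [hx]
      · exact Or.inl (Or.inr ⟨hx, h⟩)
  refine ⟨hu, ?_, ?_⟩
  · conv_rhs => rw [← hu]
    rw [Finset.card_union_of_disjoint hdisj2, Finset.card_union_of_disjoint hdisj1]
    congr 1
    split <;> simp
  · conv_rhs => rw [← hu]
    rw [Finset.sum_union hdisj2, Finset.sum_union hdisj1]
    congr 1
    split <;> simp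

lemma mem_Sb {n t : ℕ} {S : Finset ℕ} (hS : S ∈ Sb n t) :
    S ⊆ range (2*n+2) ∧ S.card = n+1 ∧ S.sum id + tri t = n + triF 0 (n+1) := by
  rw [Sb, Finset.mem_filter, Finset.mem_powerset] at hS
  exact ⟨hS.1, hS.2.1, hS.2.2⟩

lemma fwd_core {n t : ℕ} {S : Finset ℕ} (hS : S ∈ Sb n t) :
    (fwdA (t+n+1) S).sum id + (fwdB (t+n+1) S).sum id = n ∧
    (fwdA (t+n+1) S).card =
      (if t+n+1 ∈ S then t + 1 + (fwdB (t+n+1) S).card else t + (fwdB (t+n+1) S).card) := by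
  classical
  obtain ⟨hsub, hcard, hsum⟩ := mem_Sb hS
  set c := t + n + 1 with hc
  set D := range c \ S with hD
  set G := S.filter (fun x => c < x) with hG
  set Lf := S.filter (fun x => x < c) with hLf
  have hDle : ∀ y ∈ D, y ≤ c := fun y hy => by
    rw [hD, Finset.mem_sdiff, Finset.mem_range] at hy; omega
  have hGge : ∀ x ∈ G.image id, True := fun _ _ => trivial
  have hA0card : (fwdA c S).card = D.card := card_image_sub c D hDle
  have hA0sum : (fwdA c S).sum id + D.sum id = c * D.card := sum_image_sub c D hDle
  have hGge' : ∀ x ∈ S.filter (fun x => c < x), c ≤ x := fun x hx => by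
    rw [Finset.mem_filter] at hx; omega
  have hB0card : (fwdB c S).card = G.card := card_image_sub' c _ hGge'
  have hB0sum : (fwdB c S).sum id + c * G.card = G.sum id := sum_image_sub' c _ hGge'
  have hDLcard : Lf.card + D.card = c := by
    have := Finset.card_filter_add_card_filter_not
      (s := range c) (p := fun x => x ∈ S)
    rw [range_filter_mem] at this
    have h2 : (Finset.filter (fun x => ¬ x ∈ S) (range c)) = D := by
      rw [hD, ← range_filter_not_mem]
    rw [h2] at this
    simpa [Finset.card_range] using this
  have hDLsum : Lf.sum id + D.sum id = triF 0 c := by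
    have h1 := Finset.sum_filter_add_sum_filter_not (range c) (fun x => x ∈ S) id
    rw [range_filter_mem] at h1
    have h2 : (Finset.filter (fun x => ¬ x ∈ S) (range c)) = D := by
      rw [hD, ← range_filter_not_mem]
    rw [h2] at h1
    rw [triF_zero_eq_sum_range]
    simp only [id_eq] at h1 ⊢
    exact h1
  obtain ⟨-, hscard, hssum⟩ := S_split S c
  rw [← hLf, ← hG] at hscard hssum
  set sA := (fwdA c S).sum id with hsA
  set sB := (fwdB c S).sum id with hsB
  set sD := D.sum id
  set sG := G.sum id
  set sLf := Lf.sum id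
  set sS := S.sum id
  set dD := D.card
  set dG := G.card
  set dLf := Lf.card
  have hcz : (c:ℤ) = (t:ℤ) + n + 1 := by rw [hc]; push_cast; ring
  have hI' : (triF 0 c : ℤ) + tri t = triF 0 (n+1) + ((t:ℤ)+n+1) * t := by
    rw [hc]
    have h := I1 n t
    zify at h ⊢
    ring_nf at h ⊢
    linarith [h]
  constructor
  · -- sum identity, via ℤ
    by_cases hcS : c ∈ S
    · simp only [hcS, if_true] at hscard hssum
      zify at hA0sum hB0sum hDLcard hDLsum hscard hssum hcard hsum ⊢
      have g2a : (dD:ℤ) - dG = t + 1 := by omega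
      have g2 : ((t:ℤ)+n+1)*dD - ((t:ℤ)+n+1)*dG = ((t:ℤ)+n+1)*t + ((t:ℤ)+n+1) := by
        have h3 : ((t:ℤ)+n+1)*dD - ((t:ℤ)+n+1)*dG = ((t:ℤ)+n+1)*((dD:ℤ) - dG) := by ring
        rw [h3, g2a]; ring
      rw [hcz] at hA0sum hB0sum
      linarith [hA0sum, hB0sum, g2, hssum, hDLsum, hsum, hI']
    · simp only [hcS, if_false] at hscard hssum
      zify at hA0sum hB0sum hDLcard hDLsum hscard hssum hcard hsum ⊢
      have g2a : (dD:ℤ) - dG = t := by omega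
      have g2 : ((t:ℤ)+n+1)*dD - ((t:ℤ)+n+1)*dG = ((t:ℤ)+n+1)*t := by
        have h3 : ((t:ℤ)+n+1)*dD - ((t:ℤ)+n+1)*dG = ((t:ℤ)+n+1)*((dD:ℤ) - dG) := by ring
        rw [h3, g2a]
      rw [hcz] at hA0sum hB0sum
      linarith [hA0sum, hB0sum, g2, hssum, hDLsum, hsum, hI']
  · -- card relation
    by_cases hcS : c ∈ S
    · simp only [hcS, if_true] at hscard ⊢
      omega
    · simp only [hcS, if_false] at hscard ⊢
      omega

lemma card_le_sum_pos (P : Finset ℕ) (h0 : 0 ∉ P) : P.card ≤ P.sum id := by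
  have : ∀ i ∈ P, 1 ≤ id i := by
    intro i hi
    rcases Nat.eq_zero_or_pos i with rfl | h
    · exact absurd hi h0
    · exact h
  calc P.card = ∑ _i ∈ P, 1 := by rw [Finset.sum_const, smul_eq_mul, mul_one]
    _ ≤ P.sum id := Finset.sum_le_sum this

lemma fwd_mem {n t : ℕ} {S : Finset ℕ} (hS : S ∈ Sb n t) : fwd n t S ∈ PairF n := by
  classical
  obtain ⟨hsum, -⟩ := fwd_core hS
  have h0A : (0:ℕ) ∉ fwdA (t+n+1) S := by
    rw [fwdA, Finset.mem_image]
    rintro ⟨y, hy, hy0⟩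
    rw [Finset.mem_sdiff, Finset.mem_range] at hy
    omega
  have h0B : (0:ℕ) ∉ fwdB (t+n+1) S := by
    rw [fwdB, Finset.mem_image]
    rintro ⟨x, hx, hx0⟩
    rw [Finset.mem_filter] at hx
    omega
  have hsubA : fwdA (t+n+1) S ⊆ range (n+1) := by
    intro x hx
    have hxs : x ≤ (fwdA (t+n+1) S).sum id :=
      Finset.single_le_sum (f := id) (fun i _ => Nat.zero_le i) hx
    rw [Finset.mem_range]; omega
  have hsubB : fwdB (t+n+1) S ⊆ range (n+1) := by
    intro x hx
    have hxs : x ≤ (fwdB (t+n+1) S).sum id :=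
      Finset.single_le_sum (f := id) (fun i _ => Nat.zero_le i) hx
    rw [Finset.mem_range]; omega
  rw [fwd]
  split
  · rw [PairF, Finset.mem_filter]
    refine ⟨Finset.mem_product.2 ⟨Finset.mem_powerset.2 hsubB, Finset.mem_powerset.2 hsubA⟩,
      h0B, h0A, ?_⟩
    show (fwdB (t+n+1) S).sum id + (fwdA (t+n+1) S).sum id = n
    omega
  · rw [PairF, Finset.mem_filter]
    refine ⟨Finset.mem_product.2 ⟨Finset.mem_powerset.2 hsubA, Finset.mem_powerset.2 hsubB⟩,
      h0A, h0B, ?_⟩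
    show (fwdA (t+n+1) S).sum id + (fwdB (t+n+1) S).sum id = n
    omega

lemma image_sub_image_sub {c : ℕ} {P : Finset ℕ} (hP : ∀ p ∈ P, p ≤ c) :
    (P.image (fun p => c - p)).image (fun y => c - y) = P := by
  rw [Finset.image_image]
  calc P.image ((fun y => c - y) ∘ (fun p => c - p))
      = P.image id := Finset.image_congr (fun p hp => by
        have := hP p hp
        simp only [Function.comp_apply, id_eq]
        omega)
    _ = P := Finset.image_id

lemma image_add_image_sub {c : ℕ} {Q : Finset ℕ} :
    (Q.image (fun q => q + c)).image (fun x => x - c) = Q := by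
  rw [Finset.image_image]
  calc Q.image ((fun x => x - c) ∘ (fun q => q + c))
      = Q.image id := Finset.image_congr (fun q _ => by
        simp only [Function.comp_apply, id_eq]
        omega)
    _ = Q := Finset.image_id

lemma bwdS0_facts {n : ℕ} (c : ℕ) (P Q : Finset ℕ) (h0P : 0 ∉ P) (h0Q : 0 ∉ Q)
    (hPc : ∀ p ∈ P, p ≤ c) (hQc : ∀ q ∈ Q, q + c < 2*n+2) (hc2 : c < 2*n+2) :
    (bwdS0 c P Q) ⊆ range (2*n+2) ∧
    (bwdS0 c P Q).card + P.card = c + Q.card ∧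
    (bwdS0 c P Q).sum id + c * P.card = triF 0 c + P.sum id + Q.sum id + c * Q.card ∧
    (c ∉ bwdS0 c P Q) ∧
    (range c \ bwdS0 c P Q = P.image (fun p => c - p)) ∧
    ((bwdS0 c P Q).filter (fun x => c < x) = Q.image (fun q => q + c)) := by
  classical
  set Pimg := P.image (fun p => c - p) with hPimg
  set Qimg := Q.image (fun q => q + c) with hQimg
  have hPsub : Pimg ⊆ range c := by
    intro x hx
    rw [hPimg, Finset.mem_image] at hx
    obtain ⟨p, hp, rfl⟩ := hx
    have h1 := hPc p hp
    have h2 : p ≠ 0 := fun h => h0P (h ▸ hp)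
    rw [Finset.mem_range]
    omega
  have hQgt : ∀ x ∈ Qimg, c < x := by
    intro x hx
    rw [hQimg, Finset.mem_image] at hx
    obtain ⟨q, hq, rfl⟩ := hx
    have h2 : q ≠ 0 := fun h => h0Q (h ▸ hq)
    omega
  have hdisj : Disjoint (range c \ Pimg) Qimg := by
    rw [Finset.disjoint_right]
    intro x hx hx'
    rw [Finset.mem_sdiff, Finset.mem_range] at hx'
    exact absurd hx'.1 (by have := hQgt x hx; omega)
  have hcardP : Pimg.card = P.card := card_image_sub c P hPc
  have hcardQ : Qimg.card = Q.card := card_image_add c Q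
  have hsd_card : (range c \ Pimg).card = c - Pimg.card := by
    rw [Finset.card_sdiff_of_subset hPsub, Finset.card_range]
  have hsd_sum : (range c \ Pimg).sum id + Pimg.sum id = triF 0 c := by
    rw [Finset.sum_sdiff hPsub, triF_zero_eq_sum_range]
    rfl
  refine ⟨?_, ?_, ?_, ?_, ?_, ?_⟩
  · intro x hx
    rw [bwdS0, Finset.mem_union] at hx
    rcases hx with hx | hx
    · rw [Finset.mem_sdiff, Finset.mem_range] at hx
      rw [Finset.mem_range]
      omega
    · rw [Finset.mem_image] at hx
      obtain ⟨q, hq, rfl⟩ := hx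
      rw [Finset.mem_range]
      exact hQc q hq
  · rw [bwdS0, Finset.card_union_of_disjoint hdisj, hsd_card, hcardQ, hcardP]
    have hPle : Pimg.card ≤ c := by
      calc Pimg.card ≤ (range c).card := Finset.card_le_card hPsub
        _ = c := Finset.card_range c
    rw [hcardP] at hPle
    omega
  · rw [bwdS0, Finset.sum_union hdisj]
    have hq : Qimg.sum id = Q.sum id + c * Q.card := sum_image_add c Q
    have hp : Pimg.sum id + P.sum id = c * P.card := sum_image_sub c P hPc
    have he1 : (∑ x ∈ range c \ Pimg, id x) = (range c \ Pimg).sum id := rfl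
    have he2 : (∑ x ∈ Qimg, id x) = Qimg.sum id := rfl
    rw [he1, he2] at *
    omega
  · rw [bwdS0, Finset.mem_union]
    rintro (h | h)
    · rw [Finset.mem_sdiff, Finset.mem_range] at h
      omega
    · have := hQgt c h
      omega
  · ext x
    rw [bwdS0, Finset.mem_sdiff, Finset.mem_union, Finset.mem_sdiff]
    constructor
    · rintro ⟨hxr, hxn⟩
      by_contra hxP
      exact hxn (Or.inl ⟨hxr, hxP⟩)
    · intro hxP
      have hxr : x ∈ range c := hPsub hxP
      refine ⟨hxr, ?_⟩
      rintro (⟨-, h⟩ | h)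
      · exact h hxP
      · have := hQgt x h
        rw [Finset.mem_range] at hxr
        omega
  · ext x
    rw [Finset.mem_filter, bwdS0, Finset.mem_union, Finset.mem_sdiff, Finset.mem_range]
    constructor
    · rintro ⟨(⟨h1, -⟩ | h1), h2⟩
      · omega
      · exact h1
    · intro hx
      exact ⟨Or.inr hx, hQgt x hx⟩

lemma I1' (n t : ℕ) : triF 0 (t+n+1) + tri t = triF 0 (n+1) + (t+n+1) * t := by
  have h := I1 n t
  rw [Nat.mul_comm t (t+n+1)] at h
  exact h

lemma pair_facts {n : ℕ} {AB : Finset ℕ × Finset ℕ} (h : AB ∈ PairF n) :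
    AB.1 ⊆ range (n+1) ∧ AB.2 ⊆ range (n+1) ∧ 0 ∉ AB.1 ∧ 0 ∉ AB.2 ∧
      AB.1.sum id + AB.2.sum id = n := by
  rw [PairF, Finset.mem_filter] at h
  obtain ⟨hp, h1, h2, h3⟩ := h
  rw [Finset.mem_product, Finset.mem_powerset, Finset.mem_powerset] at hp
  exact ⟨hp.1, hp.2, h1, h2, h3⟩

lemma bwd_mem {n : ℕ} {AB : Finset ℕ × Finset ℕ} (h : AB ∈ PairF n) :
    bwdT AB ∈ range (n+1) ∧ bwdS n AB ∈ Sb n (bwdT AB) := by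
  classical
  obtain ⟨hsubA, hsubB, h0A, h0B, hsum⟩ := pair_facts h
  have haA : AB.1.card ≤ AB.1.sum id := card_le_sum_pos _ h0A
  have hbB : AB.2.card ≤ AB.2.sum id := card_le_sum_pos _ h0B
  have hmemA : ∀ p ∈ AB.1, 1 ≤ p ∧ p ≤ AB.1.sum id := by
    intro p hp
    constructor
    · rcases Nat.eq_zero_or_pos p with rfl | h' ; · exact absurd hp h0A
      exact h'
    · exact Finset.single_le_sum (f := id) (fun i _ => Nat.zero_le i) hp
  have hmemB : ∀ q ∈ AB.2, 1 ≤ q ∧ q ≤ AB.2.sum id := by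
    intro q hq
    constructor
    · rcases Nat.eq_zero_or_pos q with rfl | h' ; · exact absurd hq h0B
      exact h'
    · exact Finset.single_le_sum (f := id) (fun i _ => Nat.zero_le i) hq
  by_cases hcase : AB.2.card ≤ AB.1.card
  · set t := AB.1.card - AB.2.card with ht
    have hbt : bwdT AB = t := by rw [bwdT, if_pos hcase]
    have htn : t ≤ n := by omega
    have hfacts := bwdS0_facts (n := n) (t+n+1) AB.1 AB.2 h0A h0B
      (fun p hp => by have := hmemA p hp; omega)
      (fun q hq => by have := hmemB q hq; omega)
      (by omega)
    obtain ⟨hsub, hcard, hsum2, -, -, -⟩ := hfacts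
    have hbS : bwdS n AB = bwdS0 (t+n+1) AB.1 AB.2 := by
      rw [bwdS, if_pos hcase, hbt]
    constructor
    · rw [hbt, Finset.mem_range]; omega
    · rw [hbt, hbS, Sb, Finset.mem_filter, Finset.mem_powerset]
      refine ⟨hsub, by omega, ?_⟩
      -- sum condition
      have hI := I1' n t
      zify at hsum2 hsum hcard hI ⊢
      have e1 : ((AB.1.card : ℤ)) - AB.2.card = t := by omega
      have e2 : ((t:ℤ)+n+1) * AB.1.card - ((t:ℤ)+n+1) * AB.2.card = ((t:ℤ)+n+1) * t := by
        have h3 : ((t:ℤ)+n+1) * AB.1.card - ((t:ℤ)+n+1) * AB.2.card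
            = ((t:ℤ)+n+1) * ((AB.1.card : ℤ) - AB.2.card) := by ring
        rw [h3, e1]
      linarith [hsum2, hsum, hI, e2]
  · set t := AB.2.card - AB.1.card - 1 with ht
    have hbt : bwdT AB = t := by rw [bwdT, if_neg hcase]
    have hb1 : 1 ≤ AB.2.card := by omega
    have htn : t ≤ n := by omega
    have hfacts := bwdS0_facts (n := n) (t+n+1) AB.2 AB.1 h0B h0A
      (fun p hp => by have := hmemB p hp; omega)
      (fun q hq => by have := hmemA q hq; omega)
      (by omega)
    obtain ⟨hsub, hcard, hsum2, hcnot, -, -⟩ := hfacts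
    have hbS : bwdS n AB = bwdS0 (t+n+1) AB.2 AB.1 ∪ {t+n+1} := by
      rw [bwdS, if_neg hcase, hbt]
    have hdisj : Disjoint (bwdS0 (t+n+1) AB.2 AB.1) {t+n+1} := by
      rw [Finset.disjoint_right]
      intro x hx
      rw [Finset.mem_singleton] at hx
      subst hx
      exact hcnot
    constructor
    · rw [hbt, Finset.mem_range]; omega
    · rw [hbt, hbS, Sb, Finset.mem_filter, Finset.mem_powerset]
      refine ⟨?_, ?_, ?_⟩
      · intro x hx
        rcases Finset.mem_union.1 hx with hx | hx
        · exact hsub hx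
        · rw [Finset.mem_singleton] at hx
          subst hx
          rw [Finset.mem_range]
          omega
      · rw [Finset.card_union_of_disjoint hdisj, Finset.card_singleton]
        omega
      · rw [Finset.sum_union hdisj]
        have hsing : ({t+n+1} : Finset ℕ).sum id = t+n+1 := by simp
        rw [hsing]
        have hI := I1' n t
        zify at hsum2 hsum hcard hI ⊢
        have e1 : ((AB.2.card : ℤ)) - AB.1.card = t + 1 := by omega
        have e2 : ((t:ℤ)+n+1) * AB.2.card - ((t:ℤ)+n+1) * AB.1.card
            = ((t:ℤ)+n+1) * t + ((t:ℤ)+n+1) := by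
          have h3 : ((t:ℤ)+n+1) * AB.2.card - ((t:ℤ)+n+1) * AB.1.card
              = ((t:ℤ)+n+1) * ((AB.2.card : ℤ) - AB.1.card) := by ring
          rw [h3, e1]
          ring
        linarith [hsum2, hsum, hI, e2]

lemma image_sub_image_add {c : ℕ} {E : Finset ℕ} (hE : ∀ x ∈ E, c ≤ x) :
    (E.image (fun x => x - c)).image (fun q => q + c) = E := by
  rw [Finset.image_image]
  calc E.image ((fun q => q + c) ∘ (fun x => x - c))
      = E.image id := Finset.image_congr (fun x hx => by
        have := hE x hx
        simp only [Function.comp_apply, id_eq]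
        omega)
    _ = E := Finset.image_id

lemma inter_range_eq_filter (S : Finset ℕ) (c : ℕ) :
    range c \ (range c \ S) = S.filter (· < c) := by
  ext x
  simp only [Finset.mem_sdiff, Finset.mem_filter, Finset.mem_range]
  tauto

lemma bwd_fwd {n t : ℕ} {S : Finset ℕ} (hS : S ∈ Sb n t) :
    bwdT (fwd n t S) = t ∧ bwdS n (fwd n t S) = S := by
  classical
  obtain ⟨-, hcardrel⟩ := fwd_core hS
  set c := t + n + 1 with hc
  have hDle : ∀ y ∈ range c \ S, y ≤ c := fun y hy => by
    rw [Finset.mem_sdiff, Finset.mem_range] at hy; omega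
  have hGge : ∀ x ∈ S.filter (fun x => c < x), c ≤ x := fun x hx => by
    rw [Finset.mem_filter] at hx; omega
  have hAimg : (fwdA c S).image (fun p => c - p) = range c \ S := by
    rw [fwdA]
    exact image_sub_image_sub hDle
  have hBimg : (fwdB c S).image (fun q => q + c) = S.filter (fun x => c < x) := by
    rw [fwdB]
    exact image_sub_image_add hGge
  obtain ⟨husplit, -, -⟩ := S_split S c
  by_cases hcS : c ∈ S
  · rw [fwd, if_pos hcS]
    simp only [hcS, if_true] at hcardrel
    have hT : bwdT (fwdB c S, fwdA c S) = t := by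
      show (if (fwdA c S).card ≤ (fwdB c S).card then (fwdB c S).card - (fwdA c S).card
        else (fwdA c S).card - (fwdB c S).card - 1) = t
      rw [if_neg (by omega)]
      omega
    refine ⟨hT, ?_⟩
    rw [bwdS, hT]
    show (if (fwdA c S).card ≤ (fwdB c S).card then _ else _) = S
    rw [if_neg (by omega)]
    show bwdS0 (t+n+1) (fwdA c S) (fwdB c S) ∪ {t+n+1} = S
    rw [bwdS0, ← hc, hAimg, hBimg, inter_range_eq_filter]
    conv_rhs => rw [← husplit]
    simp [hcS]
  · rw [fwd, if_neg hcS]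
    simp only [hcS, if_false] at hcardrel
    have hT : bwdT (fwdA c S, fwdB c S) = t := by
      show (if (fwdB c S).card ≤ (fwdA c S).card then (fwdA c S).card - (fwdB c S).card
        else (fwdB c S).card - (fwdA c S).card - 1) = t
      rw [if_pos (by omega)]
      omega
    refine ⟨hT, ?_⟩
    rw [bwdS, hT]
    show (if (fwdB c S).card ≤ (fwdA c S).card then _ else _) = S
    rw [if_pos (by omega)]
    show bwdS0 (t+n+1) (fwdA c S) (fwdB c S) = S
    rw [bwdS0, ← hc, hAimg, hBimg, inter_range_eq_filter]
    conv_rhs => rw [← husplit]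
    simp [hcS]

lemma filter_union_singleton (X : Finset ℕ) (c : ℕ) :
    (X ∪ {c}).filter (fun x => c < x) = X.filter (fun x => c < x) := by
  ext x
  rw [Finset.mem_filter, Finset.mem_filter, Finset.mem_union, Finset.mem_singleton]
  constructor
  · rintro ⟨h1 | h1, h2⟩
    · exact ⟨h1, h2⟩
    · omega
  · rintro ⟨h1, h2⟩
    exact ⟨Or.inl h1, h2⟩

lemma sdiff_union_singleton (X : Finset ℕ) (c : ℕ) :
    range c \ (X ∪ {c}) = range c \ X := by
  ext x
  simp only [Finset.mem_sdiff, Finset.mem_union, Finset.mem_singleton, Finset.mem_range]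
  constructor
  · rintro ⟨h1, h2⟩
    exact ⟨h1, fun h => h2 (Or.inl h)⟩
  · rintro ⟨h1, h2⟩
    refine ⟨h1, ?_⟩
    rintro (h | h)
    · exact h2 h
    · omega

lemma fwd_bwd {n : ℕ} {AB : Finset ℕ × Finset ℕ} (h : AB ∈ PairF n) :
    fwd n (bwdT AB) (bwdS n AB) = AB := by
  classical
  obtain ⟨hsubA, hsubB, h0A, h0B, hsum⟩ := pair_facts h
  have haA : AB.1.card ≤ AB.1.sum id := card_le_sum_pos _ h0A
  have hbB : AB.2.card ≤ AB.2.sum id := card_le_sum_pos _ h0B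
  have hmemA : ∀ p ∈ AB.1, 1 ≤ p ∧ p ≤ AB.1.sum id := by
    intro p hp
    refine ⟨?_, Finset.single_le_sum (f := id) (fun i _ => Nat.zero_le i) hp⟩
    rcases Nat.eq_zero_or_pos p with rfl | h' ; · exact absurd hp h0A
    exact h'
  have hmemB : ∀ q ∈ AB.2, 1 ≤ q ∧ q ≤ AB.2.sum id := by
    intro q hq
    refine ⟨?_, Finset.single_le_sum (f := id) (fun i _ => Nat.zero_le i) hq⟩
    rcases Nat.eq_zero_or_pos q with rfl | h' ; · exact absurd hq h0B
    exact h'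
  by_cases hcase : AB.2.card ≤ AB.1.card
  · set t := AB.1.card - AB.2.card with ht
    have hbt : bwdT AB = t := by rw [bwdT, if_pos hcase]
    obtain ⟨-, -, -, hcnot, hsd, hfil⟩ := bwdS0_facts (n := n) (t+n+1) AB.1 AB.2 h0A h0B
      (fun p hp => by have := hmemA p hp; omega)
      (fun q hq => by have := hmemB q hq; omega)
      (by omega)
    have hbS : bwdS n AB = bwdS0 (t+n+1) AB.1 AB.2 := by
      rw [bwdS, if_pos hcase, hbt]
    rw [hbt, hbS, fwd, if_neg hcnot]
    have h1 : fwdA (t+n+1) (bwdS0 (t+n+1) AB.1 AB.2) = AB.1 := by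
      rw [fwdA, hsd]
      exact image_sub_image_sub (fun p hp => by have := hmemA p hp; omega)
    have h2 : fwdB (t+n+1) (bwdS0 (t+n+1) AB.1 AB.2) = AB.2 := by
      rw [fwdB, hfil]
      exact image_add_image_sub
    rw [h1, h2]
  · set t := AB.2.card - AB.1.card - 1 with ht
    have hbt : bwdT AB = t := by rw [bwdT, if_neg hcase]
    obtain ⟨-, -, -, hcnot, hsd, hfil⟩ := bwdS0_facts (n := n) (t+n+1) AB.2 AB.1 h0B h0A
      (fun p hp => by have := hmemB p hp; omega)
      (fun q hq => by have := hmemA q hq; omega)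
      (by omega)
    have hbS : bwdS n AB = bwdS0 (t+n+1) AB.2 AB.1 ∪ {t+n+1} := by
      rw [bwdS, if_neg hcase, hbt]
    have hcmem : t+n+1 ∈ bwdS0 (t+n+1) AB.2 AB.1 ∪ {t+n+1} :=
      Finset.mem_union.2 (Or.inr (Finset.mem_singleton_self _))
    rw [hbt, hbS, fwd, if_pos hcmem]
    have h1 : fwdA (t+n+1) (bwdS0 (t+n+1) AB.2 AB.1 ∪ {t+n+1}) = AB.2 := by
      rw [fwdA, sdiff_union_singleton, hsd]
      exact image_sub_image_sub (fun p hp => by have := hmemB p hp; omega)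
    have h2 : fwdB (t+n+1) (bwdS0 (t+n+1) AB.2 AB.1 ∪ {t+n+1}) = AB.1 := by
      rw [fwdB, filter_union_singleton, hfil]
      exact image_add_image_sub
    rw [h1, h2]

lemma sigma_card (n : ℕ) :
    ((range (n+1)).sigma (fun t => Sb n t)).card = (PairF n).card := by
  classical
  refine Finset.card_bij' (fun x _ => fwd n x.1 x.2)
    (fun AB _ => ⟨bwdT AB, bwdS n AB⟩) ?_ ?_ ?_ ?_
  · intro x hx
    rw [Finset.mem_sigma] at hx
    exact fwd_mem hx.2
  · intro AB hAB
    rw [Finset.mem_sigma]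
    exact ⟨(bwd_mem hAB).1, (bwd_mem hAB).2⟩
  · intro x hx
    rw [Finset.mem_sigma] at hx
    obtain ⟨h1, h2⟩ := bwd_fwd hx.2
    rcases x with ⟨t, S⟩
    show (⟨bwdT (fwd n t S), bwdS n (fwd n t S)⟩ : (_ : ℕ) × Finset ℕ) = ⟨t, S⟩
    rw [h1, h2]
  · intro AB hAB
    exact fwd_bwd hAB

lemma sum_eq_pairF (n : ℕ) :
    (∑ p : n.Partition, mex p) = (PairF n).card := by
  rw [sum_mex]
  have hcongr : ∀ t ∈ range (n+1),
      ((univ : Finset n.Partition).filter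
        (fun p => ∀ i ∈ Finset.Icc 1 t, i ∈ p.parts)).card = (Sb n t).card := by
    intro t _
    by_cases h : tri t ≤ n
    · rw [stair_card t (n - tri t) (by omega), card_partition_eq_Sb n t (n - tri t) (by omega)]
    · rw [stair_filter_empty (by omega), Sb_empty (by omega)]
      simp
  rw [Finset.sum_congr rfl hcongr, ← Finset.card_sigma, sigma_card]

-- D2 section
lemma mem_image_fst_true {F : Finset (ℕ × Bool)} {y : ℕ} :
    y ∈ (F.filter (fun x => x.2 = true)).image Prod.fst ↔ (y, true) ∈ F := by
  rw [Finset.mem_image]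
  constructor
  · rintro ⟨⟨x1, x2⟩, hx, rfl⟩
    rw [Finset.mem_filter] at hx
    obtain ⟨h1, h2⟩ := hx
    simp only at h2
    subst h2
    exact h1
  · intro h
    exact ⟨(y, true), Finset.mem_filter.2 ⟨h, rfl⟩, rfl⟩

lemma mem_image_fst_false {F : Finset (ℕ × Bool)} {y : ℕ} :
    y ∈ (F.filter (fun x => x.2 = false)).image Prod.fst ↔ (y, false) ∈ F := by
  rw [Finset.mem_image]
  constructor
  · rintro ⟨⟨x1, x2⟩, hx, rfl⟩
    rw [Finset.mem_filter] at hx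
    obtain ⟨h1, h2⟩ := hx
    simp only at h2
    subst h2
    exact h1
  · intro h
    exact ⟨(y, false), Finset.mem_filter.2 ⟨h, rfl⟩, rfl⟩

lemma fst_sum_split (F : Finset (ℕ × Bool)) :
    ((F.filter (fun x => x.2 = true)).image Prod.fst).sum id
      + ((F.filter (fun x => x.2 = false)).image Prod.fst).sum id
      = F.sum (fun x => x.1) := by
  classical
  have hinj1 : ∀ x ∈ F.filter (fun x => x.2 = true), ∀ y ∈ F.filter (fun x => x.2 = true),
      Prod.fst x = Prod.fst y → x = y := by
    rintro ⟨a1, a2⟩ ha ⟨b1, b2⟩ hb hab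
    rw [Finset.mem_filter] at ha hb
    simp only at ha hb hab
    rw [Prod.mk.injEq]
    exact ⟨hab, ha.2.trans hb.2.symm⟩
  have hinj2 : ∀ x ∈ F.filter (fun x => x.2 = false), ∀ y ∈ F.filter (fun x => x.2 = false),
      Prod.fst x = Prod.fst y → x = y := by
    rintro ⟨a1, a2⟩ ha ⟨b1, b2⟩ hb hab
    rw [Finset.mem_filter] at ha hb
    simp only at ha hb hab
    rw [Prod.mk.injEq]
    exact ⟨hab, ha.2.trans hb.2.symm⟩
  rw [Finset.sum_image hinj1, Finset.sum_image hinj2]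
  have hsplit := Finset.sum_filter_add_sum_filter_not F (fun x => x.2 = true) (fun x => x.1)
  have hneg : F.filter (fun x => ¬ x.2 = true) = F.filter (fun x => x.2 = false) := by
    apply Finset.filter_congr
    intro x _
    cases x.2 <;> simp
  rw [hneg] at hsplit
  exact hsplit

lemma D2_eq_pairF (n : ℕ) : D2 n = (PairF n).card := by
  classical
  rw [D2]
  have e : {s : Multiset (ℕ × Bool) //
      s.Nodup ∧ (∀ x ∈ s, 0 < x.1) ∧ (s.map Prod.fst).sum = n}
      ≃ {AB : Finset ℕ × Finset ℕ // AB ∈ PairF n} :=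
    { toFun := fun s =>
        ⟨((((⟨s.1, s.2.1⟩ : Finset (ℕ × Bool))).filter (fun x => x.2 = true)).image Prod.fst,
          ((⟨s.1, s.2.1⟩ : Finset (ℕ × Bool)).filter (fun x => x.2 = false)).image Prod.fst), by
          obtain ⟨sv, hnd, hpos, hsum⟩ := s
          set F : Finset (ℕ × Bool) := ⟨sv, hnd⟩ with hF
          have hsumF : F.sum (fun x => x.1) = n := hsum
          have hmemn : ∀ x ∈ F, x.1 ≤ n := by
            intro x hx
            have h1 : x.1 ∈ Multiset.map Prod.fst sv := Multiset.mem_map_of_mem _ hx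
            have := Multiset.single_le_sum (fun y hy => Nat.zero_le y) _ h1
            omega
          rw [PairF, Finset.mem_filter]
          refine ⟨Finset.mem_product.2 ⟨Finset.mem_powerset.2 ?_, Finset.mem_powerset.2 ?_⟩,
            ?_, ?_, ?_⟩
          · intro y hy
            rw [mem_image_fst_true] at hy
            have := hmemn _ hy
            rw [Finset.mem_range]
            omega
          · intro y hy
            rw [mem_image_fst_false] at hy
            have := hmemn _ hy
            rw [Finset.mem_range]
            omega
          · show (0:ℕ) ∉ _
            rw [mem_image_fst_true]
            intro hc
            exact absurd (hpos _ hc) (by simp)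
          · show (0:ℕ) ∉ _
            rw [mem_image_fst_false]
            intro hc
            exact absurd (hpos _ hc) (by simp)
          · show _ + _ = n
            rw [fst_sum_split]
            exact hsumF⟩
      invFun := fun AB =>
        ⟨(AB.1.1.image (fun a => (a, true)) ∪ AB.1.2.image (fun b => (b, false))).val, by
          obtain ⟨hsubA, hsubB, h0A, h0B, hsum⟩ := pair_facts AB.2
          refine ⟨Finset.nodup _, ?_, ?_⟩
          · intro x hx
            have hx' : x ∈ AB.1.1.image (fun a => (a, true)) ∪ AB.1.2.image (fun b => (b, false)) :=
              hx
            rw [Finset.mem_union, Finset.mem_image, Finset.mem_image] at hx'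
            rcases hx' with ⟨a, ha, rfl⟩ | ⟨b, hb, rfl⟩
            · show 0 < a
              rcases Nat.eq_zero_or_pos a with rfl | h'
              · exact absurd ha h0A
              · exact h'
            · show 0 < b
              rcases Nat.eq_zero_or_pos b with rfl | h'
              · exact absurd hb h0B
              · exact h'
          · have hdisj : Disjoint (AB.1.1.image (fun a => (a, true)))
                (AB.1.2.image (fun b => (b, false))) := by
              rw [Finset.disjoint_left]
              rintro ⟨y, bb⟩ hy hy'
              rw [Finset.mem_image] at hy hy'
              obtain ⟨a, _, ha2⟩ := hy
              obtain ⟨b, _, hb2⟩ := hy'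
              rw [Prod.mk.injEq] at ha2 hb2
              rw [← ha2.2] at hb2
              exact Bool.noConfusion hb2.2
            show ((AB.1.1.image (fun a => (a, true)) ∪ AB.1.2.image
              (fun b => (b, false))).sum (fun x => x.1)) = n
            rw [Finset.sum_union hdisj]
            rw [Finset.sum_image (by rintro a _ b _ h; rw [Prod.mk.injEq] at h; exact h.1),
              Finset.sum_image (by rintro a _ b _ h; rw [Prod.mk.injEq] at h; exact h.1)]
            exact hsum⟩
      left_inv := by
        rintro ⟨sv, hnd, hpos, hsum⟩
        apply Subtype.ext
        show ((_ ∪ _ : Finset (ℕ × Bool))).val = sv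
        have hfeq : ((((⟨sv, hnd⟩ : Finset (ℕ × Bool))).filter
              (fun x => x.2 = true)).image Prod.fst).image (fun a => (a, true)) ∪
            (((⟨sv, hnd⟩ : Finset (ℕ × Bool)).filter
              (fun x => x.2 = false)).image Prod.fst).image (fun b => (b, false))
            = (⟨sv, hnd⟩ : Finset (ℕ × Bool)) := by
          ext ⟨y, bb⟩
          rw [Finset.mem_union, Finset.mem_image, Finset.mem_image]
          cases bb
          · constructor
            · rintro (⟨a, ha, hae⟩ | ⟨b, hb, hbe⟩)
              · rw [Prod.mk.injEq] at hae
                exact absurd hae.2 (by simp)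
              · rw [Prod.mk.injEq] at hbe
                rw [mem_image_fst_false] at hb
                rwa [← hbe.1]
            · intro hyb
              right
              exact ⟨y, mem_image_fst_false.2 hyb, rfl⟩
          · constructor
            · rintro (⟨a, ha, hae⟩ | ⟨b, hb, hbe⟩)
              · rw [Prod.mk.injEq] at hae
                rw [mem_image_fst_true] at ha
                rwa [← hae.1]
              · rw [Prod.mk.injEq] at hbe
                exact absurd hbe.2 (by simp)
            · intro hyb
              left
              exact ⟨y, mem_image_fst_true.2 hyb, rfl⟩
        rw [hfeq]
      right_inv := by
        rintro ⟨⟨A, B⟩, hAB⟩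
        apply Subtype.ext
        obtain ⟨hsubA, hsubB, h0A, h0B, hsum⟩ := pair_facts hAB
        have hval : ∀ (F : Finset (ℕ × Bool)), (⟨F.val, F.nodup⟩ : Finset (ℕ × Bool)) = F := by
          intro F; cases F; rfl
        show (_, _) = (A, B)
        rw [Prod.mk.injEq]
        constructor
        · ext y
          rw [mem_image_fst_true]
          rw [show (⟨(A.image (fun a => (a, true)) ∪ B.image (fun b => (b, false))).val, _⟩ :
            Finset (ℕ × Bool)) = A.image (fun a => (a, true)) ∪ B.image (fun b => (b, false))
            from hval _]
          rw [Finset.mem_union, Finset.mem_image, Finset.mem_image]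
          constructor
          · rintro (⟨a, ha, hae⟩ | ⟨b, hb, hbe⟩)
            · rw [Prod.mk.injEq] at hae
              rwa [← hae.1]
            · rw [Prod.mk.injEq] at hbe
              exact absurd hbe.2 (by simp)
          · intro hy
            exact Or.inl ⟨y, hy, rfl⟩
        · ext y
          rw [mem_image_fst_false]
          rw [show (⟨(A.image (fun a => (a, true)) ∪ B.image (fun b => (b, false))).val, _⟩ :
            Finset (ℕ × Bool)) = A.image (fun a => (a, true)) ∪ B.image (fun b => (b, false))
            from hval _]
          rw [Finset.mem_union, Finset.mem_image, Finset.mem_image]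
          constructor
          · rintro (⟨a, ha, hae⟩ | ⟨b, hb, hbe⟩)
            · rw [Prod.mk.injEq] at hae
              exact absurd hae.2 (by simp)
            · rw [Prod.mk.injEq] at hbe
              rwa [← hbe.1]
          · intro hy
            exact Or.inr ⟨y, hy, rfl⟩ }
  rw [Nat.card_congr e, Nat.card_eq_fintype_card, Fintype.card_coe]

end AN

/-- Andrews--Newman: the sum of mex over all partitions of n equals the
number of partitions of n into distinct parts with two colors. -/
theorem sigma_mex_eq_D2 (n : ℕ) :
    (∑ p : n.Partition, mex p) = D2 n := by
  rw [AN.sum_eq_pairF, AN.D2_eq_pairF]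
end

section
/- For any positive integer n, the number of partitions of n with no parts greater than their mex equals the number of partitions of n into distinct parts. -/
open Nat

namespace NoPartsGtMexAux

open Multiset

/-- number of parts of `p` that are at least `j` -/
def cc (j : ℕ) {n : ℕ} (p : n.Partition) : ℕ := p.parts.countP (j ≤ ·)

lemma countP_mono {s : Multiset ℕ} {P Q : ℕ → Prop} [DecidablePred P] [DecidablePred Q]
    (h : ∀ a, P a → Q a) : s.countP P ≤ s.countP Q := by
  induction s using Multiset.induction_on with
  | empty => simp
  | cons a s ih =>
    rw [countP_cons, countP_cons]
    by_cases hP : P a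
    · simp [hP, h a hP]; omega
    · split_ifs <;> omega

lemma cc_anti {n : ℕ} (p : n.Partition) {j k : ℕ} (h : j ≤ k) : cc k p ≤ cc j p :=
  countP_mono fun a ha => le_trans h ha

lemma part_le_n {n : ℕ} (p : n.Partition) {a : ℕ} (ha : a ∈ p.parts) : a ≤ n :=
  p.parts_sum ▸ Multiset.le_sum_of_mem ha

lemma cc_pos_bound {n : ℕ} (p : n.Partition) {j : ℕ} (h : 0 < cc j p) : j ≤ n := by
  obtain ⟨a, ha, hja⟩ := countP_pos.1 h
  exact hja.trans (part_le_n p ha)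

lemma count_add_cc {n : ℕ} (p : n.Partition) (j : ℕ) :
    p.parts.count j + cc (j + 1) p = cc j p := by
  show p.parts.count j + p.parts.countP (j + 1 ≤ ·) = p.parts.countP (j ≤ ·)
  induction p.parts using Multiset.induction_on with
  | empty => simp
  | cons a s ih =>
    rw [count_cons, countP_cons, countP_cons]
    split_ifs <;> omega

lemma mem_iff_cc {n : ℕ} (p : n.Partition) (j : ℕ) :
    j ∈ p.parts ↔ cc (j + 1) p < cc j p := by
  rw [← Multiset.count_pos]
  have := count_add_cc p j
  omega

lemma sum_indicator (N a : ℕ) :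
    ((Multiset.range N).map fun j => if j + 1 ≤ a then 1 else 0).sum = min a N := by
  induction N with
  | zero => simp
  | succ N ih =>
    rw [Multiset.range_succ, Multiset.map_cons, Multiset.sum_cons, ih]
    split_ifs <;> omega

/-- The conjugate partition. -/
def conj {n : ℕ} (p : n.Partition) : n.Partition :=
  Nat.Partition.ofSums n ((Multiset.range n).map fun j => cc (j + 1) p) (by
    have key : ∀ s : Multiset ℕ, (∀ a ∈ s, a ≤ n) →
        ((Multiset.range n).map fun j => s.countP (j + 1 ≤ ·)).sum = s.sum := by
      intro s
      induction s using Multiset.induction_on with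
      | empty => intro _; simp
      | cons a s ih =>
        intro h
        have ha : a ≤ n := h a (mem_cons_self _ _)
        simp only [countP_cons]
        rw [Multiset.sum_map_add, ih (fun b hb => h b (mem_cons_of_mem hb)), sum_indicator,
          Multiset.sum_cons]
        omega
    have hk := key p.parts fun a ha => part_le_n p ha
    rw [p.parts_sum] at hk
    simpa [cc] using hk)

lemma cc_conj {n : ℕ} (p : n.Partition) {j : ℕ} (hj : 1 ≤ j) :
    cc j (conj p) = (Multiset.range n).countP fun i => j ≤ cc (i + 1) p := by
  show ((((Multiset.range n).map fun i => cc (i + 1) p).filter (· ≠ 0)).countP (j ≤ ·)) = _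
  rw [countP_filter, countP_map, countP_eq_card_filter]
  congr 1
  apply Multiset.filter_congr
  intro i _
  constructor
  · exact fun h => h.1
  · intro h; exact ⟨h, by omega⟩

lemma cc_conj_iff {n : ℕ} (p : n.Partition) {i j : ℕ} (hi : 1 ≤ i) (hj : 1 ≤ j) :
    i ≤ cc j (conj p) ↔ j ≤ cc i p := by
  rw [cc_conj p hj]
  have hcard : (Multiset.range n).countP (fun i' => j ≤ cc (i' + 1) p)
      = ((Finset.range n).filter fun i' => j ≤ cc (i' + 1) p).card := by
    rw [Finset.card, Finset.filter_val, Finset.range_val, countP_eq_card_filter]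
  rw [hcard]
  constructor
  · intro h
    by_contra hcon
    push_neg at hcon
    have hsub : ((Finset.range n).filter fun i' => j ≤ cc (i' + 1) p)
        ⊆ Finset.range (i - 1) := by
      intro i' hi'
      rw [Finset.mem_filter] at hi'
      rw [Finset.mem_range]
      by_contra hge
      push_neg at hge
      have : cc (i' + 1) p ≤ cc i p := cc_anti p (by omega)
      omega
    have := Finset.card_le_card hsub
    rw [Finset.card_range] at this
    omega
  · intro h
    have hsub : Finset.range i ⊆ (Finset.range n).filter fun i' => j ≤ cc (i' + 1) p := by
      intro i' hi'
      rw [Finset.mem_range] at hi'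
      have hin : i ≤ n := cc_pos_bound p (by omega)
      rw [Finset.mem_filter, Finset.mem_range]
      refine ⟨by omega, le_trans h (cc_anti p (by omega))⟩
    have := Finset.card_le_card hsub
    rwa [Finset.card_range] at this

lemma cc_conj_conj {n : ℕ} (p : n.Partition) {j : ℕ} (hj : 1 ≤ j) :
    cc j (conj (conj p)) = cc j p := by
  have h : ∀ i, 1 ≤ i → (i ≤ cc j (conj (conj p)) ↔ i ≤ cc j p) := fun i hi =>
    (cc_conj_iff (conj p) hi hj).trans (cc_conj_iff p hj hi)
  apply le_antisymm
  · rcases Nat.eq_zero_or_pos (cc j (conj (conj p))) with h0 | h0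
    · omega
    · exact (h _ h0).1 le_rfl
  · rcases Nat.eq_zero_or_pos (cc j p) with h0 | h0
    · omega
    · exact (h _ h0).2 le_rfl

lemma conj_conj {n : ℕ} (p : n.Partition) : conj (conj p) = p := by
  ext1
  ext k
  rcases Nat.eq_zero_or_pos k with rfl | hk
  · rw [Multiset.count_eq_zero_of_notMem, Multiset.count_eq_zero_of_notMem]
    · exact fun h => absurd (p.parts_pos h) (lt_irrefl 0)
    · exact fun h => absurd ((conj (conj p)).parts_pos h) (lt_irrefl 0)
  · have h1 := count_add_cc (conj (conj p)) k
    have h2 := count_add_cc p k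
    have h3 := cc_conj_conj p (j := k) hk
    have h4 := cc_conj_conj p (j := k + 1) (by omega)
    omega

lemma countP_split (g : ℕ → ℕ) (k : ℕ) (s : Multiset ℕ) :
    s.countP (fun i => g i = k) + s.countP (fun i => k + 1 ≤ g i)
      = s.countP (fun i => k ≤ g i) := by
  induction s using Multiset.induction_on with
  | empty => simp
  | cons a s ih =>
    simp only [countP_cons]
    split_ifs <;> omega

lemma count_conj {n : ℕ} (p : n.Partition) {k : ℕ} (hk : 1 ≤ k) :
    (conj p).parts.count k = (Multiset.range n).countP fun i => cc (i + 1) p = k := by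
  have h1 := count_add_cc (conj p) k
  have h2 := cc_conj p (j := k) hk
  have h3 := cc_conj p (j := k + 1) (by omega)
  have h4 := countP_split (fun i => cc (i + 1) p) k (Multiset.range n)
  omega

/-- gap-free property in terms of `cc` -/
def G {n : ℕ} (p : n.Partition) : Prop :=
  ∀ j, 1 ≤ j → 0 < cc (j + 1) p → cc (j + 1) p < cc j p

lemma nodup_conj_iff {n : ℕ} (p : n.Partition) : (conj p).parts.Nodup ↔ G p := by
  rw [Multiset.nodup_iff_count_le_one]
  have hcard : ∀ k : ℕ, (Multiset.range n).countP (fun i => cc (i + 1) p = k)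
      = ((Finset.range n).filter fun i => cc (i + 1) p = k).card := by
    intro k
    rw [Finset.card, Finset.filter_val, Finset.range_val, countP_eq_card_filter]
  constructor
  · intro h j hj hpos
    by_contra hcon
    push_neg at hcon
    have heq : cc (j + 1) p = cc j p := le_antisymm (cc_anti p (by omega)) hcon
    set k := cc (j + 1) p with hkdef
    have hjn : j + 1 ≤ n := cc_pos_bound p hpos
    have hsub : ({j - 1, j} : Finset ℕ) ⊆ (Finset.range n).filter fun i => cc (i + 1) p = k := by
      intro i hi
      rw [Finset.mem_insert, Finset.mem_singleton] at hi
      rw [Finset.mem_filter, Finset.mem_range]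
      rcases hi with rfl | rfl
      · constructor
        · omega
        · rw [show j - 1 + 1 = j by omega]; omega
      · exact ⟨by omega, rfl⟩
    have hc2 : ({j - 1, j} : Finset ℕ).card = 2 := by
      rw [Finset.card_insert_of_notMem (by simp; omega), Finset.card_singleton]
    have := Finset.card_le_card hsub
    have hk := h k
    rw [count_conj p (by omega), hcard k] at hk
    omega
  · intro h k
    rcases Nat.eq_zero_or_pos k with rfl | hk
    · rw [Multiset.count_eq_zero_of_notMem
        (fun hmem => absurd ((conj p).parts_pos hmem) (lt_irrefl 0))]
      omega
    · rw [count_conj p hk, hcard k]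
      rw [Finset.card_le_one]
      intro a ha b hb
      rw [Finset.mem_filter, Finset.mem_range] at ha hb
      by_contra hne
      rcases Nat.lt_or_ge a b with hab | hab
      · have h1 : 0 < cc (a + 1 + 1) p := by
          have : cc (b + 1) p ≤ cc (a + 1 + 1) p := cc_anti p (by omega)
          omega
        have := h (a + 1) (by omega) h1
        have : cc (b + 1) p ≤ cc (a + 1 + 1) p := cc_anti p (by omega)
        omega
      · have hba : b < a := by omega
        have h1 : 0 < cc (b + 1 + 1) p := by
          have : cc (a + 1) p ≤ cc (b + 1 + 1) p := cc_anti p (by omega)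
          omega
        have := h (b + 1) (by omega) h1
        have : cc (a + 1) p ≤ cc (b + 1 + 1) p := cc_anti p (by omega)
        omega

lemma mex_mem {n : ℕ} (p : n.Partition) : 0 < mex p ∧ mex p ∉ p.parts := by
  have hne : {k : ℕ | 0 < k ∧ k ∉ p.parts}.Nonempty := by
    refine ⟨n + 1, Nat.succ_pos n, fun h => ?_⟩
    have := part_le_n p h
    omega
  exact Nat.sInf_mem hne

lemma P_iff {n : ℕ} (p : n.Partition) :
    (p.parts.filter (fun x => mex p < x)).card = 0 ↔ G p := by
  rw [Multiset.card_eq_zero, Multiset.filter_eq_nil]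
  have hbound : ∀ a ∈ p.parts, ¬ mex p < a ↔ a ≤ mex p := by
    intro a _; omega
  constructor
  · intro h j hj hpos
    rw [← mem_iff_cc]
    obtain ⟨a, ha, hja⟩ := countP_pos.1 hpos
    have haux := h a ha
    by_contra hnot
    have : j < mex p := by
      have := haux; omega
    have := Nat.notMem_of_lt_sInf (show j < sInf {k : ℕ | 0 < k ∧ k ∉ p.parts} from this)
    simp only [Set.mem_setOf_eq, not_and, not_not] at this
    exact hnot (this (by omega))
  · intro h a ha
    intro hlt
    obtain ⟨hmpos, hmnot⟩ := mex_mem p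
    have hpos : 0 < cc (mex p + 1) p := countP_pos.2 ⟨a, ha, by omega⟩
    have := h (mex p) hmpos hpos
    rw [← mem_iff_cc] at this
    exact hmnot this

end NoPartsGtMexAux

open NoPartsGtMexAux in
/-- The number of partitions of n with no parts greater than their mex equals
the number of partitions of n into distinct parts. -/
theorem no_parts_gt_mex_eq_distinct (n : ℕ) (hn : 0 < n) :
    Nat.card {p : n.Partition // (p.parts.filter (fun x => mex p < x)).card = 0} =
      Nat.card {p : n.Partition // p.parts.Nodup} := by
  apply Nat.card_congr
  refine ⟨fun p => ⟨conj p.1, (nodup_conj_iff p.1).2 ((P_iff p.1).1 p.2)⟩,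
    fun q => ⟨conj q.1, (P_iff (conj q.1)).2 ((nodup_conj_iff (conj q.1)).1
      (by rw [conj_conj]; exact q.2))⟩, ?_, ?_⟩
  · intro p; exact Subtype.ext (conj_conj p.1)
  · intro q; exact Subtype.ext (conj_conj q.1)
end

section
/- The total number of even parts counted over all partitions of n equals the total number of parts greater than the mex counted over all partitions of n. -/
open Nat

namespace MexAux

open Finset

noncomputable def P (m : ℕ) : ℕ := Fintype.card (Nat.Partition m)

lemma part_le {n : ℕ} (p : n.Partition) {x : ℕ} (hx : x ∈ p.parts) : x ≤ n := by
  have h1 := p.parts_sum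
  have h2 := Multiset.single_le_sum (fun y _ => Nat.zero_le y) x hx
  omega

lemma card_parts_le {n : ℕ} (p : n.Partition) : Multiset.card p.parts ≤ n := by
  have h1 := p.parts_sum
  have h2 := Multiset.card_nsmul_le_sum (s := p.parts) (a := 1) (fun x hx => p.parts_pos hx)
  simpa [h1] using h2

lemma count_le {n : ℕ} (p : n.Partition) (x : ℕ) : p.parts.count x ≤ n :=
  le_trans (Multiset.count_le_card x p.parts) (card_parts_le p)

lemma msum_le {s t : Multiset ℕ} (h : s ≤ t) : s.sum ≤ t.sum := by
  obtain ⟨u, rfl⟩ := Multiset.le_iff_exists_add.1 h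
  simp

lemma card_eq_sum_count {N : ℕ} (s : Multiset ℕ) (h : ∀ a ∈ s, a < N) :
    Multiset.card s = ∑ x ∈ range N, s.count x := by
  rw [← Multiset.toFinset_sum_count_eq s]
  refine Finset.sum_subset (fun a ha => mem_range.2 (h a (Multiset.mem_toFinset.1 ha)))
    (fun a _ ha => ?_)
  exact Multiset.count_eq_zero.2 (fun h' => ha (Multiset.mem_toFinset.2 h'))

lemma filter_card_eq {n : ℕ} (p : n.Partition) (q : ℕ → Prop) [DecidablePred q] :
    (p.parts.filter q).card
      = ∑ x ∈ range (n+1), ∑ j ∈ range n,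
          if j < p.parts.count x ∧ q x then 1 else 0 := by
  have h1 : ∀ a ∈ p.parts.filter q, a < n + 1 := fun a ha =>
    Nat.lt_succ_of_le (part_le p (Multiset.mem_of_mem_filter ha))
  rw [card_eq_sum_count _ h1]
  refine Finset.sum_congr rfl fun x hx => ?_
  rw [Multiset.count_filter]
  by_cases hq : q x
  · simp only [hq, if_true, and_true]
    rw [← Finset.card_filter]
    have hc := count_le p x
    have h2 : (range n).filter (fun j => j < p.parts.count x) = range (p.parts.count x) := by
      ext j; simp only [mem_filter, mem_range]; omega
    rw [h2, card_range]
  · simp [hq]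

lemma total_eq {n : ℕ} (q : n.Partition → ℕ → Prop) [∀ p, DecidablePred (q p)] :
    ∑ p : n.Partition, (p.parts.filter (q p)).card
      = ∑ x ∈ range (n+1), ∑ j ∈ range n,
          (Finset.univ.filter (fun p : n.Partition => j < p.parts.count x ∧ q p x)).card := by
  simp only [filter_card_eq, Finset.card_filter]
  rw [Finset.sum_comm]
  exact Finset.sum_congr rfl fun x _ => Finset.sum_comm

/-- remove a sub-multiset from a partition -/
def subPart {n : ℕ} (p : n.Partition) (M : Multiset ℕ) (h : M ≤ p.parts) :
    (n - M.sum).Partition where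
  parts := p.parts - M
  parts_pos := fun {i} hi =>
    p.parts_pos (Multiset.mem_of_le (Multiset.sub_le_self _ _) hi)
  parts_sum := by
    have h2 := congrArg Multiset.sum (tsub_add_cancel_of_le h)
    rw [Multiset.sum_add, p.parts_sum] at h2
    omega

/-- add a multiset of positive parts to a partition -/
def addPart {n m : ℕ} (q : m.Partition) (M : Multiset ℕ) (hM : ∀ t ∈ M, 0 < t)
    (h : m + M.sum = n) : n.Partition where
  parts := q.parts + M
  parts_pos := fun {i} hi => by
    rcases Multiset.mem_add.1 hi with h' | h'
    · exact q.parts_pos h'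
    · exact hM i h'
  parts_sum := by rw [Multiset.sum_add, q.parts_sum, h]

lemma card_cond (n : ℕ) (M : Multiset ℕ) (hM : ∀ t ∈ M, 0 < t) :
    (Finset.univ.filter (fun p : n.Partition => M ≤ p.parts)).card
      = if M.sum ≤ n then P (n - M.sum) else 0 := by
  split_ifs with h
  · show _ = (Finset.univ : Finset ((n - M.sum).Partition)).card
    refine Finset.card_bij' (fun p hp => subPart p M (Finset.mem_filter.1 hp).2)
      (fun q _ => addPart q M hM (by omega)) (fun p hp => Finset.mem_univ _)
      (fun q hq => ?_) (fun p hp => ?_) (fun q hq => ?_)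
    · refine Finset.mem_filter.2 ⟨Finset.mem_univ _, ?_⟩
      show M ≤ q.parts + M
      exact Multiset.le_add_left M q.parts
    · ext1
      show p.parts - M + M = p.parts
      exact tsub_add_cancel_of_le (Finset.mem_filter.1 hp).2
    · ext1
      show q.parts + M - M = q.parts
      exact add_tsub_cancel_right _ _
  · rw [Finset.card_eq_zero, Finset.filter_eq_empty_iff]
    intro p _
    intro hle
    have h3 := msum_le hle
    rw [p.parts_sum] at h3
    omega

lemma cnt_eq (n x j : ℕ) (hx : 0 < x) :
    (Finset.univ.filter (fun p : n.Partition => j < p.parts.count x)).card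
      = if (j+1)*x ≤ n then P (n - (j+1)*x) else 0 := by
  have h := card_cond n (Multiset.replicate (j+1) x)
    (fun t ht => by rw [Multiset.eq_of_mem_replicate ht]; exact hx)
  rw [Multiset.sum_replicate, smul_eq_mul] at h
  rw [← h]
  refine congrArg Finset.card (Finset.filter_congr fun p _ => ?_)
  rw [← Multiset.le_count_iff_replicate_le]
  exact Iff.rfl

def S (x : ℕ) : ℕ := ∑ t ∈ Finset.Ico 1 x, t

lemma S_alt (x : ℕ) : S x = ∑ i ∈ range x, i := by
  rcases Nat.eq_zero_or_pos x with rfl | hx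
  · simp [S]
  · rw [range_eq_Ico, Finset.sum_eq_sum_Ico_succ_bot hx]
    simp [S]

lemma two_mul_S (x : ℕ) : 2 * S x = x * (x - 1) := by
  rw [S_alt, ← Finset.sum_range_id_mul_two x, mul_comm]

lemma S_even (b : ℕ) : S (2*b) = b * (2*b - 1) := by
  have h := two_mul_S (2*b)
  have h2 : (2*b) * (2*b - 1) = 2 * (b * (2*b - 1)) := by ring
  rw [h2] at h
  exact Nat.eq_of_mul_eq_mul_left (by norm_num) h

lemma S_odd (a : ℕ) : S (2*a+1) = (2*a+1) * a := by
  have h := two_mul_S (2*a+1)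
  have h2 : (2*a+1) * (2*a+1-1) = 2 * ((2*a+1) * a) := by
    have h3 : 2*a+1-1 = 2*a := by omega
    rw [h3]; ring
  rw [h2] at h
  exact Nat.eq_of_mul_eq_mul_left (by norm_num) h

def stairM (x j : ℕ) : Multiset ℕ := Multiset.replicate (j+1) x + (Finset.Ico 1 x).val

lemma count_stairM (x j a : ℕ) :
    (stairM x j).count a
      = (if a = x then j+1 else 0) + (if a ∈ Finset.Ico 1 x then 1 else 0) := by
  rw [stairM, Multiset.count_add, Multiset.count_replicate,
    Multiset.count_eq_of_nodup (Finset.Ico 1 x).nodup]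
  simp only [Finset.mem_val]
  congr 1
  simp [eq_comm]

lemma stairM_pos (x j : ℕ) (hx : 0 < x) : ∀ t ∈ stairM x j, 0 < t := by
  intro t ht
  rcases Multiset.mem_add.1 ht with h | h
  · rw [Multiset.eq_of_mem_replicate h]; exact hx
  · have h2 : t ∈ Finset.Ico 1 x := h
    exact (Finset.mem_Ico.1 h2).1

lemma stairM_sum (x j : ℕ) : (stairM x j).sum = (j+1)*x + S x := by
  rw [stairM, Multiset.sum_add, Multiset.sum_replicate, smul_eq_mul]
  congr 1
  rw [S, Finset.sum]
  simp

lemma stairM_le_iff {n : ℕ} (p : n.Partition) (x j : ℕ) :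
    stairM x j ≤ p.parts
      ↔ (j < p.parts.count x ∧ ∀ t ∈ Finset.Ico 1 x, t ∈ p.parts) := by
  rw [Multiset.le_iff_count]
  constructor
  · intro h
    constructor
    · have hx := h x
      rw [count_stairM] at hx
      have hni : x ∉ Finset.Ico 1 x := by simp
      simp only [if_pos rfl, if_neg hni, if_true] at hx
      omega
    · intro t ht
      have hx := h t
      rw [count_stairM, if_pos ht] at hx
      have h2 : 0 < p.parts.count t := by omega
      exact Multiset.count_pos.1 h2
  · rintro ⟨h1, h2⟩ a
    rw [count_stairM]
    by_cases hax : a = x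
    · subst hax
      have hni : a ∉ Finset.Ico 1 a := by simp
      simp only [if_pos rfl, if_neg hni, if_true]
      omega
    · rw [if_neg hax]
      by_cases hai : a ∈ Finset.Ico 1 x
      · simp only [if_pos hai, zero_add]
        exact Multiset.one_le_count_iff_mem.2 (h2 a hai)
      · simp [hai]

def stairCond {n : ℕ} (x j : ℕ) (p : n.Partition) : Prop :=
  j < p.parts.count x ∧ ∀ t ∈ Finset.Ico 1 x, t ∈ p.parts

instance {n : ℕ} (x j : ℕ) : DecidablePred (stairCond (n := n) x j) := by
  unfold stairCond; infer_instance

lemma cntS_eq (n x j : ℕ) (hx : 0 < x) :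
    (Finset.univ.filter (stairCond (n := n) x j)).card
      = if (j+1)*x + S x ≤ n then P (n - ((j+1)*x + S x)) else 0 := by
  have h := card_cond n (stairM x j) (stairM_pos x j hx)
  rw [stairM_sum] at h
  rw [← h]
  exact congrArg Finset.card
    (Finset.filter_congr fun p _ => Iff.symm (stairM_le_iff p x j))

lemma mex_lt_iff {n : ℕ} (p : n.Partition) (x : ℕ) :
    mex p < x ↔ ¬ (∀ t ∈ Finset.Ico 1 x, t ∈ p.parts) := by
  have hne : {k : ℕ | 0 < k ∧ k ∉ p.parts}.Nonempty :=
    ⟨n+1, Nat.succ_pos n, fun h => by have := part_le p h; omega⟩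
  constructor
  · intro h hall
    have hmem := Nat.sInf_mem hne
    exact hmem.2 (hall _ (Finset.mem_Ico.2 ⟨hmem.1, h⟩))
  · intro h
    push_neg at h
    obtain ⟨t, ht, htn⟩ := h
    rw [Finset.mem_Ico] at ht
    exact lt_of_le_of_lt (Nat.sInf_le ⟨ht.1, htn⟩) ht.2

lemma even_case' (b j : ℕ) (hb : 1 ≤ b) :
    ((b-1)+1) * (2*b + 2*j + 1) = (j+1)*(2*b) + S (2*b) := by
  rw [S_even b]
  obtain ⟨c, rfl⟩ : ∃ c, b = c + 1 := ⟨b-1, by omega⟩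
  have h1 : (c+1) - 1 + 1 = c + 1 := by omega
  have h2 : 2*(c+1) - 1 = 2*c + 1 := by omega
  rw [h1, h2]; ring

lemma odd_case (a j : ℕ) : (j + a + 1) * (2*a+1) = (j+1)*(2*a+1) + S (2*a+1) := by
  rw [S_odd]; ring

def phi (q : ℕ × ℕ) : ℕ × ℕ :=
  if Even q.1 then (q.1 + 2*q.2 + 1, q.1/2 - 1) else (q.1, q.2 + (q.1 - 1)/2)

def psi (q : ℕ × ℕ) : ℕ × ℕ :=
  if q.1 < 2*(q.2+1) then (q.1, q.2 - (q.1 - 1)/2) else (2*(q.2+1), (q.1 - 2*q.2 - 3)/2)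

lemma phi_spec (x j : ℕ) (hx : 1 ≤ x) :
    ((phi (x,j)).2 + 1) * (phi (x,j)).1 = (j+1)*x + S x
    ∧ ¬ Even (phi (x,j)).1 ∧ 1 ≤ (phi (x,j)).1 := by
  by_cases hev : Even x
  · have hx2 : x % 2 = 0 := Nat.even_iff.1 hev
    obtain ⟨b, rfl⟩ : ∃ b, x = 2*b := ⟨x/2, by omega⟩
    have hb : 1 ≤ b := by omega
    have hphi : phi (2*b, j) = (2*b + 2*j + 1, b - 1) := by
      rw [phi, if_pos hev]
      have h4 : 2*b/2 = b := by omega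
      simp [h4]
    rw [hphi]
    refine ⟨even_case' b j hb, ?_, by omega⟩
    rw [Nat.even_iff]; omega
  · have hx2 : x % 2 = 1 := by
      have := Nat.even_iff.not.1 hev
      omega
    obtain ⟨a, rfl⟩ : ∃ a, x = 2*a+1 := ⟨x/2, by omega⟩
    have hphi : phi (2*a+1, j) = (2*a+1, j + a) := by
      rw [phi, if_neg hev]
      have h4 : (2*a+1-1)/2 = a := by omega
      simp [h4]
    rw [hphi]
    exact ⟨odd_case a j, hev, hx⟩

lemma psi_spec (y i : ℕ) (hy : ¬ Even y) :
    ((psi (y,i)).2 + 1) * (psi (y,i)).1 + S (psi (y,i)).1 = (i+1)*y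
    ∧ 1 ≤ (psi (y,i)).1 := by
  have hy2 : y % 2 = 1 := by
    have := Nat.even_iff.not.1 hy
    omega
  obtain ⟨c, rfl⟩ : ∃ c, y = 2*c+1 := ⟨y/2, by omega⟩
  by_cases hlt : 2*c+1 < 2*(i+1)
  · have hci : c ≤ i := by omega
    have hpsi : psi (2*c+1, i) = (2*c+1, i - c) := by
      rw [psi, if_pos hlt]
      have h4 : (2*c+1-1)/2 = c := by omega
      simp [h4]
    rw [hpsi]
    refine ⟨?_, by omega⟩
    obtain ⟨d, rfl⟩ : ∃ d, i = c + d := ⟨i - c, by omega⟩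
    have h1 : c + d - c = d := by omega
    rw [h1, ← odd_case c d]
    ring
  · have hci : i + 1 ≤ c := by omega
    obtain ⟨e, rfl⟩ : ∃ e, c = i + 1 + e := ⟨c - i - 1, by omega⟩
    have hpsi : psi (2*(i+1+e)+1, i) = (2*(i+1), e) := by
      rw [psi, if_neg hlt]
      have h1 : 2*(i+1+e)+1 - 2*i - 3 = 2*e := by omega
      have h2 : 2*e/2 = e := by omega
      simp [h1, h2]
    rw [hpsi]
    refine ⟨?_, by omega⟩
    rw [← even_case' (i+1) e (by omega)]
    have h3 : (i+1) - 1 + 1 = i + 1 := by omega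
    rw [h3]
    ring_nf

lemma psi_phi (x j : ℕ) (hx : 1 ≤ x) : psi (phi (x,j)) = (x,j) := by
  by_cases hev : Even x
  · have hx2 : x % 2 = 0 := Nat.even_iff.1 hev
    obtain ⟨b, rfl⟩ : ∃ b, x = 2*b := ⟨x/2, by omega⟩
    have hphi : phi (2*b, j) = (2*b + 2*j + 1, b - 1) := by
      rw [phi, if_pos hev]
      have h4 : 2*b/2 = b := by omega
      simp [h4]
    rw [hphi, psi, if_neg (by omega : ¬ (2*b + 2*j + 1 < 2*((b-1)+1)))]
    have h2 : (2*b + 2*j + 1 - 2*(b-1) - 3)/2 = j := by omega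
    rw [h2]
    ext <;> simp <;> omega
  · have hx2 : x % 2 = 1 := by
      have := Nat.even_iff.not.1 hev
      omega
    obtain ⟨a, rfl⟩ : ∃ a, x = 2*a+1 := ⟨x/2, by omega⟩
    have hphi : phi (2*a+1, j) = (2*a+1, j + a) := by
      rw [phi, if_neg hev]
      have h4 : (2*a+1-1)/2 = a := by omega
      simp [h4]
    rw [hphi, psi, if_pos (by omega : 2*a+1 < 2*(j+a+1))]
    have h1 : (2*a+1-1)/2 = a := by omega
    rw [h1]
    ext <;> simp

lemma phi_psi (y i : ℕ) (hy : ¬ Even y) : phi (psi (y,i)) = (y,i) := by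
  have hy2 : y % 2 = 1 := by
    have := Nat.even_iff.not.1 hy
    omega
  obtain ⟨c, rfl⟩ : ∃ c, y = 2*c+1 := ⟨y/2, by omega⟩
  by_cases hlt : 2*c+1 < 2*(i+1)
  · have hpsi : psi (2*c+1, i) = (2*c+1, i - c) := by
      rw [psi, if_pos hlt]
      have h4 : (2*c+1-1)/2 = c := by omega
      simp [h4]
    rw [hpsi, phi, if_neg hy]
    have h1 : (2*c+1-1)/2 = c := by omega
    rw [h1]
    ext <;> simp <;> omega
  · obtain ⟨e, rfl⟩ : ∃ e, c = i + 1 + e := ⟨c - i - 1, by omega⟩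
    have hpsi : psi (2*(i+1+e)+1, i) = (2*(i+1), e) := by
      rw [psi, if_neg hlt]
      have h1 : 2*(i+1+e)+1 - 2*i - 3 = 2*e := by omega
      have h2 : 2*e/2 = e := by omega
      simp [h1, h2]
    rw [hpsi]
    have hev2 : Even (2*(i+1)) := ⟨i+1, by ring⟩
    simp only [phi]
    rw [if_pos hev2]
    have h1 : 2*(i+1)/2 = i+1 := by omega
    rw [h1]
    ext <;> simp <;> omega

lemma key_arith (n : ℕ) :
    ∑ x ∈ Finset.Ico 1 (n+1), ∑ j ∈ range n,
        (if (j+1)*x + S x ≤ n then P (n - ((j+1)*x + S x)) else 0)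
      = ∑ x ∈ Finset.Ico 1 (n+1), ∑ j ∈ range n,
        (if ¬ Even x ∧ (j+1)*x ≤ n then P (n - (j+1)*x) else 0) := by
  rw [← Finset.sum_product' (s := Finset.Ico 1 (n+1)) (t := range n)
      (f := fun x j => if (j+1)*x + S x ≤ n then P (n - ((j+1)*x + S x)) else 0),
    ← Finset.sum_product' (s := Finset.Ico 1 (n+1)) (t := range n)
      (f := fun x j => if ¬ Even x ∧ (j+1)*x ≤ n then P (n - (j+1)*x) else 0)]
  rw [← Finset.sum_filter, ← Finset.sum_filter]
  refine Finset.sum_nbij' phi psi ?_ ?_ ?_ ?_ ?_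
  · rintro ⟨x, j⟩ ha
    simp only [Finset.mem_filter, Finset.mem_product, Finset.mem_Ico, Finset.mem_range] at ha ⊢
    obtain ⟨⟨⟨hx1, hxn⟩, hj⟩, hcond⟩ := ha
    obtain ⟨hm, hodd, hy1⟩ := phi_spec x j hx1
    have hmn : ((phi (x,j)).2 + 1) * (phi (x,j)).1 ≤ n := by rw [hm]; exact hcond
    have hyn : (phi (x,j)).1 ≤ n :=
      le_trans (Nat.le_mul_of_pos_left _ (Nat.succ_pos _)) hmn
    have hin : (phi (x,j)).2 + 1 ≤ n :=
      le_trans (Nat.le_mul_of_pos_right _ hy1) hmn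
    exact ⟨⟨⟨hy1, by omega⟩, by omega⟩, hodd, hmn⟩
  · rintro ⟨y, i⟩ ha
    simp only [Finset.mem_filter, Finset.mem_product, Finset.mem_Ico, Finset.mem_range] at ha ⊢
    obtain ⟨⟨⟨hy1, hyn⟩, hi⟩, hodd, hcond⟩ := ha
    obtain ⟨hm, hx1⟩ := psi_spec y i hodd
    have hmn : ((psi (y,i)).2 + 1) * (psi (y,i)).1 + S (psi (y,i)).1 ≤ n := by
      rw [hm]; exact hcond
    have hxn : (psi (y,i)).1 ≤ n :=
      le_trans (le_trans (Nat.le_mul_of_pos_left _ (Nat.succ_pos _)) (Nat.le_add_right _ _)) hmn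
    have hjn : (psi (y,i)).2 + 1 ≤ n :=
      le_trans (le_trans (Nat.le_mul_of_pos_right _ hx1) (Nat.le_add_right _ _)) hmn
    exact ⟨⟨⟨hx1, by omega⟩, by omega⟩, hmn⟩
  · rintro ⟨x, j⟩ ha
    simp only [Finset.mem_filter, Finset.mem_product, Finset.mem_Ico, Finset.mem_range] at ha
    exact psi_phi x j ha.1.1.1
  · rintro ⟨y, i⟩ ha
    simp only [Finset.mem_filter, Finset.mem_product, Finset.mem_Ico, Finset.mem_range] at ha
    exact phi_psi y i ha.2.1
  · rintro ⟨x, j⟩ ha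
    simp only [Finset.mem_filter, Finset.mem_product, Finset.mem_Ico, Finset.mem_range] at ha
    obtain ⟨hm, hodd, hy1⟩ := phi_spec x j ha.1.1.1
    exact congrArg P (by rw [hm])


end MexAux

open MexAux Finset in
/-- The total number of even parts over all partitions of n equals the total
number of parts greater than the mex over all partitions of n. -/
theorem total_even_eq_total_gt_mex (n : ℕ) :
    ∑ p : n.Partition, (p.parts.filter (fun x => Even x)).card =
      ∑ p : n.Partition, (p.parts.filter (fun x => mex p < x)).card := by
  classical
  rw [total_eq (fun _ x => Even x), total_eq (fun p x => mex p < x)]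
  -- pointwise: cardM + cardStair = cardCnt
  have hB : ∀ x j, (Finset.univ.filter
        (fun p : n.Partition => j < p.parts.count x ∧ mex p < x)).card
      + (Finset.univ.filter (stairCond (n := n) x j)).card
      = (Finset.univ.filter (fun p : n.Partition => j < p.parts.count x)).card := by
    intro x j
    rw [Finset.card_filter, Finset.card_filter, Finset.card_filter, ← Finset.sum_add_distrib]
    refine Finset.sum_congr rfl fun p _ => ?_
    by_cases hA : j < p.parts.count x
    · by_cases hC : ∀ t ∈ Finset.Ico 1 x, t ∈ p.parts
      · have hm : ¬ mex p < x := fun h => (mex_lt_iff p x).1 h hC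
        rw [if_neg (fun h : j < p.parts.count x ∧ mex p < x => hm h.2),
          if_pos (show stairCond x j p from ⟨hA, hC⟩), if_pos hA]
      · have hm : mex p < x := (mex_lt_iff p x).2 hC
        rw [if_pos (show j < p.parts.count x ∧ mex p < x from ⟨hA, hm⟩),
          if_neg (fun h : stairCond x j p => hC h.2), if_pos hA]
    · rw [if_neg (fun h : j < p.parts.count x ∧ mex p < x => hA h.1),
        if_neg (fun h : stairCond x j p => hA h.1), if_neg hA]
  -- cardE in terms of cnt
  have hE : ∀ x j, (Finset.univ.filter
        (fun p : n.Partition => j < p.parts.count x ∧ Even x)).card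
      = if Even x then
          (Finset.univ.filter (fun p : n.Partition => j < p.parts.count x)).card else 0 := by
    intro x j
    split_ifs with hev
    · exact congrArg Finset.card (Finset.filter_congr fun p _ => and_iff_left hev)
    · rw [Finset.card_eq_zero, Finset.filter_eq_empty_iff]
      exact fun p _ h => hev h.2
  have hcount0 : ∀ p : n.Partition, p.parts.count 0 = 0 := fun p =>
    Multiset.count_eq_zero.2 (fun h => lt_irrefl 0 (p.parts_pos h))
  have hcnt0 : ∀ j, (Finset.univ.filter
      (fun p : n.Partition => j < p.parts.count 0)).card = 0 := by
    intro j
    rw [Finset.card_eq_zero, Finset.filter_eq_empty_iff]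
    intro p _
    rw [hcount0 p]
    omega
  have hcntS0 : ∀ j, (Finset.univ.filter (stairCond (n := n) 0 j)).card = 0 := by
    intro j
    rw [Finset.card_eq_zero, Finset.filter_eq_empty_iff]
    intro p _ h
    have := h.1
    rw [hcount0 p] at this
    omega
  have hrestrict : ∀ (f : ℕ → ℕ), f 0 = 0 →
      ∑ x ∈ range (n+1), f x = ∑ x ∈ Finset.Ico 1 (n+1), f x := by
    intro f hf
    rw [range_eq_Ico, Finset.sum_eq_sum_Ico_succ_bot (Nat.succ_pos n), hf, zero_add]
  -- the three restricted, closed-form sums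
  have step1 : ∑ x ∈ range (n+1), ∑ j ∈ range n,
        (Finset.univ.filter
          (fun p : n.Partition => j < p.parts.count x ∧ Even x)).card
      = ∑ x ∈ Finset.Ico 1 (n+1), ∑ j ∈ range n,
        (if Even x then (if (j+1)*x ≤ n then P (n - (j+1)*x) else 0) else 0) := by
    rw [hrestrict _ (Finset.sum_eq_zero fun j _ => by
      rw [hE 0 j]
      simp [hcnt0 j])]
    refine Finset.sum_congr rfl fun x hx => Finset.sum_congr rfl fun j _ => ?_
    have hx1 : 1 ≤ x := (Finset.mem_Ico.1 hx).1
    rw [hE x j, cnt_eq n x j hx1]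
  have step2 : ∑ x ∈ range (n+1), ∑ j ∈ range n,
        (Finset.univ.filter (stairCond (n := n) x j)).card
      = ∑ x ∈ Finset.Ico 1 (n+1), ∑ j ∈ range n,
        (if (j+1)*x + S x ≤ n then P (n - ((j+1)*x + S x)) else 0) := by
    rw [hrestrict _ (Finset.sum_eq_zero fun j _ => hcntS0 j)]
    refine Finset.sum_congr rfl fun x hx => Finset.sum_congr rfl fun j _ => ?_
    exact cntS_eq n x j (Finset.mem_Ico.1 hx).1
  have step3 : ∑ x ∈ range (n+1), ∑ j ∈ range n,
        (Finset.univ.filter (fun p : n.Partition => j < p.parts.count x)).card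
      = ∑ x ∈ Finset.Ico 1 (n+1), ∑ j ∈ range n,
        (if (j+1)*x ≤ n then P (n - (j+1)*x) else 0) := by
    rw [hrestrict _ (Finset.sum_eq_zero fun j _ => hcnt0 j)]
    refine Finset.sum_congr rfl fun x hx => Finset.sum_congr rfl fun j _ => ?_
    exact cnt_eq n x j (Finset.mem_Ico.1 hx).1
  -- the combination identity
  have hA : (∑ x ∈ Finset.Ico 1 (n+1), ∑ j ∈ range n,
        (if Even x then (if (j+1)*x ≤ n then P (n - (j+1)*x) else 0) else 0))
      + (∑ x ∈ Finset.Ico 1 (n+1), ∑ j ∈ range n,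
        (if (j+1)*x + S x ≤ n then P (n - ((j+1)*x + S x)) else 0))
      = ∑ x ∈ Finset.Ico 1 (n+1), ∑ j ∈ range n,
        (if (j+1)*x ≤ n then P (n - (j+1)*x) else 0) := by
    rw [key_arith n, ← Finset.sum_add_distrib]
    refine Finset.sum_congr rfl fun x _ => ?_
    rw [← Finset.sum_add_distrib]
    refine Finset.sum_congr rfl fun j _ => ?_
    by_cases hev : Even x
    · simp [hev]
    · simp [hev]
  -- the sums of hB
  have hBsum : (∑ x ∈ range (n+1), ∑ j ∈ range n,
        (Finset.univ.filter
          (fun p : n.Partition => j < p.parts.count x ∧ mex p < x)).card)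
      + (∑ x ∈ range (n+1), ∑ j ∈ range n,
        (Finset.univ.filter (stairCond (n := n) x j)).card)
      = ∑ x ∈ range (n+1), ∑ j ∈ range n,
        (Finset.univ.filter (fun p : n.Partition => j < p.parts.count x)).card := by
    rw [← Finset.sum_add_distrib]
    refine Finset.sum_congr rfl fun x _ => ?_
    rw [← Finset.sum_add_distrib]
    exact Finset.sum_congr rfl fun j _ => hB x j
  omega
end
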